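/- arXiv:0711.4841 — 6 statements merged into one kernel-verified Lean document; each statement's English description precedes it below -/
import Mathlib

section
/- The number of noncrossing set partitions of [n] with exactly k blocks equals the Narayana number N(n,k) = (1/n) * C(n,k) * C(n,k-1). -/
/-!
Record a partition of `[n]` by the set `O` of its block minima ("openers") and the set `C` of
its block maxima ("closers"). Reading `[n]` from left to right with a stack of open blocks, a
noncrossing partition always puts the next element into the most recently opened block that is
still open, so it is recovered from `(O, C)`; the pairs that occur are exactly those with
`|O| = |C|` and the ballot property that before each position fewer blocks have closed than
opened. The last position is always a closer; dropping it and shifting `C` by one gives a pair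
`(O, D)` with `|D| = |O| - 1` whose prefix counts of `O` strictly exceed those of `D`. By the
cycle lemma exactly one of the `n` rotations of any pair with `|O| = k`, `|D| = k - 1` has this
property, so `n` times the number of noncrossing partitions with `k` blocks is
`C(n, k) C(n, k - 1)`.
-/

/-- `P` is a set partition of `Fin n`. -/
def IsSetPartition (n : ℕ) (P : Finset (Finset (Fin n))) : Prop :=
  (∀ B ∈ P, B ≠ ∅) ∧ ∀ x : Fin n, ∃! B, B ∈ P ∧ x ∈ B

/-- The partition `P` is noncrossing. -/
def IsNoncrossing (n : ℕ) (P : Finset (Finset (Fin n))) : Prop :=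
  ¬ ∃ a b c d : Fin n, a < b ∧ b < c ∧ c < d ∧
    ∃ B₁ ∈ P, ∃ B₂ ∈ P, B₁ ≠ B₂ ∧ a ∈ B₁ ∧ c ∈ B₁ ∧ b ∈ B₂ ∧ d ∈ B₂

open Finset Pointwise Fin.NatCast

/-- The cycle lemma of Dvoretzky and Motzkin. -/
theorem existsUnique_forall_lt_of_add_period {n : ℕ} (hn : 0 < n) {f : ℕ → ℤ}
    (hf : ∀ m, f (m + n) = f m + 1) :
    ∃! j, j < n ∧ ∀ i < n, f j < f (j + i + 1) := by
  classical
  have hf' : ∀ m, n ≤ m → f m = f (m - n) + 1 := fun m hm => by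
    rw [← hf, Nat.sub_add_cancel hm]
  refine existsUnique_of_exists_of_unique ?_ fun j j' ⟨hj, hjf⟩ ⟨hj', hjf'⟩ => ?_
  · -- the last minimum of `f` on `[0, n)`
    let p j := ∀ m < n, f j ≤ f m
    obtain ⟨j₀, hj₀n, hj₀⟩ := (range n).exists_min_image f ⟨0, mem_range.2 hn⟩
    have hp₀ : p j₀ := fun m hm => hj₀ m (mem_range.2 hm)
    have hs : p (Nat.findGreatest p (n - 1)) :=
      Nat.findGreatest_spec (Nat.le_sub_one_of_lt (mem_range.1 hj₀n)) hp₀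
    have hmax : ∀ u, Nat.findGreatest p (n - 1) < u → u ≤ n - 1 → ¬ p u :=
      fun _ h₁ h₂ => Nat.findGreatest_is_greatest h₁ h₂
    have hsn : Nat.findGreatest p (n - 1) ≤ n - 1 := Nat.findGreatest_le _
    generalize Nat.findGreatest p (n - 1) = j at hs hmax hsn
    refine ⟨j, by omega, fun i hi => ?_⟩
    rcases lt_or_ge (j + i + 1) n with h | h
    · refine (hs _ h).lt_of_ne fun heq => hmax (j + i + 1) (by omega) (by omega) fun m hm => ?_
      exact heq ▸ hs m hm
    · rw [hf' _ h]
      have := hs (j + i + 1 - n) (by omega)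
      omega
  · have key : ∀ j j', j < j' → j' < n → (∀ i < n, f j < f (j + i + 1)) →
        (∀ i < n, f j' < f (j' + i + 1)) → False := fun j j' hjj' hj' hjf hjf' => by
      have h₁ := hjf (j' - j - 1) (by omega)
      have h₂ := hjf' (j + n - j' - 1) (by omega)
      rw [show j + (j' - j - 1) + 1 = j' by omega] at h₁
      rw [show j' + (j + n - j' - 1) + 1 = j + n by omega, hf] at h₂
      omega
    rcases lt_trichotomy j j' with h | h | h
    · exact (key j j' h hj' hjf hjf').elim
    · exact h
    · exact (key j' j h hj hjf' hjf).elim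

namespace NoncrossingPartition

variable {n : ℕ} {P : Finset (Finset (Fin n))}

/-! ### Blocks of a set partition -/

open Classical in
/-- The fallback `{x}` makes `x ∈ block P x` hold for every `P`. -/
noncomputable def block (P : Finset (Finset (Fin n))) (x : Fin n) : Finset (Fin n) :=
  if h : ∃ B ∈ P, x ∈ B then h.choose else {x}

lemma mem_block_self (P : Finset (Finset (Fin n))) (x : Fin n) : x ∈ block P x := by
  unfold block
  split_ifs with h
  · exact h.choose_spec.2
  · exact mem_singleton_self x

lemma block_mem (hP : IsSetPartition n P) (x : Fin n) : block P x ∈ P := by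
  have h : ∃ B ∈ P, x ∈ B := (hP.2 x).exists
  rw [block, dif_pos h]
  exact h.choose_spec.1

lemma block_eq_of_mem (hP : IsSetPartition n P) {B : Finset (Fin n)} {x : Fin n}
    (hB : B ∈ P) (hx : x ∈ B) : block P x = B :=
  (hP.2 x).unique ⟨block_mem hP x, mem_block_self P x⟩ ⟨hB, hx⟩

lemma block_eq_of_mem_block (hP : IsSetPartition n P) {x y : Fin n} (hy : y ∈ block P x) :
    block P y = block P x :=
  block_eq_of_mem hP (block_mem hP x) hy

noncomputable def blockMin (P : Finset (Finset (Fin n))) (x : Fin n) : Fin n :=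
  (block P x).min' ⟨x, mem_block_self P x⟩

noncomputable def blockMax (P : Finset (Finset (Fin n))) (x : Fin n) : Fin n :=
  (block P x).max' ⟨x, mem_block_self P x⟩

lemma blockMin_mem (P : Finset (Finset (Fin n))) (x : Fin n) : blockMin P x ∈ block P x :=
  min'_mem _ _

lemma blockMax_mem (P : Finset (Finset (Fin n))) (x : Fin n) : blockMax P x ∈ block P x :=
  max'_mem _ _

lemma blockMin_le_of_mem {x y : Fin n} (hy : y ∈ block P x) : blockMin P x ≤ y :=
  min'_le _ _ hy

lemma le_blockMax_of_mem {x y : Fin n} (hy : y ∈ block P x) : y ≤ blockMax P x :=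
  le_max' _ _ hy

lemma blockMin_le (P : Finset (Finset (Fin n))) (x : Fin n) : blockMin P x ≤ x :=
  blockMin_le_of_mem (mem_block_self P x)

lemma le_blockMax (P : Finset (Finset (Fin n))) (x : Fin n) : x ≤ blockMax P x :=
  le_blockMax_of_mem (mem_block_self P x)

lemma blockMin_eq_of_mem_block (hP : IsSetPartition n P) {x y : Fin n} (hy : y ∈ block P x) :
    blockMin P y = blockMin P x := by
  unfold blockMin
  congr 1
  exact block_eq_of_mem_block hP hy

lemma blockMax_eq_of_mem_block (hP : IsSetPartition n P) {x y : Fin n} (hy : y ∈ block P x) :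
    blockMax P y = blockMax P x := by
  unfold blockMax
  congr 1
  exact block_eq_of_mem_block hP hy

lemma block_eq_block_iff (hP : IsSetPartition n P) {x y : Fin n} :
    block P x = block P y ↔ y ∈ block P x :=
  ⟨fun h => h ▸ mem_block_self P y, fun h => (block_eq_of_mem_block hP h).symm⟩

noncomputable def minima (P : Finset (Finset (Fin n))) : Finset (Fin n) :=
  {x | blockMin P x = x}

noncomputable def maxima (P : Finset (Finset (Fin n))) : Finset (Fin n) :=
  {x | blockMax P x = x}

@[simp] lemma mem_minima {x : Fin n} : x ∈ minima P ↔ blockMin P x = x := by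
  simp [minima]

@[simp] lemma mem_maxima {x : Fin n} : x ∈ maxima P ↔ blockMax P x = x := by
  simp [maxima]

lemma blockMin_mem_minima (hP : IsSetPartition n P) (x : Fin n) : blockMin P x ∈ minima P :=
  mem_minima.2 (blockMin_eq_of_mem_block hP (blockMin_mem P x))

lemma blockMax_mem_maxima (hP : IsSetPartition n P) (x : Fin n) : blockMax P x ∈ maxima P :=
  mem_maxima.2 (blockMax_eq_of_mem_block hP (blockMax_mem P x))

lemma block_eq_of_blockMin_eq (hP : IsSetPartition n P) {x y : Fin n}
    (h : blockMin P x = blockMin P y) : block P x = block P y := by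
  rw [← block_eq_of_mem_block hP (blockMin_mem P x), h, block_eq_of_mem_block hP (blockMin_mem P y)]

lemma block_eq_of_blockMax_eq (hP : IsSetPartition n P) {x y : Fin n}
    (h : blockMax P x = blockMax P y) : block P x = block P y := by
  rw [← block_eq_of_mem_block hP (blockMax_mem P x), h, block_eq_of_mem_block hP (blockMax_mem P y)]

lemma injOn_blockMin_maxima (hP : IsSetPartition n P) : Set.InjOn (blockMin P) (maxima P) := by
  intro x hx y hy h
  have hxy : y ∈ block P x := (block_eq_block_iff hP).1 (block_eq_of_blockMin_eq hP h)
  rw [← mem_maxima.1 (mem_coe.1 hx), ← mem_maxima.1 (mem_coe.1 hy),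
    blockMax_eq_of_mem_block hP hxy]

lemma injOn_blockMax_minima (hP : IsSetPartition n P) : Set.InjOn (blockMax P) (minima P) := by
  intro x hx y hy h
  have hxy : y ∈ block P x := (block_eq_block_iff hP).1 (block_eq_of_blockMax_eq hP h)
  rw [← mem_minima.1 (mem_coe.1 hx), ← mem_minima.1 (mem_coe.1 hy),
    blockMin_eq_of_mem_block hP hxy]

lemma card_minima (hP : IsSetPartition n P) : #(minima P) = #P := by
  refine card_nbij (block P) (fun x _ => block_mem hP x) ?_ ?_
  · intro x hx y hy h
    rw [← mem_minima.1 (mem_coe.1 hx), ← mem_minima.1 (mem_coe.1 hy),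
      blockMin_eq_of_mem_block hP ((block_eq_block_iff hP).1 h)]
  · intro B hB
    obtain ⟨x, hx⟩ := nonempty_iff_ne_empty.2 (hP.1 B hB)
    refine ⟨blockMin P x, blockMin_mem_minima hP x, ?_⟩
    rw [block_eq_of_mem_block hP (blockMin_mem P x), block_eq_of_mem hP hB hx]

lemma card_maxima (hP : IsSetPartition n P) : #(maxima P) = #P := by
  refine card_nbij (block P) (fun x _ => block_mem hP x) ?_ ?_
  · intro x hx y hy h
    rw [← mem_maxima.1 (mem_coe.1 hx), ← mem_maxima.1 (mem_coe.1 hy),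
      blockMax_eq_of_mem_block hP ((block_eq_block_iff hP).1 h)]
  · intro B hB
    obtain ⟨x, hx⟩ := nonempty_iff_ne_empty.2 (hP.1 B hB)
    refine ⟨blockMax P x, blockMax_mem_maxima hP x, ?_⟩
    rw [block_eq_of_mem_block hP (blockMax_mem P x), block_eq_of_mem hP hB hx]

lemma mem_Ioo_of_mem_block (hP : IsSetPartition n P) (hNC : IsNoncrossing n P)
    {a c y z : Fin n} (hc : c ∈ block P a) (hy : y ∉ block P a) (hay : a < y) (hyc : y < c)
    (hz : z ∈ block P y) : a < z ∧ z < c := by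
  have hne : block P a ≠ block P y := fun h => hy (h ▸ mem_block_self P y)
  have hza : z ≠ a := by
    rintro rfl
    exact hne (block_eq_of_mem_block hP hz)
  have hzc : z ≠ c := by
    rintro rfl
    exact hne ((block_eq_of_mem_block hP hc).symm.trans (block_eq_of_mem_block hP hz))
  have hyP := block_mem hP y
  have haP := block_mem hP a
  rcases hza.lt_or_gt with hza | hza
  · exact (hNC ⟨z, a, y, c, hza, hay, hyc, _, hyP, _, haP, hne.symm, hz, mem_block_self P y,
      mem_block_self P a, hc⟩).elim
  refine ⟨hza, hzc.lt_or_gt.resolve_right fun hcz => hNC ⟨a, y, c, z, hay, hyc, hcz, _, haP, _,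
    hyP, hne, mem_block_self P a, hc, mem_block_self P y, hz⟩⟩

/-! ### Counting positions modulo `n` -/

variable [NeZero n]

/-- Positions are read modulo `n`, so that counts are periodic and rotations become shifts. -/
def countIco (S : Finset (Fin n)) (a b : ℕ) : ℕ := #{t ∈ Ico a b | ((t : ℕ) : Fin n) ∈ S}

variable (S : Finset (Fin n))

lemma countIco_add {a b c : ℕ} (hab : a ≤ b) (hbc : b ≤ c) :
    countIco S a c = countIco S a b + countIco S b c := by
  rw [countIco, ← Ico_union_Ico_eq_Ico hab hbc, filter_union,
    card_union_of_disjoint (disjoint_filter_filter (Ico_disjoint_Ico_consecutive a b c))]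
  rfl

lemma countIco_self (a : ℕ) : countIco S a a = 0 := by
  simp [countIco]

lemma countIco_succ (a : ℕ) : countIco S a (a + 1) = if (a : Fin n) ∈ S then 1 else 0 := by
  rw [countIco, Nat.Ico_succ_singleton, filter_singleton]
  split_ifs <;> rfl

lemma countIco_eq_card_filter {a b : ℕ} (hb : b ≤ n) :
    countIco S a b = #{x ∈ S | a ≤ x.val ∧ x.val < b} := by
  refine card_nbij' (fun t => (t : Fin n)) Fin.val ?_ ?_ ?_ ?_ <;>
    intro t ht <;> simp only [mem_coe, mem_filter, mem_Ico] at ht ⊢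
  · rw [Fin.val_cast_of_lt (by omega)]
    exact ⟨ht.2, ht.1⟩
  · exact ⟨ht.2, by simpa using ht.1⟩
  · exact Fin.val_cast_of_lt (by omega)
  · exact Fin.cast_val_eq_self t

lemma countIco_natCast_vadd (m a b : ℕ) :
    countIco ((m : Fin n) +ᵥ S) (a + m) (b + m) = countIco S a b := by
  rw [countIco, ← map_add_right_Ico, filter_map, card_map]
  congr 2
  ext t
  simp only [Function.comp_apply, addRightEmbedding_apply, Nat.cast_add]
  rw [add_comm, ← vadd_eq_add, vadd_mem_vadd_finset_iff]

lemma countIco_zero_eq_card : countIco S 0 n = #S := by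
  rw [countIco_eq_card_filter S le_rfl]
  congr 1
  exact filter_true_of_mem fun x _ => ⟨Nat.zero_le _, x.isLt⟩

lemma countIco_add_eq_card (a : ℕ) : countIco S a (a + n) = #S := by
  have := countIco_natCast_vadd (-(a : Fin n) +ᵥ S) a 0 n
  rwa [vadd_neg_vadd, zero_add, add_comm, countIco_zero_eq_card, card_vadd_finset] at this

/-! ### Ballot pairs and noncrossing partitions -/

variable (O C : Finset (Fin n))

def IsBallot : Prop :=
  ∀ i < n, countIco C 0 i < countIco O 0 (i + 1)

def IsOpenAt (o i : ℕ) : Prop :=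
  (o : Fin n) ∈ O ∧ o ≤ i ∧ ∀ j, o ≤ j → j < i → countIco C o (j + 1) < countIco O o (j + 1)

open Classical in
/-- Position `i` joins the most recently opened block that is still open. -/
noncomputable def opener (i : ℕ) : ℕ :=
  Nat.findGreatest (IsOpenAt O C · i) i

noncomputable def ballotBlock (o : ℕ) : Finset (Fin n) :=
  {x | opener O C x = o}

noncomputable def ofBallot : Finset (Finset (Fin n)) :=
  O.image fun o : Fin n => ballotBlock O C o

variable {O C}

lemma IsOpenAt.mono {o i i' : ℕ} (h : IsOpenAt O C o i) (hoi' : o ≤ i') (hi' : i' ≤ i) :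
    IsOpenAt O C o i' :=
  ⟨h.1, hoi', fun j h₁ h₂ => h.2.2 j h₁ (h₂.trans_le hi')⟩

lemma isOpenAt_self {i : ℕ} (h : (i : Fin n) ∈ O) : IsOpenAt O C i i :=
  ⟨h, le_rfl, fun _ h₁ h₂ => absurd h₂ (not_lt.2 h₁)⟩

lemma exists_isOpenAt_of_lt {t i : ℕ} (hti : t ≤ i)
    (h : countIco C t i < countIco O t (i + 1)) : ∃ o, t ≤ o ∧ IsOpenAt O C o i := by
  classical
  -- the last start `s ≤ i` from which openers still outnumber closers
  let p s := countIco C s i < countIco O s (i + 1)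
  have hs : p (Nat.findGreatest p i) := Nat.findGreatest_spec hti h
  have hts : t ≤ Nat.findGreatest p i := Nat.le_findGreatest hti h
  have hsi : Nat.findGreatest p i ≤ i := Nat.findGreatest_le i
  have hmax : ∀ u, Nat.findGreatest p i < u → u ≤ i → countIco O u (i + 1) ≤ countIco C u i :=
    fun _ h₁ h₂ => not_lt.1 (Nat.findGreatest_is_greatest (P := p) h₁ h₂)
  generalize Nat.findGreatest p i = s at hs hts hsi hmax
  dsimp only [p] at hs
  refine ⟨s, hts, ?_, hsi, fun j hsj hji => ?_⟩
  · by_contra hsO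
    rcases hsi.eq_or_lt with rfl | hsi
    · rw [countIco_self, countIco_succ, if_neg hsO] at hs
      exact lt_irrefl 0 hs
    · have hC := countIco_add C (s.le_add_right 1) hsi
      have hO := countIco_add O (s.le_add_right 1) (by omega : s + 1 ≤ i + 1)
      rw [countIco_succ, if_neg hsO] at hO
      have := hmax (s + 1) (by omega) hsi
      omega
  · have hC := countIco_add C (by omega : s ≤ j + 1) hji
    have hO := countIco_add O (by omega : s ≤ j + 1) (by omega : j + 1 ≤ i + 1)
    have := hmax (j + 1) (by omega) hji
    omega

open Classical in
lemma opener_le (i : ℕ) : opener O C i ≤ i :=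
  Nat.findGreatest_le i

open Classical in
lemma le_opener {o i : ℕ} (h : IsOpenAt O C o i) : o ≤ opener O C i :=
  Nat.le_findGreatest h.2.1 h

open Classical in
lemma isOpenAt_opener (hb : IsBallot O C) {i : ℕ} (hi : i < n) :
    IsOpenAt O C (opener O C i) i := by
  obtain ⟨o, -, ho⟩ := exists_isOpenAt_of_lt (Nat.zero_le i) (hb i hi)
  exact Nat.findGreatest_spec (P := (IsOpenAt O C · i)) ho.2.1 ho

lemma opener_eq_self {i : ℕ} (h : (i : Fin n) ∈ O) : opener O C i = i :=
  (opener_le i).antisymm (le_opener (isOpenAt_self h))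

/-- A closer `c` ends the block of `c`: had the opener of `c` stayed open after `c`, some later
opener would still be open at `c`. -/
lemma opener_ne_of_lt (hb : IsBallot O C) {c x : ℕ} (hc : (c : Fin n) ∈ C) (hcx : c < x)
    (hx : x < n) : opener O C x ≠ opener O C c := by
  intro h
  set o := opener O C c
  have hoc : o ≤ c := opener_le c
  have hopen : IsOpenAt O C o x := h ▸ isOpenAt_opener hb hx
  have hlt := hopen.2.2 c hoc hcx
  rcases hoc.eq_or_lt with hoc | hoc
  · rw [hoc, countIco_succ, countIco_succ, if_pos hc] at hlt
    split_ifs at hlt <;> omega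
  · have hC := countIco_add C hoc.le (c.le_add_right 1)
    have hO := countIco_add O (o.le_add_right 1) (by omega : o + 1 ≤ c + 1)
    have hC' := countIco_add C (o.le_add_right 1) hoc
    rw [countIco_succ, if_pos hc] at hC
    rw [countIco_succ, if_pos hopen.1] at hO
    rw [countIco_succ] at hC'
    obtain ⟨o', ho', hopen'⟩ :=
      exists_isOpenAt_of_lt (O := O) (C := C) (t := o + 1) hoc (by split_ifs at hC' <;> omega)
    have := le_opener hopen'
    omega

@[simp] lemma mem_ballotBlock {o : ℕ} {x : Fin n} : x ∈ ballotBlock O C o ↔ opener O C x = o := by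
  simp [ballotBlock]

lemma natCast_opener_mem (hb : IsBallot O C) (x : Fin n) : (opener O C x : Fin n) ∈ O :=
  (isOpenAt_opener hb x.isLt).1

lemma val_natCast_opener (x : Fin n) : ((opener O C x : Fin n) : ℕ) = opener O C x :=
  Fin.val_cast_of_lt ((opener_le _).trans_lt x.isLt)

lemma ballotBlock_opener_mem (hb : IsBallot O C) (x : Fin n) :
    ballotBlock O C (opener O C x) ∈ ofBallot O C :=
  mem_image.2 ⟨_, natCast_opener_mem hb x, by rw [val_natCast_opener]⟩

lemma isSetPartition_ofBallot (hb : IsBallot O C) : IsSetPartition n (ofBallot O C) := by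
  refine ⟨?_, fun x => ⟨_, ⟨ballotBlock_opener_mem hb x, mem_ballotBlock.2 rfl⟩, ?_⟩⟩
  · simp only [ofBallot, mem_image, forall_exists_index, and_imp, forall_apply_eq_imp_iff₂]
    intro o ho
    exact ne_empty_of_mem (mem_ballotBlock.2 (opener_eq_self (by simpa using ho)))
  · simp only [ofBallot, mem_image, and_imp, forall_exists_index]
    rintro _ o - rfl hx
    rw [mem_ballotBlock.1 hx]

lemma block_ofBallot (hb : IsBallot O C) (x : Fin n) :
    block (ofBallot O C) x = ballotBlock O C (opener O C x) :=
  block_eq_of_mem (isSetPartition_ofBallot hb) (ballotBlock_opener_mem hb x) (mem_ballotBlock.2 rfl)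

lemma isNoncrossing_ofBallot (hb : IsBallot O C) : IsNoncrossing n (ofBallot O C) := by
  rintro ⟨a, b, c, d, hab, hbc, hcd, _, hB₁, _, hB₂, hne, ha, hc, hb', hd⟩
  simp only [ofBallot, mem_image] at hB₁ hB₂
  obtain ⟨o₁, -, rfl⟩ := hB₁
  obtain ⟨o₂, -, rfl⟩ := hB₂
  rw [mem_ballotBlock] at ha hc hb' hd
  have h₁ : IsOpenAt O C o₁ b := (hc ▸ isOpenAt_opener hb c.isLt).mono
    ((ha ▸ opener_le a).trans (Fin.lt_def.1 hab).le) (Fin.lt_def.1 hbc).le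
  have h₂ : IsOpenAt O C o₂ c := (hd ▸ isOpenAt_opener hb d.isLt).mono
    ((hb' ▸ opener_le b).trans (Fin.lt_def.1 hbc).le) (Fin.lt_def.1 hcd).le
  have := le_opener h₁
  have := le_opener h₂
  exact hne (by rw [Fin.ext (by omega : (o₁ : ℕ) = o₂)])

lemma card_ofBallot : #(ofBallot O C) = #O := by
  refine card_image_of_injOn fun o₁ h₁ o₂ _ h => Fin.ext ?_
  have : o₁ ∈ ballotBlock O C o₁ := mem_ballotBlock.2 (opener_eq_self (by simpa using h₁))
  rw [h] at this
  rw [← mem_ballotBlock.1 this, opener_eq_self (by simpa using h₁)]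

lemma val_blockMin_ofBallot (hb : IsBallot O C) (x : Fin n) :
    (blockMin (ofBallot O C) x : ℕ) = opener O C x := by
  set o : Fin n := ((opener O C x : ℕ) : Fin n)
  have ho : (o : ℕ) = opener O C x := val_natCast_opener x
  have hmin : opener O C (blockMin (ofBallot O C) x) = opener O C x :=
    mem_ballotBlock.1 (block_ofBallot hb x ▸ blockMin_mem _ x)
  have hoB : o ∈ block (ofBallot O C) x := by
    rw [block_ofBallot hb, mem_ballotBlock, ← ho,
      opener_eq_self (by rw [Fin.cast_val_eq_self]; exact natCast_opener_mem hb x)]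
  exact le_antisymm (ho ▸ Fin.le_def.1 (blockMin_le_of_mem hoB)) (hmin ▸ opener_le _)

lemma minima_ofBallot (hb : IsBallot O C) : minima (ofBallot O C) = O := by
  ext x
  rw [mem_minima, Fin.ext_iff, val_blockMin_ofBallot hb]
  refine ⟨fun h => ?_, fun h => opener_eq_self (by simpa using h)⟩
  simpa [h] using natCast_opener_mem hb x

lemma maxima_ofBallot (hb : IsBallot O C) (hcard : #C = #O) : maxima (ofBallot O C) = C := by
  have hsub : C ⊆ maxima (ofBallot O C) := by
    intro c hc
    refine mem_maxima.2 ((le_blockMax _ c).antisymm' (not_lt.1 fun hlt => ?_))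
    have hmem := block_ofBallot hb c ▸ blockMax_mem (ofBallot O C) c
    exact opener_ne_of_lt hb (by simpa using hc) hlt (blockMax _ c).isLt (mem_ballotBlock.1 hmem)
  refine (eq_of_subset_of_card_le hsub ?_).symm
  rw [card_maxima (isSetPartition_ofBallot hb), card_ofBallot, hcard]

lemma isBallot_minima_maxima (hP : IsSetPartition n P) : IsBallot (minima P) (maxima P) := by
  intro i hi
  rw [countIco_eq_card_filter _ hi.le, countIco_eq_card_filter _ hi]
  set x : Fin n := ⟨i, hi⟩
  calc #{y ∈ maxima P | 0 ≤ y.val ∧ y.val < i}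
      ≤ #({y ∈ minima P | 0 ≤ y.val ∧ y.val < i + 1}.erase (blockMin P x)) := by
        refine card_le_card_of_injOn (blockMin P) (fun y hy => ?_)
          ((injOn_blockMin_maxima hP).mono fun y hy => (mem_filter.1 hy).1)
        simp only [mem_coe, mem_filter, mem_erase] at hy ⊢
        refine ⟨fun h => ?_, blockMin_mem_minima hP y, Nat.zero_le _, ?_⟩
        · have hxy := (block_eq_block_iff hP).1 (block_eq_of_blockMin_eq hP h)
          have := le_blockMax_of_mem hxy
          rw [mem_maxima.1 hy.1, Fin.le_def] at this
          exact absurd hy.2.2 this.not_gt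
        · exact Nat.lt_succ_of_le ((Fin.le_def.1 (blockMin_le P y)).trans hy.2.2.le)
    _ < #{y ∈ minima P | 0 ≤ y.val ∧ y.val < i + 1} :=
        card_erase_lt_of_mem (mem_filter.2 ⟨blockMin_mem_minima hP x, Nat.zero_le _,
          Nat.lt_succ_of_le (blockMin_le P x)⟩)

lemma isOpenAt_blockMin (hP : IsSetPartition n P) (hNC : IsNoncrossing n P) (x : Fin n) :
    IsOpenAt (minima P) (maxima P) (blockMin P x) x := by
  set o := blockMin P x
  have hxo : x ∈ block P o := block_eq_of_mem_block hP (blockMin_mem P x) ▸ mem_block_self P x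
  refine ⟨by simpa using blockMin_mem_minima hP x, blockMin_le P x, fun j hoj hjx => ?_⟩
  rw [countIco_eq_card_filter _ (by omega), countIco_eq_card_filter _ (by omega)]
  calc #{y ∈ maxima P | o.val ≤ y.val ∧ y.val < j + 1}
      ≤ #({y ∈ minima P | o.val ≤ y.val ∧ y.val < j + 1}.erase o) := by
        refine card_le_card_of_injOn (blockMin P) (fun y hy => ?_)
          ((injOn_blockMin_maxima hP).mono fun y hy => (mem_filter.1 hy).1)
        simp only [mem_coe, mem_filter, mem_erase] at hy ⊢
        have hyx : y < x := Fin.lt_def.2 (by omega)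
        have hyo : y ∉ block P o := fun h => by
          have : x ≤ blockMax P y := le_blockMax_of_mem (by rwa [block_eq_of_mem_block hP h])
          rw [mem_maxima.1 hy.1] at this
          exact this.not_gt hyx
        have hoy : o < y := lt_of_le_of_ne (Fin.le_def.2 hy.2.1)
          (fun h => hyo (h ▸ mem_block_self P o))
        have := (mem_Ioo_of_mem_block hP hNC hxo hyo hoy hyx (blockMin_mem P y)).1
        exact ⟨this.ne', blockMin_mem_minima hP y, this.le,
          Nat.lt_succ_of_le ((Fin.le_def.1 (blockMin_le P y)).trans (by omega))⟩
    _ < #{y ∈ minima P | o.val ≤ y.val ∧ y.val < j + 1} :=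
        card_erase_lt_of_mem (mem_filter.2 ⟨blockMin_mem_minima hP x, le_rfl, by omega⟩)

lemma le_blockMax_of_isOpenAt (hP : IsSetPartition n P) (hNC : IsNoncrossing n P) {o x : Fin n}
    (h : IsOpenAt (minima P) (maxima P) o x) : x ≤ blockMax P o := by
  set M := blockMax P o
  have hM : M ∈ block P o := blockMax_mem P o
  by_contra! hMx
  have hlt := h.2.2 M (le_blockMax P o) hMx
  rw [countIco_eq_card_filter _ (by omega), countIco_eq_card_filter _ (by omega)] at hlt
  refine hlt.not_ge (card_le_card_of_injOn (blockMax P) (fun y hy => ?_)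
    ((injOn_blockMax_minima hP).mono fun y hy => (mem_filter.1 hy).1))
  simp only [mem_coe, mem_filter] at hy ⊢
  refine ⟨blockMax_mem_maxima hP y, ?_⟩
  by_cases hyo : y ∈ block P o
  · rw [blockMax_eq_of_mem_block hP hyo]
    exact ⟨le_blockMax P o, Nat.lt_succ_self _⟩
  have hoy : o < y := lt_of_le_of_ne (Fin.le_def.2 hy.2.1) fun h => hyo (h ▸ mem_block_self P o)
  have hyM : y < M := lt_of_le_of_ne (Fin.le_def.2 (by omega)) fun h => hyo (h ▸ hM)
  have := (mem_Ioo_of_mem_block hP hNC hM hyo hoy hyM (blockMax_mem P y)).2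
  exact ⟨hy.2.1.trans (le_blockMax P y), by omega⟩

lemma le_blockMin_of_isOpenAt (hP : IsSetPartition n P) (hNC : IsNoncrossing n P) {o : ℕ}
    {x : Fin n} (h : IsOpenAt (minima P) (maxima P) o x) : o ≤ blockMin P x := by
  obtain ⟨o, rfl⟩ : ∃ o' : Fin n, (o' : ℕ) = o := ⟨⟨o, h.2.1.trans_lt x.isLt⟩, rfl⟩
  have hxM := le_blockMax_of_isOpenAt hP hNC (by simpa using h)
  have hM : blockMax P o ∈ block P o := blockMax_mem P o
  have ho : blockMin P o = o := by simpa using h.1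
  by_contra! hlt
  rw [← Fin.lt_def] at hlt
  have hxo : x ∉ block P o := fun hx => by
    rw [blockMin_eq_of_mem_block hP hx, ho] at hlt
    exact lt_irrefl _ hlt
  have hox : o < x := lt_of_le_of_ne (Fin.le_def.2 h.2.1) fun h => hxo (h ▸ mem_block_self P o)
  have hxM : x < blockMax P o := lt_of_le_of_ne hxM fun h => hxo (h ▸ hM)
  exact (mem_Ioo_of_mem_block hP hNC hM hxo hox hxM (blockMin_mem P x)).1.not_gt hlt

lemma opener_minima_maxima (hP : IsSetPartition n P) (hNC : IsNoncrossing n P) (x : Fin n) :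
    opener (minima P) (maxima P) x = blockMin P x :=
  (le_blockMin_of_isOpenAt hP hNC (isOpenAt_opener (isBallot_minima_maxima hP) x.isLt)).antisymm
    (le_opener (isOpenAt_blockMin hP hNC x))

lemma ofBallot_minima_maxima (hP : IsSetPartition n P) (hNC : IsNoncrossing n P) :
    ofBallot (minima P) (maxima P) = P := by
  have hblock : ∀ o ∈ minima P, ballotBlock (minima P) (maxima P) o = block P o := by
    intro o ho
    ext x
    rw [mem_ballotBlock, opener_minima_maxima hP hNC, ← Fin.ext_iff]
    refine ⟨fun h => ?_, fun h => (blockMin_eq_of_mem_block hP h).trans (mem_minima.1 ho)⟩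
    rw [← h, block_eq_of_mem_block hP (blockMin_mem P x)]
    exact mem_block_self P x
  ext B
  simp only [ofBallot, mem_image]
  constructor
  · rintro ⟨o, ho, rfl⟩
    exact hblock o ho ▸ block_mem hP o
  · intro hB
    obtain ⟨x, hx⟩ := nonempty_iff_ne_empty.2 (hP.1 B hB)
    refine ⟨blockMin P x, blockMin_mem_minima hP x, ?_⟩
    rw [hblock _ (blockMin_mem_minima hP x), block_eq_of_mem_block hP (blockMin_mem P x),
      block_eq_of_mem hP hB hx]

noncomputable def ncPartitionEquivBallot (k : ℕ) :
    {P : Finset (Finset (Fin n)) // IsSetPartition n P ∧ IsNoncrossing n P ∧ #P = k} ≃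
      {p : Finset (Fin n) × Finset (Fin n) // IsBallot p.1 p.2 ∧ #p.1 = k ∧ #p.2 = k} where
  toFun P := ⟨(minima P, maxima P), isBallot_minima_maxima P.2.1,
    (card_minima P.2.1).trans P.2.2.2, (card_maxima P.2.1).trans P.2.2.2⟩
  invFun p := ⟨ofBallot p.1.1 p.1.2, isSetPartition_ofBallot p.2.1,
    isNoncrossing_ofBallot p.2.1, card_ofBallot.trans p.2.2.1⟩
  left_inv P := Subtype.ext (ofBallot_minima_maxima P.2.1 P.2.2.1)
  right_inv p := Subtype.ext (Prod.ext (minima_ofBallot p.2.1)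
    (maxima_ofBallot p.2.1 (p.2.2.2.trans p.2.2.1.symm)))

/-! ### Dominant pairs and their rotations -/

lemma natCast_pred_eq_neg_one : ((n - 1 : ℕ) : Fin n) = -1 := by
  rw [eq_neg_iff_add_eq_zero, ← Nat.cast_add_one, Nat.sub_add_cancel NeZero.one_le,
    Fin.natCast_self]

def IsDominant (O D : Finset (Fin n)) : Prop :=
  ∀ i < n, countIco D 0 (i + 1) < countIco O 0 (i + 1)

variable {D : Finset (Fin n)}

def shiftClosers (C : Finset (Fin n)) : Finset (Fin n) :=
  (1 : Fin n) +ᵥ C.erase (-1)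

def unshiftClosers (D : Finset (Fin n)) : Finset (Fin n) :=
  insert (-1) ((-1 : Fin n) +ᵥ D)

lemma countIco_erase_neg_one {i : ℕ} (hi : i < n) :
    countIco (S.erase (-1)) 0 i = countIco S 0 i := by
  rw [countIco_eq_card_filter _ hi.le, countIco_eq_card_filter _ hi.le, filter_erase,
    erase_eq_of_notMem]
  rw [mem_filter, ← natCast_pred_eq_neg_one, Fin.val_cast_of_lt (Nat.sub_lt (NeZero.pos n) one_pos)]
  exact fun h => absurd h.2.2 (by omega)

lemma countIco_shiftClosers {i : ℕ} (hi : i < n) :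
    countIco (shiftClosers C) 0 (i + 1) = countIco C 0 i := by
  have hzero : countIco (shiftClosers C) 0 1 = 0 := by
    rw [countIco_succ, if_neg]
    rw [Nat.cast_zero, shiftClosers, show (0 : Fin n) = (1 : Fin n) +ᵥ (-1 : Fin n) by simp,
      vadd_mem_vadd_finset_iff]
    exact notMem_erase _ _
  have hshift := countIco_natCast_vadd (C.erase (-1)) 1 0 i
  rw [Nat.cast_one, zero_add, countIco_erase_neg_one C (by omega)] at hshift
  rw [countIco_add _ (Nat.zero_le 1) (by omega), hzero, zero_add]
  exact hshift

lemma isDominant_shiftClosers_iff : IsDominant O (shiftClosers C) ↔ IsBallot O C :=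
  forall₂_congr fun _ hi => by rw [countIco_shiftClosers hi]

lemma neg_one_mem_of_isBallot (hb : IsBallot O C) (hcard : #C = #O) : (-1 : Fin n) ∈ C := by
  have hlast := hb (n - 1) (Nat.sub_lt (NeZero.pos n) one_pos)
  have hsplit := countIco_add C (Nat.zero_le (n - 1)) (Nat.sub_le n 1)
  have hstep := countIco_succ C (n - 1)
  rw [Nat.sub_add_cancel NeZero.one_le, countIco_zero_eq_card] at hlast
  rw [Nat.sub_add_cancel NeZero.one_le, natCast_pred_eq_neg_one] at hstep
  rw [countIco_zero_eq_card] at hsplit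
  by_contra h
  rw [if_neg h] at hstep
  omega

lemma zero_notMem_of_isDominant (hd : IsDominant O D) : (0 : Fin n) ∉ D := by
  intro h
  have := hd 0 (NeZero.pos n)
  rw [zero_add, countIco_succ, countIco_succ, Nat.cast_zero, if_pos h] at this
  split_ifs at this <;> omega

lemma unshiftClosers_shiftClosers (h : (-1 : Fin n) ∈ C) :
    unshiftClosers (shiftClosers C) = C := by
  rw [unshiftClosers, shiftClosers, neg_vadd_vadd, insert_erase h]

lemma shiftClosers_unshiftClosers (h : (0 : Fin n) ∉ D) :
    shiftClosers (unshiftClosers D) = D := by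
  rw [unshiftClosers, shiftClosers, erase_insert, vadd_neg_vadd]
  rwa [mem_neg_vadd_finset_iff, vadd_eq_add, add_neg_cancel]

noncomputable def ballotEquivDominant {k : ℕ} (hk : 1 ≤ k) :
    {p : Finset (Fin n) × Finset (Fin n) // IsBallot p.1 p.2 ∧ #p.1 = k ∧ #p.2 = k} ≃
      {p : Finset (Fin n) × Finset (Fin n) // IsDominant p.1 p.2 ∧ #p.1 = k ∧ #p.2 = k - 1} where
  toFun p := ⟨(p.1.1, shiftClosers p.1.2), isDominant_shiftClosers_iff.2 p.2.1, p.2.2.1, by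
    rw [shiftClosers, card_vadd_finset, card_erase_of_mem
      (neg_one_mem_of_isBallot p.2.1 (p.2.2.2.trans p.2.2.1.symm)), p.2.2.2]⟩
  invFun p := ⟨(p.1.1, unshiftClosers p.1.2), by
    rw [← isDominant_shiftClosers_iff,
      shiftClosers_unshiftClosers (zero_notMem_of_isDominant p.2.1)]
    exact p.2.1, p.2.2.1, by
    rw [unshiftClosers, card_insert_of_notMem, card_vadd_finset, p.2.2.2, Nat.sub_add_cancel hk]
    rw [mem_neg_vadd_finset_iff, vadd_eq_add, add_neg_cancel]
    exact zero_notMem_of_isDominant p.2.1⟩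
  left_inv p := Subtype.ext (Prod.ext rfl (unshiftClosers_shiftClosers
    (neg_one_mem_of_isBallot p.2.1 (p.2.2.2.trans p.2.2.1.symm))))
  right_inv p := Subtype.ext (Prod.ext rfl
    (shiftClosers_unshiftClosers (zero_notMem_of_isDominant p.2.1)))

def height (O D : Finset (Fin n)) (m : ℕ) : ℤ :=
  countIco O 0 m - countIco D 0 m

lemma height_add_period (hcard : #O = #D + 1) (m : ℕ) :
    height O D (m + n) = height O D m + 1 := by
  rw [height, height, countIco_add O (Nat.zero_le m) (m.le_add_right n),
    countIco_add D (Nat.zero_le m) (m.le_add_right n), countIco_add_eq_card, countIco_add_eq_card,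
    hcard]
  push_cast
  ring

lemma countIco_neg_vadd (j : Fin n) (m : ℕ) :
    countIco (-j +ᵥ S) 0 m = countIco S 0 (j + m) - countIco S 0 j := by
  have h := countIco_natCast_vadd (-j +ᵥ S) j 0 m
  rw [Fin.cast_val_eq_self, vadd_neg_vadd, zero_add] at h
  rw [← h, countIco_add S (Nat.zero_le j) (Nat.le_add_right j m), add_comm m]
  omega

lemma isDominant_neg_vadd_iff (j : Fin n) :
    IsDominant (-j +ᵥ O) (-j +ᵥ D) ↔ ∀ i < n, height O D j < height O D (j + i + 1) := by
  refine forall₂_congr fun i _ => ?_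
  rw [countIco_neg_vadd, countIco_neg_vadd, height, height, add_assoc]
  have := countIco_add O (Nat.zero_le j) (Nat.le_add_right j (i + 1))
  have := countIco_add D (Nat.zero_le j) (Nat.le_add_right j (i + 1))
  omega

lemma existsUnique_isDominant_neg_vadd (hcard : #O = #D + 1) :
    ∃! j : Fin n, IsDominant (-j +ᵥ O) (-j +ᵥ D) := by
  obtain ⟨j, ⟨hjn, hj⟩, huniq⟩ :=
    existsUnique_forall_lt_of_add_period (NeZero.pos n) (height_add_period hcard)
  exact ⟨⟨j, hjn⟩, (isDominant_neg_vadd_iff _).2 hj,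
    fun j' hj' => Fin.ext (huniq j' ⟨j'.isLt, (isDominant_neg_vadd_iff j').1 hj'⟩)⟩

def rotatePair (k : ℕ)
    (x : Fin n × {p : Finset (Fin n) × Finset (Fin n) //
      IsDominant p.1 p.2 ∧ #p.1 = k ∧ #p.2 = k - 1}) :
    {p : Finset (Fin n) × Finset (Fin n) // #p.1 = k ∧ #p.2 = k - 1} :=
  ⟨(x.1 +ᵥ x.2.1.1, x.1 +ᵥ x.2.1.2), by simp [card_vadd_finset, x.2.2.2]⟩

lemma bijective_rotatePair {k : ℕ} (hk : 1 ≤ k) : Function.Bijective (rotatePair (n := n) k) := by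
  constructor
  · rintro ⟨j₁, ⟨⟨O₁, D₁⟩, hd₁, hO₁, hD₁⟩⟩ ⟨j₂, ⟨⟨O₂, D₂⟩, hd₂, hO₂, hD₂⟩⟩ h
    simp only [rotatePair, Subtype.mk.injEq, Prod.mk.injEq] at h
    obtain ⟨hO, hD⟩ := h
    obtain rfl : j₁ = j₂ := by
      refine (existsUnique_isDominant_neg_vadd (O := j₁ +ᵥ O₁) (D := j₁ +ᵥ D₁)
        (by rw [card_vadd_finset, card_vadd_finset, hO₁, hD₁]; omega)).unique ?_ ?_
      · rwa [neg_vadd_vadd, neg_vadd_vadd]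
      · rwa [hO, hD, neg_vadd_vadd, neg_vadd_vadd]
    obtain rfl := (vadd_left_cancel_iff j₁).1 hO
    obtain rfl := (vadd_left_cancel_iff j₁).1 hD
    rfl
  · intro q
    obtain ⟨j, hj, -⟩ := existsUnique_isDominant_neg_vadd (O := q.1.1) (D := q.1.2)
      (by rw [q.2.1, q.2.2]; omega)
    exact ⟨(j, ⟨(-j +ᵥ q.1.1, -j +ᵥ q.1.2), hj, by simp [q.2.1], by simp [q.2.2]⟩),
      Subtype.ext (Prod.ext (vadd_neg_vadd _ _) (vadd_neg_vadd _ _))⟩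

lemma card_isDominant_mul {k : ℕ} (hk : 1 ≤ k) :
    n * Nat.card {p : Finset (Fin n) × Finset (Fin n) //
        IsDominant p.1 p.2 ∧ #p.1 = k ∧ #p.2 = k - 1} = n.choose k * n.choose (k - 1) := by
  have hcard := Nat.card_eq_of_bijective _ (bijective_rotatePair (n := n) hk)
  rw [Nat.card_prod, Nat.card_fin] at hcard
  rw [hcard, Nat.card_congr (Equiv.subtypeProdEquivProd (p := fun s : Finset (Fin n) => #s = k)
    (q := fun s => #s = k - 1)), Nat.card_prod, Nat.card_eq_fintype_card,
    Nat.card_eq_fintype_card, Fintype.card_finset_len, Fintype.card_finset_len, Fintype.card_fin]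

end NoncrossingPartition

theorem card_nc_partitions_eq_narayana_general (n k : ℕ) (hk : 1 ≤ k) :
    Nat.card {P : Finset (Finset (Fin n)) //
        IsSetPartition n P ∧ IsNoncrossing n P ∧ P.card = k} =
      n.choose k * n.choose (k - 1) / n := by
  rcases n.eq_zero_or_pos with rfl | hn
  · have : IsEmpty {P : Finset (Finset (Fin 0)) //
        IsSetPartition 0 P ∧ IsNoncrossing 0 P ∧ P.card = k} := ⟨fun ⟨P, hP, _, hPk⟩ => by
      obtain ⟨B, hB⟩ := card_pos.1 (hPk ▸ hk : 0 < #P)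
      exact hP.1 B hB (eq_empty_of_isEmpty B)⟩
    rw [Nat.card_of_isEmpty, Nat.div_zero]
  have : NeZero n := ⟨hn.ne'⟩
  rw [Nat.card_congr ((NoncrossingPartition.ncPartitionEquivBallot k).trans
      (NoncrossingPartition.ballotEquivDominant hk)),
    ← NoncrossingPartition.card_isDominant_mul hk, Nat.mul_div_cancel_left _ hn]

/-- Noncrossing set partitions of `[n]` with exactly `k` blocks are counted by the
Narayana number `N(n,k) = (1/n) C(n,k) C(n,k-1)`. -/
theorem card_nc_partitions_eq_narayana (n k : ℕ) (hk : 1 ≤ k) (hkn : k ≤ n) :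
    Nat.card {P : Finset (Finset (Fin n)) //
        IsSetPartition n P ∧ IsNoncrossing n P ∧ P.card = k} =
      n.choose k * n.choose (k - 1) / n :=
  card_nc_partitions_eq_narayana_general n k hk
end

section
/- There is a bijection between Dyck paths of semilength n and noncrossing set partitions of [n]; consequently the number of noncrossing set partitions of [n] equals the Catalan number C_n = (1/(n+1)) * C(2n, n). -/
def IsDyckPath (n : ℕ) (p : List Bool) : Prop :=
  p.length = 2 * n ∧ p.count true = n ∧
    ∀ m : ℕ, (p.take m).count false ≤ (p.take m).count true

set_option linter.unusedSectionVars false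

open List

def g (l : List ℕ) (i : ℕ) : ℕ := l.getD i 0

lemma g_eq (l : List ℕ) (i : ℕ) : g l i = (l[i]?).getD 0 := by
  simp [g, List.getD_eq_getElem?_getD]

lemma g_lt_length (l : List ℕ) {i : ℕ} (h : i < l.length) : g l i = l[i] := by
  simp [g_eq, List.getElem?_eq_getElem h]

lemma g_cons_zero (a : ℕ) (l : List ℕ) : g (a :: l) 0 = a := rfl

lemma g_cons_succ (a : ℕ) (l : List ℕ) (i : ℕ) : g (a :: l) (i+1) = g l i := by
  simp [g_eq]

lemma g_append_left {l₁ : List ℕ} (l₂ : List ℕ) {i : ℕ} (h : i < l₁.length) :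
    g (l₁ ++ l₂) i = g l₁ i := by
  simp [g_eq, List.getElem?_append, if_pos h]

lemma g_append_right (l₁ : List ℕ) {l₂ : List ℕ} {i : ℕ} (h : l₁.length ≤ i) :
    g (l₁ ++ l₂) i = g l₂ (i - l₁.length) := by
  simp [g_eq, List.getElem?_append_right h]

lemma g_map (f : ℕ → ℕ) (l : List ℕ) {i : ℕ} (h : i < l.length) :
    g (l.map f) i = f (g l i) := by
  simp [g_eq, List.getElem?_map, List.getElem?_eq_getElem h]

lemma g_take {l : List ℕ} {m i : ℕ} (h : i < m) : g (l.take m) i = g l i := by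
  rcases lt_or_ge i l.length with h2 | h2
  · rw [g_eq, g_eq, List.getElem?_take, if_pos h]
  · rw [g_eq, g_eq, List.getElem?_eq_none h2, List.getElem?_eq_none (by simpa using Or.inr h2)]

lemma g_drop (l : List ℕ) (m i : ℕ) : g (l.drop m) i = g l (m + i) := by
  rw [g_eq, g_eq, List.getElem?_drop]

lemma g_default {l : List ℕ} {i : ℕ} (h : l.length ≤ i) : g l i = 0 := by
  rw [g_eq, List.getElem?_eq_none h]; rfl

lemma ext_g {l l' : List ℕ} (hlen : l.length = l'.length)
    (h : ∀ i < l.length, g l i = g l' i) : l = l' := by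
  apply List.ext_getElem hlen
  intro i h1 h2
  rw [← g_lt_length l h1, ← g_lt_length l' h2]
  exact h i h1

/-- `l` is a valid "block-min list" of a noncrossing partition. -/
def OK (l : List ℕ) : Prop :=
  (∀ i < l.length, g l i ≤ i) ∧
  (∀ i < l.length, g l (g l i) = g l i) ∧
  (∀ b c : ℕ, b < c → c < l.length → g l c ≤ b → g l c ≤ g l b)

def T (m : ℕ) := {l : List ℕ // OK l ∧ l.length = m}

instance T.finite (m : ℕ) : Finite (T m) := by
  apply Finite.of_injective
    (fun l : T m => (fun i : Fin m =>
      (⟨g l.1 i, lt_of_le_of_lt (l.2.1.1 i (by rw [l.2.2]; exact i.2)) i.2⟩ : Fin m)))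
  intro a b hab
  apply Subtype.ext
  apply ext_g (by rw [a.2.2, b.2.2])
  intro i hi
  have := congrFun hab ⟨i, by rw [← a.2.2]; exact hi⟩
  simpa using congrArg Fin.val this

lemma OK_nil : OK [] := by
  refine ⟨?_, ?_, ?_⟩ <;> intro i <;> simp

instance : Unique (T 0) where
  default := ⟨[], OK_nil, rfl⟩
  uniq := by
    rintro ⟨l, hl, hlen⟩
    apply Subtype.ext
    simpa using List.length_eq_zero_iff.mp hlen

lemma card_T_zero : Nat.card (T 0) = 1 := Nat.card_unique

/-! ### Decomposition and reconstruction -/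

def dec1 (i : ℕ) (l : List ℕ) : List ℕ := ((l.drop 1).take i).map (· - 1)

def dec2 (j : ℕ) (l : List ℕ) : List ℕ := (l.drop j).map (fun v => if v = 0 then 0 else v - j)

def recon (i : ℕ) (l1 l2 : List ℕ) : List ℕ :=
  0 :: (l1.map (· + 1) ++ l2.map (fun v => if v = 0 then 0 else v + (i+1)))

lemma dec1_length {i : ℕ} {l : List ℕ} (h : i + 1 ≤ l.length) : (dec1 i l).length = i := by
  simp only [dec1, List.length_map, List.length_take, List.length_drop]
  omega

lemma dec2_length (j : ℕ) (l : List ℕ) : (dec2 j l).length = l.length - j := by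
  simp [dec2]

lemma recon_length (i : ℕ) (l1 l2 : List ℕ) :
    (recon i l1 l2).length = l1.length + l2.length + 1 := by
  simp only [recon, List.length_cons, List.length_append, List.length_map]

lemma g_dec1 {i : ℕ} {l : List ℕ} {m : ℕ} (hm : m < i) (h : m + 1 < l.length) :
    g (dec1 i l) m = g l (m+1) - 1 := by
  rw [dec1, g_map _ _ (by simp; omega), g_take hm, g_drop, Nat.add_comm]

lemma g_dec2 {j : ℕ} {l : List ℕ} {m : ℕ} (hm : m < l.length - j) :
    g (dec2 j l) m = if g l (j+m) = 0 then 0 else g l (j+m) - j := by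
  rw [dec2, g_map _ _ (by simp; omega), g_drop]

lemma g_recon_zero (i : ℕ) (l1 l2 : List ℕ) : g (recon i l1 l2) 0 = 0 := rfl

lemma g_recon_mid {i : ℕ} {l1 : List ℕ} (l2 : List ℕ) {m : ℕ} (hm : m < l1.length) :
    g (recon i l1 l2) (m+1) = g l1 m + 1 := by
  rw [recon, g_cons_succ, g_append_left _ (by simpa using hm), g_map _ _ hm]

lemma g_recon_top {i : ℕ} {l1 : List ℕ} (h1 : l1.length = i) {l2 : List ℕ} {m : ℕ}
    (hm : m < l2.length) :
    g (recon i l1 l2) (i+1+m) = if g l2 m = 0 then 0 else g l2 m + (i+1) := by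
  have e1 : i + 1 + m = ((i + m) + 1) := by omega
  have e2 : i + m - (l1.map (· + 1)).length = m := by simp [h1]
  rw [recon, e1, g_cons_succ, g_append_right _ (by simp only [List.length_map, h1]; omega), e2,
    g_map _ _ hm]

/-! ### The splitting index -/

def idx (n : ℕ) (l : List ℕ) : ℕ :=
  Nat.find (⟨n, Or.inr rfl⟩ : ∃ m, (m < n ∧ g l (m+1) = 0) ∨ m = n)

lemma idx_le (n : ℕ) (l : List ℕ) : idx n l ≤ n := Nat.find_le (Or.inr rfl)

lemma g_ne_zero_of_lt_idx (n : ℕ) (l : List ℕ) {m : ℕ} (hm : m < idx n l) (hmn : m < n) :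
    g l (m+1) ≠ 0 := fun h => Nat.find_min _ hm (Or.inl ⟨hmn, h⟩)

lemma g_idx (n : ℕ) (l : List ℕ) (h : idx n l < n) : g l (idx n l + 1) = 0 := by
  have hspec : (idx n l < n ∧ g l (idx n l + 1) = 0) ∨ idx n l = n :=
    Nat.find_spec (⟨n, Or.inr rfl⟩ : ∃ m, (m < n ∧ g l (m+1) = 0) ∨ m = n)
  rcases hspec with ⟨-, h2⟩ | h2
  · exact h2
  · omega

lemma idx_eq_of (n : ℕ) (l : List ℕ) {i : ℕ} (hi : i ≤ n)
    (h1 : ∀ m < i, g l (m+1) ≠ 0) (h2 : i < n → g l (i+1) = 0) : idx n l = i := by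
  rw [idx, Nat.find_eq_iff]
  constructor
  · rcases eq_or_lt_of_le hi with h | h
    · exact Or.inr h
    · exact Or.inl ⟨h, h2 h⟩
  · intro m hm
    rintro (⟨hmn, h0⟩ | rfl)
    · exact h1 m hm h0
    · omega

/-! ### Facts about an OK list of length `n+1` with splitting index `i` -/

section facts

variable {n i : ℕ} {l : List ℕ} (hl : OK l) (hlen : l.length = n + 1)

include hl hlen

lemma g_zero : g l 0 = 0 := Nat.le_zero.mp (hl.1 0 (by omega))

lemma g_big (hidx : idx n l = i) {c : ℕ} (hc : i + 1 < c) (hcn : c < n + 1)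
    (hsmall : g l c ≤ i + 1) : g l c = 0 := by
  have hin : i < n := by omega
  have h0 : g l (i+1) = 0 := by rw [← hidx] at hin ⊢; exact g_idx n l hin
  have := hl.2.2 (i+1) c hc (by omega) hsmall
  omega

lemma ok_dec1 (hidx : idx n l = i) (hi : i ≤ n) : OK (dec1 i l) := by
  have hlen1 : (dec1 i l).length = i := dec1_length (by omega)
  have key : ∀ m < i, 1 ≤ g l (m+1) ∧ g l (m+1) ≤ m + 1 := by
    intro m hm
    have h1 := g_ne_zero_of_lt_idx n l (hidx ▸ hm) (by omega)
    have h2 := hl.1 (m+1) (by omega)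
    omega
  refine ⟨?_, ?_, ?_⟩
  · intro m hm
    rw [hlen1] at hm
    rw [g_dec1 hm (by omega)]
    have := key m hm
    omega
  · intro m hm
    rw [hlen1] at hm
    rw [g_dec1 hm (by omega)]
    obtain ⟨k1, k2⟩ := key m hm
    have hu : g l (m+1) - 1 < i := by omega
    rw [g_dec1 hu (by omega)]
    have e : g l (m+1) - 1 + 1 = g l (m+1) := by omega
    rw [e, hl.2.1 (m+1) (by omega)]
  · intro b c hbc hc hle
    rw [hlen1] at hc
    rw [g_dec1 hc (by omega)] at hle ⊢
    rw [g_dec1 (by omega : b < i) (by omega)]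
    obtain ⟨k1, k2⟩ := key c hc
    obtain ⟨k1', k2'⟩ := key b (by omega)
    have := hl.2.2 (b+1) (c+1) (by omega) (by omega) (by omega)
    omega

lemma g_top_cases (hidx : idx n l = i) {m : ℕ} (hm : m < n - i) :
    g l (i+1+m) = 0 ∨ (i + 1 < g l (i+1+m) ∧ g l (i+1+m) ≤ i+1+m) := by
  rcases Nat.eq_or_lt_of_le (Nat.zero_le m) with h0 | h0
  · left
    rw [← h0]
    have : i < n := by omega
    rw [← hidx] at this ⊢
    simpa using g_idx n l this
  · by_cases hz : g l (i+1+m) = 0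
    · exact Or.inl hz
    · right
      have hub := hl.1 (i+1+m) (by omega)
      refine ⟨?_, hub⟩
      by_contra hsm
      exact hz (g_big hl hlen hidx (by omega) (by omega) (by omega))

lemma ok_dec2 (hidx : idx n l = i) (hi : i ≤ n) : OK (dec2 (i+1) l) := by
  have hlen2 : (dec2 (i+1) l).length = n - i := by rw [dec2_length]; omega
  have gd : ∀ m < n - i, g (dec2 (i+1) l) m
      = if g l (i+1+m) = 0 then 0 else g l (i+1+m) - (i+1) := by
    intro m hm
    exact g_dec2 (by omega)
  refine ⟨?_, ?_, ?_⟩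
  · intro m hm
    rw [hlen2] at hm
    rw [gd m hm]
    rcases g_top_cases hl hlen hidx hm with h | ⟨h1, h2⟩
    · simp [h]
    · rw [if_neg (by omega)]; omega
  · intro m hm
    rw [hlen2] at hm
    rw [gd m hm]
    rcases g_top_cases hl hlen hidx hm with h | ⟨h1, h2⟩
    · rw [if_pos h, gd 0 (by omega)]
      have hin : i < n := by omega
      have h0 : g l (i+1) = 0 := by
        rw [← hidx] at hin ⊢; exact g_idx n l hin
      simp [h0]
    · rw [if_neg (by omega)]
      set v := g l (i+1+m) with hv
      have hvm : v - (i+1) < n - i := by omega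
      rw [gd _ hvm]
      have e : i + 1 + (v - (i+1)) = v := by omega
      rw [e, hl.2.1 (i+1+m) (by omega)]
      rw [← hv, if_neg (by omega)]
  · intro b c hbc hc hle
    rw [hlen2] at hc
    rw [gd c hc] at hle ⊢
    rw [gd b (by omega)]
    rcases g_top_cases hl hlen hidx hc with h | ⟨h1, h2⟩
    · simp [h]
    · rw [if_neg (by omega)] at hle ⊢
      have hs := hl.2.2 (i+1+b) (i+1+c) (by omega) (by omega) (by omega)
      rcases g_top_cases hl hlen hidx (show b < n - i by omega) with h' | ⟨h1', h2'⟩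
      · omega
      · rw [if_neg (by omega)]
        omega

end facts

/-! ### Reconstruction is OK and inverse -/

section recon

variable {n i : ℕ} {l1 l2 : List ℕ} (hi : i ≤ n) (h1 : OK l1) (e1 : l1.length = i)
  (h2 : OK l2) (e2 : l2.length = n - i)

include hi h1 e1 h2 e2

lemma recon_len : (recon i l1 l2).length = n + 1 := by
  rw [recon_length, e1, e2]; omega

lemma ok_recon : OK (recon i l1 l2) := by
  have gm : ∀ m < i, g (recon i l1 l2) (m+1) = g l1 m + 1 := by
    intro m hm; exact g_recon_mid l2 (by omega)
  have gt : ∀ m < n - i, g (recon i l1 l2) (i+1+m)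
      = if g l2 m = 0 then 0 else g l2 m + (i+1) := by
    intro m hm; exact g_recon_top e1 (by omega)
  refine ⟨?_, ?_, ?_⟩
  · intro t ht
    rw [recon_len hi h1 e1 h2 e2] at ht
    rcases Nat.eq_zero_or_pos t with rfl | hp
    · rw [g_recon_zero]
    rcases Nat.lt_or_ge t (i+1) with h | h
    · obtain ⟨m, rfl⟩ : ∃ m, t = m + 1 := ⟨t - 1, by omega⟩
      rw [gm m (by omega)]
      have := h1.1 m (by omega)
      omega
    · obtain ⟨m, rfl⟩ : ∃ m, t = i + 1 + m := ⟨t - (i+1), by omega⟩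
      rw [gt m (by omega)]
      have := h2.1 m (by omega)
      split <;> omega
  · intro t ht
    rw [recon_len hi h1 e1 h2 e2] at ht
    rcases Nat.eq_zero_or_pos t with rfl | hp
    · rw [g_recon_zero, g_recon_zero]
    rcases Nat.lt_or_ge t (i+1) with h | h
    · obtain ⟨m, rfl⟩ : ∃ m, t = m + 1 := ⟨t - 1, by omega⟩
      rw [gm m (by omega)]
      have hu := h1.1 m (by omega)
      rw [gm _ (by omega)]
      rw [h1.2.1 m (by omega)]
    · obtain ⟨m, rfl⟩ : ∃ m, t = i + 1 + m := ⟨t - (i+1), by omega⟩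
      rw [gt m (by omega)]
      by_cases hz : g l2 m = 0
      · rw [if_pos hz, g_recon_zero]
      · rw [if_neg hz]
        have hv := h2.1 m (by omega)
        have e : g l2 m + (i+1) = i + 1 + g l2 m := by omega
        rw [e, gt _ (by omega), h2.2.1 m (by omega), if_neg hz]
        omega
  · intro b c hbc hc hle
    rw [recon_len hi h1 e1 h2 e2] at hc
    rcases Nat.lt_or_ge c (i+1) with h | h
    · obtain ⟨m, rfl⟩ : ∃ m, c = m + 1 := ⟨c - 1, by omega⟩
      rw [gm m (by omega)] at hle ⊢
      have hb : 1 ≤ b := by omega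
      obtain ⟨mb, rfl⟩ : ∃ mb, b = mb + 1 := ⟨b - 1, by omega⟩
      rw [gm mb (by omega)]
      have := h1.2.2 mb m (by omega) (by omega) (by omega)
      omega
    · obtain ⟨m, rfl⟩ : ∃ m, c = i + 1 + m := ⟨c - (i+1), by omega⟩
      rw [gt m (by omega)] at hle ⊢
      by_cases hz : g l2 m = 0
      · simp [hz]
      · rw [if_neg hz] at hle ⊢
        obtain ⟨mb, rfl⟩ : ∃ mb, b = i + 1 + mb := ⟨b - (i+1), by omega⟩
        rw [gt mb (by omega)]
        have hs := h2.2.2 mb m (by omega) (by omega) (by omega)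
        rw [if_neg (by omega)]
        omega

lemma idx_recon : idx n (recon i l1 l2) = i := by
  apply idx_eq_of n _ hi
  · intro m hm
    rw [g_recon_mid l2 (by omega)]
    omega
  · intro hin
    have h0 : g l2 0 = 0 := Nat.le_zero.mp (h2.1 0 (by omega))
    have := g_recon_top (i := i) (l1 := l1) e1 (l2 := l2) (m := 0) (by omega)
    simpa [h0] using this

lemma dec1_recon : dec1 i (recon i l1 l2) = l1 := by
  have hlr := recon_len hi h1 e1 h2 e2
  apply ext_g
  · rw [dec1_length (by omega), e1]
  · intro m hm
    rw [dec1_length (by omega)] at hm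
    rw [g_dec1 hm (by omega), g_recon_mid l2 (by omega)]
    omega

lemma dec2_recon : dec2 (i+1) (recon i l1 l2) = l2 := by
  have hlr := recon_len hi h1 e1 h2 e2
  apply ext_g
  · rw [dec2_length, hlr, e2]; omega
  · intro m hm
    rw [dec2_length, hlr] at hm
    rw [g_dec2 (by omega), g_recon_top e1 (by omega)]
    by_cases hz : g l2 m = 0
    · simp [hz]
    · rw [if_neg hz, if_neg (by omega)]
      omega

end recon

lemma recon_dec {n : ℕ} {l : List ℕ} (hl : OK l) (hlen : l.length = n + 1) :
    recon (idx n l) (dec1 (idx n l) l) (dec2 (idx n l + 1) l) = l := by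
  set i := idx n l with hidx
  have hi : i ≤ n := idx_le n l
  have hd1 : (dec1 i l).length = i := dec1_length (by omega)
  have hd2 : (dec2 (i+1) l).length = n - i := by rw [dec2_length]; omega
  apply ext_g
  · rw [recon_length, hd1, hd2, hlen]; omega
  · intro t ht
    rw [recon_length, hd1, hd2] at ht
    rcases Nat.eq_zero_or_pos t with rfl | hp
    · rw [g_recon_zero, g_zero hl hlen]
    rcases Nat.lt_or_ge t (i+1) with h | h
    · obtain ⟨m, rfl⟩ : ∃ m, t = m + 1 := ⟨t - 1, by omega⟩
      rw [g_recon_mid _ (by omega), g_dec1 (by omega) (by omega)]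
      have := g_ne_zero_of_lt_idx n l (m := m) (by omega) (by omega)
      omega
    · obtain ⟨m, rfl⟩ : ∃ m, t = i + 1 + m := ⟨t - (i+1), by omega⟩
      rw [g_recon_top hd1 (by omega), g_dec2 (by omega)]
      rcases g_top_cases hl hlen hidx.symm (show m < n - i by omega) with h0 | ⟨hb1, hb2⟩
      · simp [h0]
      · have hv : ¬ g l (i+1+m) = 0 := by omega
        rw [if_neg hv, if_neg (by omega)]
        omega

/-! ### The fiber equivalence and counting -/

def idxFin (n : ℕ) (l : T (n+1)) : Fin (n+1) := ⟨idx n l.1, by have := idx_le n l.1; omega⟩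

def fiberEquiv (n : ℕ) (i : Fin (n+1)) :
    {l : T (n+1) // idxFin n l = i} ≃ T i × T (n - i) where
  toFun := fun x =>
    have hidx : idx n x.1.1 = (i : ℕ) := congrArg Fin.val x.2
    have hl : OK x.1.1 := x.1.2.1
    have hlen : x.1.1.length = n + 1 := x.1.2.2
    (⟨dec1 i x.1.1, ok_dec1 hl hlen hidx (by omega), dec1_length (by omega)⟩,
     ⟨dec2 (i+1) x.1.1, ok_dec2 hl hlen hidx (by omega), by rw [dec2_length, hlen]; omega⟩)
  invFun := fun y =>
    have hile : (i : ℕ) ≤ n := by omega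
    ⟨⟨recon i y.1.1 y.2.1, ok_recon hile y.1.2.1 y.1.2.2 y.2.2.1 y.2.2.2,
        recon_len hile y.1.2.1 y.1.2.2 y.2.2.1 y.2.2.2⟩,
      Fin.ext (idx_recon hile y.1.2.1 y.1.2.2 y.2.2.1 y.2.2.2)⟩
  left_inv := by
    rintro ⟨⟨l, hl, hlen⟩, hi⟩
    have hidx : idx n l = (i : ℕ) := congrArg Fin.val hi
    apply Subtype.ext
    apply Subtype.ext
    show recon (i : ℕ) (dec1 i l) (dec2 (i+1) l) = l
    rw [← hidx]
    exact recon_dec hl hlen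
  right_inv := by
    rintro ⟨⟨l1, h1, e1⟩, ⟨l2, h2, e2⟩⟩
    have hile : (i : ℕ) ≤ n := by omega
    refine Prod.ext ?_ ?_
    · exact Subtype.ext (dec1_recon hile h1 e1 h2 e2)
    · exact Subtype.ext (dec2_recon hile h1 e1 h2 e2)

lemma my_card_sigma {ι : Type*} [Fintype ι] {α : ι → Type*} [∀ i, Finite (α i)] :
    Nat.card (Σ i, α i) = ∑ i, Nat.card (α i) := by
  classical
  letI : ∀ i, Fintype (α i) := fun i => Fintype.ofFinite _
  simp only [Nat.card_eq_fintype_card, Fintype.card_sigma]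

lemma card_T_succ (n : ℕ) :
    Nat.card (T (n+1)) = ∑ i : Fin (n+1), Nat.card (T i) * Nat.card (T (n - i)) := by
  classical
  calc Nat.card (T (n+1))
      = Nat.card (Σ i : Fin (n+1), {l : T (n+1) // idxFin n l = i}) :=
        (Nat.card_congr (Equiv.sigmaFiberEquiv (idxFin n))).symm
    _ = ∑ i : Fin (n+1), Nat.card {l : T (n+1) // idxFin n l = i} := my_card_sigma
    _ = ∑ i : Fin (n+1), Nat.card (T i × T (n - i)) :=
        Finset.sum_congr rfl fun i _ => Nat.card_congr (fiberEquiv n i)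
    _ = ∑ i : Fin (n+1), Nat.card (T i) * Nat.card (T (n - i)) := by
        simp [Nat.card_prod]

lemma card_T (n : ℕ) : Nat.card (T n) = catalan n := by
  induction n using Nat.strong_induction_on with
  | _ n ih =>
    match n with
    | 0 => simpa using card_T_zero
    | (m+1) =>
      rw [card_T_succ, catalan_succ]
      refine Finset.sum_congr rfl fun i _ => ?_
      rw [ih i (by omega), ih (m - i) (by omega)]

/-! ### Partitions -/

section PartToList

variable {n : ℕ} {P : Finset (Finset (Fin n))} (hP : IsSetPartition n P)

/-- The block of `x`. -/
noncomputable def blk (hP : IsSetPartition n P) (x : Fin n) : Finset (Fin n) :=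
  ((hP.2 x).exists).choose

lemma blk_mem (x : Fin n) : blk hP x ∈ P := ((hP.2 x).exists).choose_spec.1

lemma mem_blk (x : Fin n) : x ∈ blk hP x := ((hP.2 x).exists).choose_spec.2

lemma blk_eq {B : Finset (Fin n)} {x : Fin n} (hB : B ∈ P) (hx : x ∈ B) : B = blk hP x :=
  (hP.2 x).unique ⟨hB, hx⟩ ⟨blk_mem hP x, mem_blk hP x⟩

lemma min'_congr {α : Type*} [LinearOrder α] {s t : Finset α} (h : s = t) (hs : s.Nonempty) :
    s.min' hs = t.min' (h ▸ hs) := by subst h; rfl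

/-- The minimum of the block of `x`. -/
noncomputable def mins (hP : IsSetPartition n P) (x : Fin n) : Fin n :=
  (blk hP x).min' ⟨x, mem_blk hP x⟩

lemma mins_le (x : Fin n) : mins hP x ≤ x := Finset.min'_le _ x (mem_blk hP x)

lemma mins_mem (x : Fin n) : mins hP x ∈ blk hP x := Finset.min'_mem _ _

lemma blk_mins (x : Fin n) : blk hP (mins hP x) = blk hP x :=
  (blk_eq hP (blk_mem hP x) (mins_mem hP x)).symm

lemma mins_mins (x : Fin n) : mins hP (mins hP x) = mins hP x :=
  min'_congr (blk_mins hP x) _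

lemma mins_eq_of_mem {B : Finset (Fin n)} {x : Fin n} (hB : B ∈ P) (hx : x ∈ B) {y : Fin n}
    (hy : y ∈ B) : mins hP x = mins hP y :=
  min'_congr ((blk_eq hP hB hx).symm.trans (blk_eq hP hB hy)) _

lemma mins_noncross (hNC : IsNoncrossing n P) {b c : Fin n} (hbc : b < c)
    (hle : mins hP c ≤ b) : mins hP c ≤ mins hP b := by
  by_contra hcon
  push_neg at hcon
  have hne : mins hP c ≠ b := by
    intro h
    have h2 : mins hP b = mins hP c :=
      mins_eq_of_mem hP (blk_mem hP c) (h ▸ mins_mem hP c) (mem_blk hP c)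
    exact absurd h2 (ne_of_lt hcon)
  have hblkne : blk hP b ≠ blk hP c := by
    intro h
    exact absurd (min'_congr h _ : mins hP b = mins hP c) (ne_of_lt hcon)
  exact hNC ⟨mins hP b, mins hP c, b, c, hcon, lt_of_le_of_ne hle hne, hbc,
    blk hP b, blk_mem hP b, blk hP c, blk_mem hP c, hblkne,
    mins_mem hP b, mem_blk hP b, mins_mem hP c, mem_blk hP c⟩

/-- The block-min list of a partition. -/
noncomputable def toL (hP : IsSetPartition n P) : List ℕ :=
  (List.finRange n).map (fun x => (mins hP x : ℕ))

lemma toL_length : (toL hP).length = n := by simp [toL]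

lemma g_toL {i : ℕ} (h : i < n) : g (toL hP) i = (mins hP ⟨i, h⟩ : ℕ) := by
  rw [g_lt_length _ (by simp [toL]; omega)]
  simp [toL]

lemma ok_toL (hNC : IsNoncrossing n P) : OK (toL hP) := by
  have hlen : (toL hP).length = n := toL_length hP
  refine ⟨?_, ?_, ?_⟩
  · intro i hi
    rw [hlen] at hi
    rw [g_toL hP hi]
    exact mins_le hP _
  · intro i hi
    rw [hlen] at hi
    rw [g_toL hP hi]
    have h2 : (mins hP ⟨i, hi⟩ : ℕ) < n := (mins hP ⟨i, hi⟩).2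
    rw [g_toL hP h2]
    have : (⟨(mins hP ⟨i, hi⟩ : ℕ), h2⟩ : Fin n) = mins hP ⟨i, hi⟩ := rfl
    rw [this]
    exact congrArg Fin.val (mins_mins hP _)
  · intro b c hbc hc hle
    rw [hlen] at hc
    have hb : b < n := by omega
    rw [g_toL hP hc] at hle ⊢
    rw [g_toL hP hb]
    exact mins_noncross hP hNC (show (⟨b, hb⟩ : Fin n) < ⟨c, hc⟩ from hbc) hle

end PartToList

section ListToPart

/-- The block-min function of an OK list. -/
def fOf {n : ℕ} {l : List ℕ} (hl : OK l) (hlen : l.length = n) (x : Fin n) : Fin n :=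
  ⟨g l x, by have := hl.1 x (by omega); omega⟩

/-- The partition associated to an OK list. -/
def Pof {n : ℕ} {l : List ℕ} (hl : OK l) (hlen : l.length = n) : Finset (Finset (Fin n)) :=
  Finset.image (fun x => Finset.univ.filter (fun k => fOf hl hlen k = fOf hl hlen x))
    Finset.univ

variable {n : ℕ} {l : List ℕ} (hl : OK l) (hlen : l.length = n)

lemma fOf_idem (x : Fin n) : fOf hl hlen (fOf hl hlen x) = fOf hl hlen x := by
  apply Fin.ext
  exact hl.2.1 x (by omega)

lemma part_Pof : IsSetPartition n (Pof hl hlen) := by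
  constructor
  · rintro B hB
    simp only [Pof, Finset.mem_image] at hB
    obtain ⟨x, -, rfl⟩ := hB
    intro h
    have : x ∈ (∅ : Finset (Fin n)) := h ▸ (by simp : x ∈ Finset.univ.filter
      (fun k => fOf hl hlen k = fOf hl hlen x))
    simp at this
  · intro x
    refine ⟨Finset.univ.filter (fun k => fOf hl hlen k = fOf hl hlen x), ⟨?_, by simp⟩, ?_⟩
    · exact Finset.mem_image_of_mem _ (Finset.mem_univ x)
    · rintro B ⟨hB, hxB⟩
      simp only [Pof, Finset.mem_image] at hB
      obtain ⟨y, -, rfl⟩ := hB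
      simp only [Finset.mem_filter, Finset.mem_univ, true_and] at hxB
      ext k
      simp only [Finset.mem_filter, Finset.mem_univ, true_and, hxB]

lemma nc_Pof : IsNoncrossing n (Pof hl hlen) := by
  rintro ⟨a, b, c, d, hab, hbc, hcd, B₁, hB₁, B₂, hB₂, hne, haB, hcB, hbB, hdB⟩
  simp only [Pof, Finset.mem_image] at hB₁ hB₂
  obtain ⟨x, -, rfl⟩ := hB₁
  obtain ⟨y, -, rfl⟩ := hB₂
  simp only [Finset.mem_filter, Finset.mem_univ, true_and] at haB hcB hbB hdB
  have hac : fOf hl hlen a = fOf hl hlen c := haB.trans hcB.symm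
  have hbd : fOf hl hlen b = fOf hl hlen d := hbB.trans hdB.symm
  have huv : fOf hl hlen a ≠ fOf hl hlen b := by
    intro h
    apply hne
    ext k
    simp only [Finset.mem_filter, Finset.mem_univ, true_and, ← haB, ← hbB, h]
  have h1 : g l a = g l c := congrArg Fin.val hac
  have h2 : g l b = g l d := congrArg Fin.val hbd
  have h3 : g l a ≠ g l b := fun h => huv (Fin.ext h)
  have ha : g l a ≤ (a : ℕ) := hl.1 a (by omega)
  have hb' : g l b ≤ (b : ℕ) := hl.1 b (by omega)
  have k1 : g l c ≤ g l b := by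
    apply hl.2.2 b c hbc (by omega)
    omega
  have k2 : g l d ≤ g l c := by
    apply hl.2.2 c d hcd (by omega)
    omega
  omega

end ListToPart

/-! ### Roundtrips -/

section Round

variable {n : ℕ}

lemma fOf_toL {P : Finset (Finset (Fin n))} (hP : IsSetPartition n P) (hNC : IsNoncrossing n P)
    (x : Fin n) : fOf (ok_toL hP hNC) (toL_length hP) x = mins hP x := by
  apply Fin.ext
  show g (toL hP) ↑x = _
  rw [g_toL hP x.2]

lemma mem_blk_iff {P : Finset (Finset (Fin n))} (hP : IsSetPartition n P) (x k : Fin n) :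
    k ∈ blk hP x ↔ mins hP k = mins hP x := by
  constructor
  · intro h
    exact mins_eq_of_mem hP (blk_mem hP x) h (mem_blk hP x)
  · intro h
    have hb : blk hP k = blk hP x := by
      rw [← blk_mins hP k, h, blk_mins]
    exact hb ▸ mem_blk hP k

lemma Pof_toL {P : Finset (Finset (Fin n))} (hP : IsSetPartition n P)
    (hNC : IsNoncrossing n P) : Pof (ok_toL hP hNC) (toL_length hP) = P := by
  have key : ∀ x : Fin n,
      Finset.univ.filter (fun k => fOf (ok_toL hP hNC) (toL_length hP) k
        = fOf (ok_toL hP hNC) (toL_length hP) x) = blk hP x := by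
    intro x
    ext k
    simp only [Finset.mem_filter, Finset.mem_univ, true_and, fOf_toL hP hNC,
      mem_blk_iff hP x k]
  ext B
  simp only [Pof, Finset.mem_image]
  constructor
  · rintro ⟨x, -, rfl⟩
    rw [key x]
    exact blk_mem hP x
  · intro hB
    obtain ⟨x, hx⟩ := Finset.nonempty_of_ne_empty (hP.1 B hB)
    exact ⟨x, Finset.mem_univ x, by rw [key x, ← blk_eq hP hB hx]⟩

lemma blk_Pof {l : List ℕ} (hl : OK l) (hlen : l.length = n) (x : Fin n) :
    blk (part_Pof hl hlen) x
      = Finset.univ.filter (fun k => fOf hl hlen k = fOf hl hlen x) := by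
  refine (blk_eq (part_Pof hl hlen) ?_ ?_).symm
  · exact Finset.mem_image_of_mem _ (Finset.mem_univ x)
  · simp

lemma mins_Pof {l : List ℕ} (hl : OK l) (hlen : l.length = n) (x : Fin n) :
    mins (part_Pof hl hlen) x = fOf hl hlen x := by
  have h := min'_congr (blk_Pof hl hlen x)
    ⟨x, mem_blk (part_Pof hl hlen) x⟩
  rw [mins, h]
  apply _root_.le_antisymm
  · apply Finset.min'_le
    simp only [Finset.mem_filter, Finset.mem_univ, true_and]
    exact fOf_idem hl hlen x
  · apply Finset.le_min'
    intro y hy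
    simp only [Finset.mem_filter, Finset.mem_univ, true_and] at hy
    have : (fOf hl hlen x : ℕ) = g l ↑y := by rw [← hy]; rfl
    have h2 := hl.1 y (by omega)
    exact Fin.le_def.mpr (by omega)

lemma toL_Pof {l : List ℕ} (hl : OK l) (hlen : l.length = n) :
    toL (part_Pof hl hlen) = l := by
  apply ext_g
  · rw [toL_length, hlen]
  · intro i hi
    rw [toL_length] at hi
    rw [g_toL _ hi]
    rw [mins_Pof hl hlen]
    rfl

/-- The equivalence between OK lists and noncrossing partitions. -/
noncomputable def partEquiv (n : ℕ) :
    T n ≃ {P : Finset (Finset (Fin n)) // IsSetPartition n P ∧ IsNoncrossing n P} where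
  toFun l := ⟨Pof l.2.1 l.2.2, part_Pof l.2.1 l.2.2, nc_Pof l.2.1 l.2.2⟩
  invFun P := ⟨toL P.2.1, ok_toL P.2.1 P.2.2, toL_length P.2.1⟩
  left_inv l := Subtype.ext (toL_Pof l.2.1 l.2.2)
  right_inv P := Subtype.ext (Pof_toL P.2.1 P.2.2)

end Round

/-! ### Dyck paths -/

open DyckStep

def stepOf (b : Bool) : DyckStep := if b then U else D

def boolOf (s : DyckStep) : Bool := match s with | U => true | D => false

lemma stepOf_inj : Function.Injective stepOf := by
  intro a b h
  cases a <;> cases b <;> simp [stepOf] at h ⊢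

lemma boolOf_inj : Function.Injective boolOf := by
  intro a b h
  cases a <;> cases b <;> simp [boolOf] at h ⊢

lemma bool_count (l : List Bool) : l.count true + l.count false = l.length := by
  induction l with
  | nil => simp
  | cons a t ih => cases a <;> simp [List.count_cons] <;> omega

lemma step_count (l : List DyckStep) : l.count U + l.count D = l.length := by
  induction l with
  | nil => simp
  | cons a t ih => cases a <;> simp [List.count_cons] <;> omega

lemma count_map_stepOf (l : List Bool) (b : Bool) :
    (l.map stepOf).count (stepOf b) = l.count b :=
  List.count_map_of_injective l stepOf stepOf_inj b

lemma count_map_boolOf (l : List DyckStep) (s : DyckStep) :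
    (l.map boolOf).count (boolOf s) = l.count s :=
  List.count_map_of_injective l boolOf boolOf_inj s

/-- The equivalence between our Dyck paths and Mathlib's Dyck words. -/
def dyckEquiv (n : ℕ) :
    {p : List Bool // IsDyckPath n p} ≃ {q : DyckWord // q.semilength = n} where
  toFun p :=
    have h1 : (p.1.map stepOf).count U = n := by
      have := count_map_stepOf p.1 true
      simpa [stepOf] using this.trans p.2.2.1
    have h2 : (p.1.map stepOf).count D = n := by
      have := count_map_stepOf p.1 false
      have h3 := bool_count p.1
      simp only [stepOf, if_neg Bool.false_ne_true] at this
      simp only [this]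
      have := p.2.1
      have := p.2.2.1
      omega
    ⟨⟨p.1.map stepOf, h1.trans h2.symm, by
      intro i
      rw [← List.map_take]
      have hD := count_map_stepOf (p.1.take i) false
      have hU := count_map_stepOf (p.1.take i) true
      rw [show stepOf false = D by rfl] at hD
      rw [show stepOf true = U by rfl] at hU
      rw [hD, hU]
      exact p.2.2.2 i⟩, h1⟩
  invFun q :=
    have hU : q.1.toList.count U = n := q.2
    have hD : q.1.toList.count D = n := q.1.count_U_eq_count_D ▸ q.2
    have hlen : q.1.toList.length = 2 * n := by
      have := q.1.two_mul_semilength_eq_length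
      rw [q.2] at this
      omega
    ⟨q.1.toList.map boolOf, by rw [List.length_map]; exact hlen, by
      have := count_map_boolOf q.1.toList U
      simpa [boolOf] using this.trans hU, by
      intro m
      rw [← List.map_take]
      have hD' := count_map_boolOf (q.1.toList.take m) D
      have hU' := count_map_boolOf (q.1.toList.take m) U
      rw [show boolOf D = false by rfl] at hD'
      rw [show boolOf U = true by rfl] at hU'
      rw [hD', hU']
      exact q.1.count_D_le_count_U m⟩
  left_inv p := by
    apply Subtype.ext
    show (p.1.map stepOf).map boolOf = p.1
    rw [List.map_map]
    have : boolOf ∘ stepOf = id := by funext b; cases b <;> rfl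
    rw [this, List.map_id]
  right_inv q := by
    apply Subtype.ext
    apply DyckWord.ext
    show (q.1.toList.map boolOf).map stepOf = q.1.toList
    rw [List.map_map]
    have : stepOf ∘ boolOf = id := by funext s; cases s <;> rfl
    rw [this, List.map_id]

/-- There is a bijection between Dyck paths of semilength `n` and noncrossing set
partitions of `[n]`, and consequently the latter are counted by the Catalan number
`C_n = (1/(n+1)) C(2n,n)`. -/
theorem dyck_equiv_nc_partitions (n : ℕ) :
    Nonempty ({p : List Bool // IsDyckPath n p} ≃
      {P : Finset (Finset (Fin n)) // IsSetPartition n P ∧ IsNoncrossing n P}) ∧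
    Nat.card {P : Finset (Finset (Fin n)) // IsSetPartition n P ∧ IsNoncrossing n P} =
      (2 * n).choose n / (n + 1) := by
  have hD : Nat.card {p : List Bool // IsDyckPath n p} = catalan n := by
    rw [Nat.card_congr (dyckEquiv n), Nat.card_eq_fintype_card,
      DyckWord.card_dyckWord_semilength_eq_catalan]
  have hP : Nat.card {P : Finset (Finset (Fin n)) // IsSetPartition n P ∧ IsNoncrossing n P}
      = catalan n := by
    rw [← Nat.card_congr (partEquiv n), card_T]
  have : Finite {p : List Bool // IsDyckPath n p} :=
    Finite.of_equiv _ (dyckEquiv n).symm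
  refine ⟨Finite.card_eq.mp (hD.trans hP.symm), ?_⟩
  rw [hP, catalan_eq_centralBinom_div]
  rfl
end

section
/- Let u(0)=1 and for n ≥ 1 let u(n) be the number of partitions of [n] into an unordered set of noncrossing lists. Then u satisfies the recurrence u(n) = sum over k from 1 to n of k! times the sum over all weak compositions (b_1,...,b_k) of n-k into k nonnegative parts of u(b_1)u(b_2)...u(b_k). -/
/-- A partition of `[n]` into a set of noncrossing lists: an unordered collection of
nonempty duplicate-free lists, each element of `Fin n` in exactly one list, whose
underlying sets form a noncrossing set partition. -/
def SetOfNCLists (n : ℕ) : Type :=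
  {S : Finset (List (Fin n)) // (∀ l ∈ S, l ≠ [] ∧ l.Nodup) ∧
    (∀ x : Fin n, ∃! l, l ∈ S ∧ x ∈ l) ∧
    ¬ ∃ a b c d : Fin n, a < b ∧ b < c ∧ c < d ∧
      ∃ l₁ ∈ S, ∃ l₂ ∈ S, l₁ ≠ l₂ ∧ a ∈ l₁ ∧ c ∈ l₁ ∧ b ∈ l₂ ∧ d ∈ l₂}

/-- `u n` is the number of partitions of `[n]` into sets of noncrossing lists
(`u 0 = 1`, witnessed by the empty collection). -/
noncomputable def u (n : ℕ) : ℕ := Nat.card (SetOfNCLists n)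

/-!
Let `L` be the list containing the largest element `n - 1`, and let `k` be its length. Its
elements `p₀ < ⋯ < p_{k-1} = n - 1` cut `[0, n)` into the `k` gaps `[0, p₀)`,
`(p₀, p₁)`, …, `(p_{k-2}, p_{k-1})`, of sizes `b₀, …, b_{k-1}` summing to `n - k`. If a
list met two different gaps, it would cross `L`; so every other list lies inside one gap, and
the partition is the same thing as the order of `L` (one of `k!` permutations of its sorted
elements), the gap sizes `b`, and an arbitrary partition of each gap into noncrossing lists.
Counting noncrossing list partitions is invariant under order embeddings, so a gap of size
`bᵢ` contributes `u bᵢ`.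
-/

open Finset

theorem exists_perm_comp_eq {α : Type*} {k : ℕ} {f g : Fin k → α} (hf : Function.Injective f)
    (hg : Function.Injective g) (h : Set.range f = Set.range g) :
    ∃ σ : Equiv.Perm (Fin k), ∀ j, g (σ j) = f j :=
  ⟨(Equiv.ofInjective f hf).trans ((Equiv.setCongr h).trans (Equiv.ofInjective g hg).symm),
    fun j => by simp [Equiv.apply_ofInjective_symm]⟩

section General

variable {α β : Type*} [LinearOrder α] [LinearOrder β]

structure IsNCListPartition (A : Finset α) (S : Finset (List α)) : Prop where
  ne_nil : ∀ l ∈ S, l ≠ []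
  nodup : ∀ l ∈ S, l.Nodup
  mem_of_mem : ∀ l ∈ S, ∀ x ∈ l, x ∈ A
  exists_mem : ∀ x ∈ A, ∃ l ∈ S, x ∈ l
  disjoint : ∀ l₁ ∈ S, ∀ l₂ ∈ S, l₁ ≠ l₂ → ∀ x ∈ l₁, ∀ y ∈ l₂, x ≠ y
  noncrossing : ∀ l₁ ∈ S, ∀ l₂ ∈ S, l₁ ≠ l₂ →
    ∀ a ∈ l₁, ∀ c ∈ l₁, ∀ b ∈ l₂, ∀ d ∈ l₂, ¬(a < b ∧ b < c ∧ c < d)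

def NCListPartition (A : Finset α) : Type _ := {S : Finset (List α) // IsNCListPartition A S}

namespace IsNCListPartition

variable {A B : Finset α} {S : Finset (List α)}

theorem eq_of_mem (hS : IsNCListPartition A S) {l₁ l₂ : List α} (h₁ : l₁ ∈ S) (h₂ : l₂ ∈ S)
    {x : α} (hx₁ : x ∈ l₁) (hx₂ : x ∈ l₂) : l₁ = l₂ :=
  by_contra fun hne => hS.disjoint l₁ h₁ l₂ h₂ hne x hx₁ x hx₂ rfl

theorem coe_subset_range_map (hS : IsNCListPartition A S) :
    (S : Set (List α)) ⊆ Set.range fun l : {l : List A // l.Nodup} => l.1.map Subtype.val := by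
  intro l hl
  obtain ⟨l', rfl⟩ : l ∈ Set.range (List.map (Subtype.val : A → α)) := by
    rw [Set.range_list_map_coe]; exact hS.mem_of_mem l hl
  exact ⟨⟨l', (hS.nodup _ hl).of_map _⟩, rfl⟩

theorem filter (hS : IsNCListPartition A S) (hB : B ⊆ A)
    (h : ∀ l ∈ S, ∀ x ∈ l, x ∈ B → ∀ y ∈ l, y ∈ B) :
    IsNCListPartition B (S.filter fun l => ∀ x ∈ l, x ∈ B) where
  ne_nil l hl := hS.ne_nil l (mem_filter.1 hl).1
  nodup l hl := hS.nodup l (mem_filter.1 hl).1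
  mem_of_mem l hl := (mem_filter.1 hl).2
  exists_mem x hx := by
    obtain ⟨l, hl, hxl⟩ := hS.exists_mem x (hB hx)
    exact ⟨l, mem_filter.2 ⟨hl, h l hl x hxl hx⟩, hxl⟩
  disjoint l₁ h₁ l₂ h₂ := hS.disjoint l₁ (mem_filter.1 h₁).1 l₂ (mem_filter.1 h₂).1
  noncrossing l₁ h₁ l₂ h₂ := hS.noncrossing l₁ (mem_filter.1 h₁).1 l₂ (mem_filter.1 h₂).1

end IsNCListPartition

theorem isNCListPartition_image_map_iff (f : α ↪o β) {A : Finset α} {S : Finset (List α)} :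
    IsNCListPartition (A.map f.toEmbedding) (S.image (List.map f)) ↔ IsNCListPartition A S := by
  have hinj : Function.Injective (List.map f) := List.map_injective_iff.2 f.injective
  constructor <;> intro h <;>
  exact ⟨by simpa using h.ne_nil, by simpa [List.nodup_map_iff f.injective] using h.nodup,
    by simpa using h.mem_of_mem, by simpa [List.mem_map_of_injective f.injective] using h.exists_mem,
    by simpa [hinj.eq_iff] using h.disjoint, by simpa [hinj.eq_iff] using h.noncrossing⟩

theorem isNCListPartition_univ_iff [Fintype α] {S : Finset (List α)} :
    IsNCListPartition univ S ↔ (∀ l ∈ S, l ≠ [] ∧ l.Nodup) ∧ (∀ x : α, ∃! l, l ∈ S ∧ x ∈ l) ∧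
      ¬ ∃ a b c d : α, a < b ∧ b < c ∧ c < d ∧
        ∃ l₁ ∈ S, ∃ l₂ ∈ S, l₁ ≠ l₂ ∧ a ∈ l₁ ∧ c ∈ l₁ ∧ b ∈ l₂ ∧ d ∈ l₂ := by
  constructor
  · intro h
    refine ⟨fun l hl => ⟨h.ne_nil l hl, h.nodup l hl⟩, fun x => ?_, ?_⟩
    · obtain ⟨l, hl, hxl⟩ := h.exists_mem x (mem_univ x)
      exact ⟨l, ⟨hl, hxl⟩, fun l' ⟨hl', hxl'⟩ => h.eq_of_mem hl' hl hxl' hxl⟩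
    · rintro ⟨a, b, c, d, hab, hbc, hcd, l₁, h₁, l₂, h₂, hne, ha, hc, hb, hd⟩
      exact h.noncrossing l₁ h₁ l₂ h₂ hne a ha c hc b hb d hd ⟨hab, hbc, hcd⟩
  · rintro ⟨hl, hx, hnc⟩
    refine ⟨fun l h => (hl l h).1, fun l h => (hl l h).2, fun _ _ _ _ => mem_univ _,
      fun x _ => ?_, ?_, ?_⟩
    · obtain ⟨l, ⟨hl, hxl⟩, -⟩ := hx x
      exact ⟨l, hl, hxl⟩
    · rintro l₁ h₁ l₂ h₂ hne x hx₁ y hx₂ rfl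
      exact hne ((hx x).unique ⟨h₁, hx₁⟩ ⟨h₂, hx₂⟩)
    · rintro l₁ h₁ l₂ h₂ hne a ha c hc b hb d hd ⟨hab, hbc, hcd⟩
      exact hnc ⟨a, b, c, d, hab, hbc, hcd, l₁, h₁, l₂, h₂, hne, ha, hc, hb, hd⟩

namespace NCListPartition

instance (A : Finset α) : Finite (NCListPartition A) := by
  let X : Set (List α) := Set.range fun l : {l : List A // l.Nodup} => l.1.map Subtype.val
  have : Finite (𝒫 X) := (Set.finite_range _).powerset.to_subtype
  exact Finite.of_injective (fun S : NCListPartition A => (⟨S.1, S.2.coe_subset_range_map⟩ : 𝒫 X))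
    fun _ _ h => Subtype.ext (Finset.coe_injective (congrArg Subtype.val h))

theorem card_map (f : α ↪o β) (A : Finset α) :
    Nat.card (NCListPartition (A.map f.toEmbedding)) = Nat.card (NCListPartition A) := by
  refine (Nat.card_eq_of_bijective
    (fun S : NCListPartition A => ⟨S.1.image (List.map f),
      (isNCListPartition_image_map_iff f).2 S.2⟩) ⟨?_, ?_⟩).symm
  · intro S₁ S₂ h
    exact Subtype.ext (Finset.image_injective (List.map_injective_iff.2 f.injective)
      (congrArg Subtype.val h))
  · rintro ⟨T, hT⟩
    have hT' : (T : Set (List β)) ⊆ List.map f '' Set.univ := by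
      intro l hl
      simp only [Set.image_univ, Set.range_list_map]
      intro x hx
      obtain ⟨a, -, rfl⟩ := Finset.mem_map.1 (hT.mem_of_mem l hl x hx)
      exact ⟨a, rfl⟩
    obtain ⟨S, -, rfl⟩ := Finset.subset_set_image_iff.1 hT'
    exact ⟨⟨S, (isNCListPartition_image_map_iff f).1 hT⟩, rfl⟩

end NCListPartition

end General

theorem u_eq_card_range (n : ℕ) : u n = Nat.card (NCListPartition (range n)) := by
  rw [← Nat.Iio_eq_range, ← Fin.map_valEmbedding_univ]
  exact (Nat.card_congr (Equiv.subtypeEquivRight fun _ => isNCListPartition_univ_iff.symm)).trans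
    (NCListPartition.card_map (Fin.valOrderEmb n) univ).symm

namespace NCListPartition

open Equiv

section Gaps

variable {k : ℕ} (b : Fin k → ℕ)

/- Gap sizes `b` place the elements of the block at `blockPos b 0 < ⋯ < blockPos b (k - 1)`,
where `gap b m` is the interval of `b m` points just below `blockPos b m`. Indices are natural
numbers, with `b` extended by zero, so that monotonicity is plain induction. -/

def gapSize (m : ℕ) : ℕ := if h : m < k then b ⟨m, h⟩ else 0

def gapStart (m : ℕ) : ℕ := m + ∑ j ∈ range m, gapSize b j

def blockPos (m : ℕ) : ℕ := gapStart b m + gapSize b m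

def gap (m : ℕ) : Finset ℕ := Ico (gapStart b m) (blockPos b m)

variable {b}

@[simp]
theorem gapSize_coe (i : Fin k) : gapSize b i = b i := by simp [gapSize]

@[simp]
theorem gapStart_zero : gapStart b 0 = 0 := by simp [gapStart]

theorem gapStart_succ (m : ℕ) : gapStart b (m + 1) = blockPos b m + 1 := by
  simp only [gapStart, blockPos, sum_range_succ]; ring

theorem gapStart_self : gapStart b k = k + ∑ i, b i := by
  simp [gapStart, ← Fin.sum_univ_eq_sum_range]

theorem blockPos_coe (i : Fin k) : blockPos b i = gapStart b i + b i := by simp [blockPos]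

theorem mem_gap {m x : ℕ} : x ∈ gap b m ↔ gapStart b m ≤ x ∧ x < blockPos b m := mem_Ico

theorem gapStart_strictMono : StrictMono (gapStart b) :=
  strictMono_nat_of_lt_succ fun m => by rw [gapStart_succ, blockPos]; omega

theorem blockPos_strictMono : StrictMono (blockPos b) :=
  strictMono_nat_of_lt_succ fun m =>
    calc blockPos b m < gapStart b (m + 1) := by rw [gapStart_succ]; omega
      _ ≤ blockPos b (m + 1) := Nat.le_add_right _ _

theorem blockPos_lt_gapStart {i j : ℕ} (h : i < j) : blockPos b i < gapStart b j := by
  rw [← Nat.add_one_le_iff, ← gapStart_succ]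
  exact gapStart_strictMono.monotone h

theorem blockPos_lt_add_sum (i : Fin k) : blockPos b i < k + ∑ i, b i :=
  gapStart_self (b := b) ▸ blockPos_lt_gapStart i.2

theorem blockPos_pred (hk : k ≠ 0) : blockPos b (k - 1) + 1 = k + ∑ i, b i := by
  rw [← gapStart_succ, Nat.sub_add_cancel (Nat.one_le_iff_ne_zero.2 hk), gapStart_self]

theorem blockPos_not_mem_gap (i j : ℕ) : blockPos b j ∉ gap b i := by
  rw [mem_gap]
  rcases lt_or_ge j i with h | h
  · exact fun hj => (blockPos_lt_gapStart h).not_ge hj.1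
  · exact fun hj => (blockPos_strictMono.monotone h).not_gt hj.2

theorem eq_of_mem_gap {i j x : ℕ} (hi : x ∈ gap b i) (hj : x ∈ gap b j) : i = j := by
  rw [mem_gap] at hi hj
  by_contra hne
  rcases Nat.lt_or_gt_of_ne hne with h | h
  · exact (blockPos_lt_gapStart (b := b) h).not_ge (by omega)
  · exact (blockPos_lt_gapStart (b := b) h).not_ge (by omega)

theorem mem_gap_of_le_of_le {i a c x : ℕ} (ha : a ∈ gap b i) (hc : c ∈ gap b i) (hax : a ≤ x)
    (hxc : x ≤ c) : x ∈ gap b i := by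
  rw [mem_gap] at *; omega

theorem exists_eq_blockPos_or_mem_gap {x m : ℕ} (hx : x < gapStart b m) :
    ∃ i < m, x = blockPos b i ∨ x ∈ gap b i := by
  induction m with
  | zero => simp at hx
  | succ m ih =>
    by_cases hxm : x < gapStart b m
    · obtain ⟨i, hi, h⟩ := ih hxm
      exact ⟨i, by omega, h⟩
    · rw [gapStart_succ] at hx
      refine ⟨m, by omega, ?_⟩
      rw [mem_gap]; omega

theorem eq_of_blockPos_eq {b' : Fin k → ℕ} (h : ∀ i : Fin k, blockPos b i = blockPos b' i) :
    b = b' := by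
  funext ⟨m, hm⟩
  have hm' := h ⟨m, hm⟩
  rw [blockPos_coe, blockPos_coe] at hm'
  cases m with
  | zero => simpa using hm'
  | succ m =>
    have hm₀ := h ⟨m, by omega⟩
    simp only [gapStart_succ, hm₀] at hm'
    omega

theorem exists_blockPos_eq (e : Fin k → ℕ) (he : StrictMono e) :
    ∃ b : Fin k → ℕ, ∀ i : Fin k, blockPos b i = e i := by
  refine ⟨fun i => e i - if h : (i : ℕ) = 0 then 0 else e ⟨i - 1, by omega⟩ + 1, ?_⟩
  rintro ⟨m, hm⟩
  rw [blockPos_coe]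
  induction m with
  | zero => simp
  | succ m ih =>
    have hlt := he (show (⟨m, by omega⟩ : Fin k) < ⟨m + 1, hm⟩ from Nat.lt_succ_self m)
    have ih' := ih (by omega)
    rw [← blockPos_coe] at ih'
    simp only [gapStart_succ, ih', dif_neg m.succ_ne_zero, Nat.add_sub_cancel]
    omega

end Gaps

section Assemble

variable {k n : ℕ}

def blockList (σ : Perm (Fin k)) (b : Fin k → ℕ) : List ℕ := List.ofFn fun j => blockPos b (σ j)

def assemble (σ : Perm (Fin k)) (b : Fin k → ℕ) (T : ∀ i : Fin k, NCListPartition (gap b i)) :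
    Finset (List ℕ) :=
  insert (blockList σ b) (univ.biUnion fun i => (T i).1)

variable {σ : Perm (Fin k)} {b : Fin k → ℕ} {T : ∀ i : Fin k, NCListPartition (gap b i)}

theorem mem_blockList {x : ℕ} : x ∈ blockList σ b ↔ ∃ i : Fin k, blockPos b i = x := by
  simp only [blockList, List.mem_ofFn]
  exact (σ.surjective.exists (p := fun i : Fin k => blockPos b i = x)).symm

theorem length_blockList : (blockList σ b).length = k := List.length_ofFn

theorem nodup_blockList : (blockList σ b).Nodup :=
  List.nodup_ofFn.2 (blockPos_strictMono.injective.comp (Fin.val_injective.comp σ.injective))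

theorem not_mem_blockList_of_mem_gap {i x : ℕ} (hx : x ∈ gap b i) : x ∉ blockList σ b := by
  rw [mem_blockList]
  rintro ⟨j, rfl⟩
  exact blockPos_not_mem_gap i j hx

theorem sub_one_mem_blockList (hk : k ≠ 0) (hn : k + ∑ i, b i = n) : n - 1 ∈ blockList σ b :=
  mem_blockList.2 ⟨⟨k - 1, by omega⟩, show blockPos b (k - 1) = n - 1 by
    have := blockPos_pred (b := b) hk; omega⟩

theorem blockList_inj {σ' : Perm (Fin k)} {b' : Fin k → ℕ}
    (h : blockList σ b = blockList σ' b') : σ = σ' ∧ b = b' := by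
  have hmono (b : Fin k → ℕ) : StrictMono fun i : Fin k => blockPos b i :=
    blockPos_strictMono.comp Fin.val_strictMono
  obtain rfl : b = b' := by
    refine eq_of_blockPos_eq (congrFun (((hmono b).range_inj (hmono b')).1 ?_))
    ext x
    rw [Set.mem_range, Set.mem_range, ← mem_blockList (σ := σ), ← mem_blockList (σ := σ'), h]
  exact ⟨Equiv.ext fun j => (hmono b).injective (congrFun (List.ofFn_inj.1 h) j), rfl⟩

theorem exists_blockList_eq {L : List ℕ} (hL : L.Nodup) (hlt : ∀ x ∈ L, x < n)
    (hmem : n - 1 ∈ L) :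
    ∃ (σ : Perm (Fin L.length)) (b : Fin L.length → ℕ),
      L.length + ∑ i, b i = n ∧ blockList σ b = L := by
  have hcard : L.toFinset.card = L.length := List.toFinset_card_of_nodup hL
  set e := L.toFinset.orderEmbOfFin hcard
  have hk : L.length ≠ 0 := (List.length_pos_of_mem hmem).ne'
  obtain ⟨b, hb⟩ := exists_blockPos_eq e e.strictMono
  obtain ⟨σ, hσ⟩ := exists_perm_comp_eq (List.nodup_iff_injective_get.1 hL) e.injective
    (by ext; simp [e, List.mem_iff_get])
  have he_last : e ⟨L.length - 1, by omega⟩ = n - 1 := by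
    rw [orderEmbOfFin_last hcard (by omega)]
    refine le_antisymm (max'_le _ _ _ fun x hx => ?_) (le_max' _ _ (List.mem_toFinset.2 hmem))
    have := hlt x (List.mem_toFinset.1 hx)
    omega
  refine ⟨σ, b, ?_, ?_⟩
  · have hlast : blockPos b (L.length - 1) = e ⟨L.length - 1, by omega⟩ :=
      hb ⟨L.length - 1, by omega⟩
    rw [← blockPos_pred hk, hlast, he_last]
    have := hlt _ hmem
    omega
  · simp only [blockList, hb, hσ, List.ofFn_get]

theorem mem_assemble {l : List ℕ} :
    l ∈ assemble σ b T ↔ l = blockList σ b ∨ ∃ i, l ∈ (T i).1 := by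
  simp [assemble]

theorem assemble_noncrossing : ∀ l₁ ∈ assemble σ b T, ∀ l₂ ∈ assemble σ b T, l₁ ≠ l₂ →
    ∀ p ∈ l₁, ∀ r ∈ l₁, ∀ q ∈ l₂, ∀ s ∈ l₂, ¬(p < q ∧ q < r ∧ r < s) := by
  rintro l₁ h₁ l₂ h₂ hne p hp r hr q hq s hs ⟨hpq, hqr, hrs⟩
  rcases mem_assemble.1 h₁ with rfl | ⟨i, h₁⟩ <;> rcases mem_assemble.1 h₂ with rfl | ⟨j, h₂⟩
  · exact hne rfl
  · exact not_mem_blockList_of_mem_gap (mem_gap_of_le_of_le ((T j).2.mem_of_mem l₂ h₂ q hq)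
      ((T j).2.mem_of_mem l₂ h₂ s hs) hqr.le hrs.le) hr
  · exact not_mem_blockList_of_mem_gap (mem_gap_of_le_of_le ((T i).2.mem_of_mem l₁ h₁ p hp)
      ((T i).2.mem_of_mem l₁ h₁ r hr) hpq.le hqr.le) hq
  · have hqi := mem_gap_of_le_of_le ((T i).2.mem_of_mem l₁ h₁ p hp)
      ((T i).2.mem_of_mem l₁ h₁ r hr) hpq.le hqr.le
    obtain rfl := Fin.ext (eq_of_mem_gap hqi ((T j).2.mem_of_mem l₂ h₂ q hq))
    exact (T i).2.noncrossing l₁ h₁ l₂ h₂ hne p hp r hr q hq s hs ⟨hpq, hqr, hrs⟩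

theorem isNCListPartition_assemble (hk : k ≠ 0) (hn : k + ∑ i, b i = n) :
    IsNCListPartition (range n) (assemble σ b T) := by
  refine ⟨?_, ?_, ?_, ?_, ?_, assemble_noncrossing⟩
  · intro l hl
    rcases mem_assemble.1 hl with rfl | ⟨i, hl⟩
    · rw [← List.length_pos_iff, length_blockList]; omega
    · exact (T i).2.ne_nil l hl
  · intro l hl
    rcases mem_assemble.1 hl with rfl | ⟨i, hl⟩
    · exact nodup_blockList
    · exact (T i).2.nodup l hl
  · intro l hl x hx
    rw [mem_range, ← hn]
    rcases mem_assemble.1 hl with rfl | ⟨i, hl⟩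
    · obtain ⟨i, rfl⟩ := mem_blockList.1 hx
      exact blockPos_lt_add_sum i
    · exact (mem_gap.1 ((T i).2.mem_of_mem l hl x hx)).2.trans (blockPos_lt_add_sum i)
  · intro x hx
    rw [mem_range, ← hn, ← gapStart_self] at hx
    obtain ⟨i, hi, rfl | hx⟩ := exists_eq_blockPos_or_mem_gap hx
    · exact ⟨_, mem_insert_self _ _, mem_blockList.2 ⟨⟨i, hi⟩, rfl⟩⟩
    · obtain ⟨l, hl, hxl⟩ := (T ⟨i, hi⟩).2.exists_mem x hx
      exact ⟨l, mem_assemble.2 (Or.inr ⟨_, hl⟩), hxl⟩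
  · rintro l₁ h₁ l₂ h₂ hne x hx y hy rfl
    have hgap {i : Fin k} {l : List ℕ} (hl : l ∈ (T i).1) {z : ℕ} (hz : z ∈ l) : z ∈ gap b i :=
      (T i).2.mem_of_mem l hl z hz
    rcases mem_assemble.1 h₁ with rfl | ⟨i, h₁⟩ <;> rcases mem_assemble.1 h₂ with rfl | ⟨j, h₂⟩
    · exact hne rfl
    · exact not_mem_blockList_of_mem_gap (hgap h₂ hy) hx
    · exact not_mem_blockList_of_mem_gap (hgap h₁ hx) hy
    · obtain rfl := Fin.ext (eq_of_mem_gap (hgap h₁ hx) (hgap h₂ hy))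
      exact (T i).2.disjoint l₁ h₁ l₂ h₂ hne x hx x hy rfl

theorem filter_assemble (i : Fin k) :
    (assemble σ b T).filter (fun l => ∀ x ∈ l, x ∈ gap b i) = (T i).1 := by
  ext l
  simp only [mem_filter, mem_assemble]
  constructor
  · rintro ⟨rfl | ⟨j, hl⟩, hsub⟩
    · exact absurd (hsub _ (mem_blockList.2 ⟨i, rfl⟩)) (blockPos_not_mem_gap i i)
    · obtain ⟨x, hx⟩ := List.exists_mem_of_ne_nil l ((T j).2.ne_nil l hl)
      obtain rfl := Fin.ext (eq_of_mem_gap ((T j).2.mem_of_mem l hl x hx) (hsub x hx))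
      exact hl
  · exact fun hl => ⟨Or.inr ⟨i, hl⟩, (T i).2.mem_of_mem l hl⟩

theorem gap_subset_range (hn : k + ∑ i, b i = n) (i : Fin k) : gap b i ⊆ range n := fun _ hx =>
  mem_range.2 (hn ▸ (mem_gap.1 hx).2.trans (blockPos_lt_add_sum i))

theorem exists_forall_mem_gap {S : Finset (List ℕ)} (hS : IsNCListPartition (range n) S)
    (hk : k ≠ 0) (hn : k + ∑ i, b i = n) (hL : blockList σ b ∈ S) {l : List ℕ} (hl : l ∈ S)
    (hne : l ≠ blockList σ b) : ∃ i : Fin k, ∀ x ∈ l, x ∈ gap b i := by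
  have hgap : ∀ x ∈ l, ∃ i : Fin k, x ∈ gap b i := by
    intro x hx
    have hxn := mem_range.1 (hS.mem_of_mem l hl x hx)
    rw [← hn, ← gapStart_self] at hxn
    obtain ⟨i, hi, rfl | hxi⟩ := exists_eq_blockPos_or_mem_gap hxn
    · exact absurd rfl (hS.disjoint l hl _ hL hne _ hx _ (mem_blockList.2 ⟨⟨i, hi⟩, rfl⟩))
    · exact ⟨⟨i, hi⟩, hxi⟩
  -- `x < blockPos b i < y < n - 1` is a crossing with the block list.
  have hcross : ∀ x ∈ l, ∀ y ∈ l, ∀ i j : Fin k, x ∈ gap b i → y ∈ gap b j → ¬ i < j := by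
    intro x hx y hy i j hxi hyj hij
    have hj : blockPos b j ≤ blockPos b (k - 1) := blockPos_strictMono.monotone (by omega)
    have := blockPos_pred (b := b) hk
    have := blockPos_lt_gapStart (b := b) (Fin.lt_def.1 hij)
    rw [mem_gap] at hxi hyj
    exact hS.noncrossing l hl _ hL hne x hx y hy _ (mem_blockList.2 ⟨i, rfl⟩) _
      (sub_one_mem_blockList hk hn) ⟨hxi.2, by omega, by omega⟩
  obtain ⟨x₀, hx₀⟩ := List.exists_mem_of_ne_nil l (hS.ne_nil l hl)
  obtain ⟨i₀, hi₀⟩ := hgap x₀ hx₀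
  refine ⟨i₀, fun x hx => ?_⟩
  obtain ⟨i, hi⟩ := hgap x hx
  obtain rfl : i = i₀ := le_antisymm (not_lt.1 (hcross x₀ hx₀ x hx i₀ i hi₀ hi))
    (not_lt.1 (hcross x hx x₀ hx₀ i i₀ hi hi₀))
  exact hi

theorem exists_assemble_eq {S : Finset (List ℕ)} (hS : IsNCListPartition (range n) S)
    (hn : n ≠ 0) :
    ∃ (k : ℕ) (σ : Perm (Fin k)) (b : Fin k → ℕ) (T : ∀ i : Fin k, NCListPartition (gap b i)),
      k ≠ 0 ∧ k + ∑ i, b i = n ∧ assemble σ b T = S := by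
  obtain ⟨L, hLS, hL⟩ := hS.exists_mem (n - 1) (mem_range.2 (by omega))
  obtain ⟨σ, b, hb, hσ⟩ := exists_blockList_eq (hS.nodup L hLS)
    (fun x hx => mem_range.1 (hS.mem_of_mem L hLS x hx)) hL
  have hk : L.length ≠ 0 := (List.length_pos_of_mem hL).ne'
  rw [← hσ] at hLS
  have hgap := fun l hl hne => exists_forall_mem_gap hS hk hb hLS (l := l) hl hne
  let T (i : Fin L.length) : NCListPartition (gap b i) :=
    ⟨_, hS.filter (gap_subset_range hb i) fun l hl x hx hxi => by
      obtain ⟨j, hj⟩ := hgap l hl (by rintro rfl; exact not_mem_blockList_of_mem_gap hxi hx)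
      rwa [Fin.ext (eq_of_mem_gap (hj x hx) hxi)] at hj⟩
  refine ⟨_, σ, b, T, hk, hb, ?_⟩
  ext l
  rw [mem_assemble]
  constructor
  · rintro (rfl | ⟨i, hl⟩)
    exacts [hLS, (mem_filter.1 hl).1]
  · intro hl
    by_cases hne : l = blockList σ b
    · exact Or.inl hne
    · obtain ⟨i, hi⟩ := hgap l hl hne
      exact Or.inr ⟨i, mem_filter.2 ⟨hl, hi⟩⟩

end Assemble

theorem card_gap {k : ℕ} (b : Fin k → ℕ) (i : Fin k) :
    Nat.card (NCListPartition (gap b i)) = u (b i) := by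
  have : gap b i = (range (b i)).map (OrderEmbedding.addLeft (gapStart b i)).toEmbedding := by
    rw [range_eq_Ico, show (OrderEmbedding.addLeft _).toEmbedding = addLeftEmbedding _ from rfl,
      map_add_left_Ico, gap, blockPos_coe, add_zero]
  rw [this, card_map, u_eq_card_range]

/-- `⟨k, σ, b, T⟩`: the list through `n - 1` has length `k` and order `σ` on its sorted elements,
its gaps have sizes `b`, and `T` partitions the gaps. -/
def Decomposition (n : ℕ) : Type :=
  Σ k : Icc 1 n, Perm (Fin k) ×
    Σ b : Nat.antidiagonalTuple k (n - k), ∀ i : Fin k, NCListPartition (gap b.1 i)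

namespace Decomposition

variable {n : ℕ}

theorem card : Nat.card (Decomposition n) =
    ∑ k ∈ Icc 1 n, k.factorial * ∑ b ∈ Nat.antidiagonalTuple k (n - k), ∏ i, u (b i) := by
  rw [Decomposition, Nat.card_sigma, ← sum_coe_sort (Icc 1 n)]
  refine sum_congr rfl fun k _ => ?_
  rw [Nat.card_prod, Nat.card_perm, Nat.card_fin, Nat.card_sigma]
  simp only [Nat.card_pi, card_gap]
  rw [sum_coe_sort (Nat.antidiagonalTuple k (n - k)) fun b => ∏ i, u (b i)]

theorem add_sum_eq (k : Icc 1 n) (b : Nat.antidiagonalTuple k (n - k)) :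
    (k : ℕ) + ∑ i, b.1 i = n := by
  rw [Nat.mem_antidiagonalTuple.1 b.2]
  have := (mem_Icc.1 k.2).2
  omega

def toNCListPartition : Decomposition n → NCListPartition (range n)
  | ⟨k, σ, b, T⟩ =>
    ⟨assemble σ b.1 T, isNCListPartition_assemble (Nat.one_le_iff_ne_zero.1 (mem_Icc.1 k.2).1)
      (add_sum_eq k b)⟩

theorem toNCListPartition_injective : Function.Injective (toNCListPartition (n := n)) := by
  rintro ⟨k₁, σ₁, b₁, T₁⟩ ⟨k₂, σ₂, b₂, T₂⟩ h
  have hS : assemble σ₁ b₁.1 T₁ = assemble σ₂ b₂.1 T₂ := congrArg Subtype.val h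
  have hk₁ : (k₁ : ℕ) ≠ 0 := Nat.one_le_iff_ne_zero.1 (mem_Icc.1 k₁.2).1
  have hk₂ : (k₂ : ℕ) ≠ 0 := Nat.one_le_iff_ne_zero.1 (mem_Icc.1 k₂.2).1
  have hL : blockList σ₁ b₁.1 = blockList σ₂ b₂.1 :=
    (isNCListPartition_assemble hk₁ (add_sum_eq k₁ b₁)).eq_of_mem (mem_insert_self _ _)
      (by rw [hS]; exact mem_insert_self _ _) (sub_one_mem_blockList hk₁ (add_sum_eq k₁ b₁))
      (sub_one_mem_blockList hk₂ (add_sum_eq k₂ b₂))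
  obtain rfl : k₁ = k₂ := Subtype.ext (by simpa [length_blockList] using congrArg List.length hL)
  obtain ⟨rfl, hb⟩ := blockList_inj hL
  obtain rfl : b₁ = b₂ := Subtype.ext hb
  obtain rfl : T₁ = T₂ := funext fun i => Subtype.ext <| by
    rw [← filter_assemble (σ := σ₁) (T := T₁), hS, filter_assemble]
  rfl

theorem toNCListPartition_surjective (hn : n ≠ 0) :
    Function.Surjective (toNCListPartition (n := n)) := by
  rintro ⟨S, hS⟩
  obtain ⟨k, σ, b, T, hk, hkb, rfl⟩ := exists_assemble_eq hS hn
  exact ⟨⟨⟨k, mem_Icc.2 ⟨by omega, by omega⟩⟩, σ,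
    ⟨b, Nat.mem_antidiagonalTuple.2 (show ∑ i, b i = n - k by omega)⟩, T⟩, rfl⟩

end Decomposition

end NCListPartition

/-- Recurrence: `u n = ∑_{k=1}^{n} k! ∑ u(b₁)⋯u(b_k)`, the inner sum over all weak
compositions `(b₁,…,b_k)` of `n - k` into `k` nonnegative parts. -/
theorem u_recurrence (n : ℕ) (hn : 1 ≤ n) :
    u n = ∑ k ∈ Finset.Icc 1 n, k.factorial *
      ∑ b ∈ Finset.Nat.antidiagonalTuple k (n - k), ∏ i, u (b i) := by
  rw [u_eq_card_range, ← NCListPartition.Decomposition.card, Nat.card_eq_of_bijective _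
    ⟨NCListPartition.Decomposition.toNCListPartition_injective,
      NCListPartition.Decomposition.toNCListPartition_surjective (Nat.one_le_iff_ne_zero.1 hn)⟩]
end

section
/- Let u(n) count partitions of [n] into sets of noncrossing lists, with u(0)=1, and let U(x) = sum_{n≥0} u(n) x^n as a formal power series. Then U satisfies the functional equation U(x) = sum_{k≥0} k! * (x U(x))^k. -/
open Finset Function

/-- The negation of the third condition in `SetOfNCLists`, so that `S.2.2.2 : ¬ Crossing S.1`. -/
def Crossing {α : Type*} [LT α] (S : Finset (List α)) : Prop :=
  ∃ a b c d : α, a < b ∧ b < c ∧ c < d ∧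
    ∃ l₁ ∈ S, ∃ l₂ ∈ S, l₁ ≠ l₂ ∧ a ∈ l₁ ∧ c ∈ l₁ ∧ b ∈ l₂ ∧ d ∈ l₂

lemma Crossing.mono {α : Type*} [LT α] {S T : Finset (List α)} (hST : S ⊆ T) :
    Crossing S → Crossing T := by
  rintro ⟨a, b, c, d, hab, hbc, hcd, l₁, h₁, l₂, h₂, hne, ha, hc, hb, hd⟩
  exact ⟨a, b, c, d, hab, hbc, hcd, l₁, hST h₁, l₂, hST h₂, hne, ha, hc, hb, hd⟩

lemma crossing_image_map_iff {α β : Type*} [LinearOrder α] [Preorder β] [DecidableEq β]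
    {e : α → β} (he : StrictMono e) {S : Finset (List α)} :
    Crossing (S.image (List.map e)) ↔ Crossing S := by
  constructor
  · rintro ⟨a', b', c', d', hab, hbc, hcd, l₁', hl₁, l₂', hl₂, hne, ha, hc, hb, hd⟩
    obtain ⟨l₁, h₁, rfl⟩ := Finset.mem_image.1 hl₁
    obtain ⟨l₂, h₂, rfl⟩ := Finset.mem_image.1 hl₂
    obtain ⟨a, ha₁, rfl⟩ := List.mem_map.1 ha
    obtain ⟨b, hb₂, rfl⟩ := List.mem_map.1 hb
    obtain ⟨c, hc₁, rfl⟩ := List.mem_map.1 hc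
    obtain ⟨d, hd₂, rfl⟩ := List.mem_map.1 hd
    exact ⟨a, b, c, d, he.lt_iff_lt.1 hab, he.lt_iff_lt.1 hbc, he.lt_iff_lt.1 hcd,
      l₁, h₁, l₂, h₂, fun h => hne (h ▸ rfl), ha₁, hc₁, hb₂, hd₂⟩
  · rintro ⟨a, b, c, d, hab, hbc, hcd, l₁, h₁, l₂, h₂, hne, ha, hc, hb, hd⟩
    exact ⟨e a, e b, e c, e d, he hab, he hbc, he hcd, _, Finset.mem_image_of_mem _ h₁,
      _, Finset.mem_image_of_mem _ h₂, (List.map_injective_iff.2 he.injective).ne hne,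
      List.mem_map_of_mem ha, List.mem_map_of_mem hc, List.mem_map_of_mem hb,
      List.mem_map_of_mem hd⟩

section PartialInv

variable {α β : Type*} {e : α → β}

lemma List.filterMap_partialInv_map (he : Injective e) (L : List α) :
    (L.map e).filterMap (partialInv e) = L := by
  rw [List.filterMap_map, show partialInv e ∘ e = some from funext (partialInv_left he),
    List.filterMap_some]

lemma List.map_filterMap_partialInv (he : Injective e) {L : List β}
    (hL : ∀ x ∈ L, x ∈ Set.range e) : (L.filterMap (partialInv e)).map e = L := by
  induction L with
  | nil => rfl
  | cons x L ih =>
    obtain ⟨y, rfl⟩ := hL x List.mem_cons_self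
    rw [List.filterMap_cons, partialInv_left he, List.map_cons,
      ih fun z hz => hL z (List.mem_cons_of_mem _ hz)]

end PartialInv

lemma exists_perm_eq_ofFn {α : Type*} {k : ℕ} {b : Fin k → α} (hb : Injective b) {L : List α}
    (hL : L.Nodup) (hmem : ∀ x, x ∈ L ↔ x ∈ Set.range b) :
    ∃ σ : Equiv.Perm (Fin k), L = List.ofFn (b ∘ σ) := by
  have hlen : L.length = k := by
    classical
    rw [← List.toFinset_card_of_nodup hL, ← Fintype.card_fin k, ← Finset.card_univ,
      ← Finset.card_image_of_injective _ hb]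
    congr 1
    ext x
    simp [hmem]
  have hex (j : Fin k) : ∃ i, b i = L[j.1] := (hmem _).1 (List.getElem_mem _)
  choose g hg using hex
  have hg_inj : Injective g := fun i j h => Fin.ext <| (hL.getElem_inj_iff).1 <| by
    rw [← hg, ← hg, h]
  refine ⟨Equiv.ofBijective g (Finite.injective_iff_bijective.1 hg_inj), ?_⟩
  refine List.ext_getElem (by simp [hlen]) fun j h₁ h₂ => ?_
  simp [hg ⟨j, hlen ▸ h₁⟩]

section BlockPositions

/-- The position of the `i`-th element of the list through `0` when the gaps after its
elements have sizes `l 0, l 1, …`. -/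
def blockPos (l : ℕ → ℕ) (i : ℕ) : ℕ := i + ∑ j ∈ range i, l j

def InGap (l : ℕ → ℕ) (i x : ℕ) : Prop := blockPos l i < x ∧ x < blockPos l (i + 1)

instance (l : ℕ → ℕ) (i x : ℕ) : Decidable (InGap l i x) := inferInstanceAs (Decidable (_ ∧ _))

variable {l : ℕ → ℕ}

@[simp] lemma blockPos_zero : blockPos l 0 = 0 := by simp [blockPos]

lemma blockPos_succ (i : ℕ) : blockPos l (i + 1) = blockPos l i + l i + 1 := by
  simp only [blockPos, sum_range_succ]; ring

lemma blockPos_strictMono : StrictMono (blockPos l) :=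
  strictMono_nat_of_lt_succ fun i => by rw [blockPos_succ]; omega

lemma InGap.eq {i j x : ℕ} (hi : InGap l i x) (hj : InGap l j x) : i = j := by
  have := blockPos_strictMono.lt_iff_lt.1 (hi.1.trans hj.2)
  have := blockPos_strictMono.lt_iff_lt.1 (hj.1.trans hi.2)
  omega

lemma InGap.of_lt_of_lt {i a b c : ℕ} (ha : InGap l i a) (hc : InGap l i c) (hab : a < b)
    (hbc : b < c) : InGap l i b :=
  ⟨ha.1.trans hab, hbc.trans hc.2⟩

lemma not_inGap_blockPos (i j : ℕ) : ¬ InGap l i (blockPos l j) := fun h => by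
  have := blockPos_strictMono.lt_iff_lt.1 h.1
  have := blockPos_strictMono.lt_iff_lt.1 h.2
  omega

lemma exists_blockPos_eq_or_inGap {k x : ℕ} (hx : x < blockPos l k) :
    ∃ i < k, blockPos l i = x ∨ InGap l i x := by
  induction k with
  | zero => simp at hx
  | succ k ih =>
    rcases lt_or_ge x (blockPos l k) with h | h
    · obtain ⟨i, hi, hix⟩ := ih h
      exact ⟨i, by omega, hix⟩
    · exact ⟨k, by omega, h.eq_or_lt'.imp Eq.symm fun h' => ⟨h', hx⟩⟩

lemma pos_of_blockPos_eq {k n : ℕ} (hl : blockPos l k = n) (hn : 0 < n) : 0 < k :=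
  Nat.pos_of_ne_zero fun hk => by subst hk; simp at hl; omega

lemma blockPos_eq_of_mem_finsuppAntidiag {k n : ℕ} {l : ℕ →₀ ℕ} (hk : k ≤ n)
    (hl : l ∈ finsuppAntidiag (range k) (n - k)) : blockPos l k = n := by
  rw [blockPos, (mem_finsuppAntidiag.1 hl).1]; omega

lemma eq_of_blockPos_eq {k m : ℕ} {l₁ l₂ : ℕ →₀ ℕ} (hl₁ : l₁ ∈ finsuppAntidiag (range k) m)
    (hl₂ : l₂ ∈ finsuppAntidiag (range k) m) (h : ∀ i ≤ k, blockPos l₁ i = blockPos l₂ i) :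
    l₁ = l₂ := by
  ext i
  rcases lt_or_ge i k with hi | hi
  · have := h (i + 1) hi
    rw [blockPos_succ, blockPos_succ, h i hi.le] at this
    omega
  · have (l : ℕ →₀ ℕ) (hl : l ∈ finsuppAntidiag (range k) m) : l i = 0 :=
      Finsupp.notMem_support_iff.1 fun hi' => by
        have := (mem_finsuppAntidiag.1 hl).2 hi'; simp at this; omega
    rw [this l₁ hl₁, this l₂ hl₂]

lemma exists_mem_finsuppAntidiag_blockPos_eq {k : ℕ} (g : ℕ → ℕ) (hg₀ : g 0 = 0)
    (hg : ∀ i < k, g i < g (i + 1)) :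
    ∃ l ∈ finsuppAntidiag (range k) (g k - k), ∀ i ≤ k, blockPos l i = g i := by
  set l : ℕ →₀ ℕ := Finsupp.onFinset (range k) (fun i => if i < k then g (i + 1) - g i - 1 else 0)
    (fun i hi => by by_contra h; simp_all) with hl
  have hpos : ∀ i ≤ k, blockPos l i = g i := by
    intro i
    induction i with
    | zero => simp [hg₀]
    | succ i ih =>
      intro hi
      have := hg i hi
      rw [blockPos_succ, ih (by omega)]
      simp only [hl, Finsupp.onFinset_apply, if_pos (show i < k by omega)]
      omega
  refine ⟨l, mem_finsuppAntidiag.2 ⟨?_, Finsupp.support_onFinset_subset⟩, hpos⟩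
  exact Nat.eq_sub_of_add_eq' (hpos k le_rfl)

end BlockPositions

namespace SetOfNCLists

section Assembly

variable {n k : ℕ} {l : ℕ → ℕ} (hl : blockPos l k = n)

def blockEmb (i : Fin k) : Fin n := ⟨blockPos l i, hl ▸ blockPos_strictMono i.2⟩

def gapEmb (i : Fin k) (y : Fin (l i)) : Fin n :=
  ⟨blockPos l i + 1 + y, by
    have := blockPos_succ (l := l) i
    have := (blockPos_strictMono (l := l)).monotone (show i.1 + 1 ≤ k from i.2)
    omega⟩

lemma blockEmb_strictMono : StrictMono (blockEmb hl) := fun _ _ h => blockPos_strictMono h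

lemma gapEmb_strictMono (i : Fin k) : StrictMono (gapEmb hl i) := fun y z h => by
  simp only [gapEmb, Fin.mk_lt_mk]; omega

lemma inGap_gapEmb (i : Fin k) (y : Fin (l i)) : InGap l i (gapEmb hl i y) := by
  have := blockPos_succ (l := l) i
  exact ⟨by simp only [gapEmb]; omega, by simp only [gapEmb]; omega⟩

lemma exists_gapEmb_eq {i : Fin k} {x : Fin n} (hx : InGap l i x) :
    ∃ y, gapEmb hl i y = x := by
  obtain ⟨h₁, h₂⟩ := hx
  rw [blockPos_succ] at h₂
  exact ⟨⟨x - blockPos l i - 1, by omega⟩, Fin.ext <| by simp only [gapEmb]; omega⟩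

lemma exists_blockEmb_eq_or_inGap (x : Fin n) :
    ∃ i : Fin k, blockEmb hl i = x ∨ InGap l i x := by
  obtain ⟨i, hi, hix⟩ := exists_blockPos_eq_or_inGap (k := k) (x := x) (by rw [hl]; exact x.2)
  exact ⟨⟨i, hi⟩, hix.imp_left Fin.ext⟩

lemma not_inGap_blockEmb (i : ℕ) (j : Fin k) : ¬ InGap l i (blockEmb hl j) :=
  not_inGap_blockPos i j

def blockList (σ : Equiv.Perm (Fin k)) : List (Fin n) := List.ofFn (blockEmb hl ∘ σ)

def gapLists (P : ∀ i : Fin k, SetOfNCLists (l i)) (i : Fin k) : Finset (List (Fin n)) :=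
  (P i).1.image (List.map (gapEmb hl i))

def assembleSet (σ : Equiv.Perm (Fin k)) (P : ∀ i : Fin k, SetOfNCLists (l i)) :
    Finset (List (Fin n)) :=
  insert (blockList hl σ) (univ.biUnion (gapLists hl P))

variable {hl} {σ : Equiv.Perm (Fin k)} {P : ∀ i : Fin k, SetOfNCLists (l i)}

lemma mem_blockList {x : Fin n} : x ∈ blockList hl σ ↔ ∃ i, blockEmb hl i = x := by
  simp only [blockList, List.mem_ofFn, comp_apply]
  exact ⟨fun ⟨j, hj⟩ => ⟨σ j, hj⟩, fun ⟨i, hi⟩ => ⟨σ.symm i, by simpa using hi⟩⟩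

lemma blockList_nodup : (blockList hl σ).Nodup :=
  List.nodup_ofFn.2 ((blockEmb_strictMono hl).injective.comp σ.injective)

lemma inGap_of_mem_gapLists {i : Fin k} {L : List (Fin n)} (hL : L ∈ gapLists hl P i)
    {x : Fin n} (hx : x ∈ L) : InGap l i x := by
  obtain ⟨M, -, rfl⟩ := Finset.mem_image.1 hL
  obtain ⟨y, -, rfl⟩ := List.mem_map.1 hx
  exact inGap_gapEmb hl i y

lemma mem_assembleSet {L : List (Fin n)} :
    L ∈ assembleSet hl σ P ↔ L = blockList hl σ ∨ ∃ i, L ∈ gapLists hl P i := by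
  simp [assembleSet]

lemma nonempty_nodup_of_mem_assembleSet (hk : 0 < k) {L : List (Fin n)}
    (hL : L ∈ assembleSet hl σ P) : L ≠ [] ∧ L.Nodup := by
  rcases mem_assembleSet.1 hL with rfl | ⟨i, hi⟩
  · exact ⟨by simp [blockList]; omega, blockList_nodup⟩
  · obtain ⟨M, hM, rfl⟩ := Finset.mem_image.1 hi
    obtain ⟨hM₁, hM₂⟩ := (P i).2.1 M hM
    exact ⟨by simpa using hM₁, hM₂.map (gapEmb_strictMono hl i).injective⟩

lemma existsUnique_mem_assembleSet (x : Fin n) :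
    ∃! L, L ∈ assembleSet hl σ P ∧ x ∈ L := by
  obtain ⟨i, rfl | hx⟩ := exists_blockEmb_eq_or_inGap hl x
  · refine ⟨blockList hl σ, ⟨mem_assembleSet.2 (.inl rfl), mem_blockList.2 ⟨i, rfl⟩⟩, ?_⟩
    rintro L ⟨hL, hxL⟩
    rcases mem_assembleSet.1 hL with rfl | ⟨j, hj⟩
    · rfl
    · exact absurd (inGap_of_mem_gapLists hj hxL) (not_inGap_blockEmb hl j i)
  · obtain ⟨y, rfl⟩ := exists_gapEmb_eq hl hx
    obtain ⟨M, ⟨hM, hyM⟩, hM_unique⟩ := (P i).2.2.1 y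
    refine ⟨M.map (gapEmb hl i), ⟨mem_assembleSet.2 (.inr ⟨i, mem_image_of_mem _ hM⟩),
      List.mem_map_of_mem hyM⟩, ?_⟩
    rintro L ⟨hL, hxL⟩
    rcases mem_assembleSet.1 hL with rfl | ⟨j, hj⟩
    · obtain ⟨j, hj⟩ := mem_blockList.1 hxL
      exact absurd (hj ▸ hx) (not_inGap_blockEmb hl i j)
    · obtain rfl : j = i := Fin.ext ((inGap_of_mem_gapLists hj hxL).eq hx)
      obtain ⟨M', hM', rfl⟩ := Finset.mem_image.1 hj
      obtain ⟨y', hy', hyy'⟩ := List.mem_map.1 hxL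
      obtain rfl := (gapEmb_strictMono hl j).injective hyy'
      rw [hM_unique M' ⟨hM', hy'⟩]

lemma not_crossing_assembleSet : ¬ Crossing (assembleSet hl σ P) := by
  rintro ⟨a, b, c, d, hab, hbc, hcd, L₁, hL₁, L₂, hL₂, hne, ha, hc, hb, hd⟩
  rcases mem_assembleSet.1 hL₁ with rfl | ⟨i, hi⟩ <;>
    rcases mem_assembleSet.1 hL₂ with rfl | ⟨j, hj⟩
  · exact hne rfl
  · obtain ⟨i, rfl⟩ := mem_blockList.1 hc
    have hb := inGap_of_mem_gapLists hj hb
    have hd := inGap_of_mem_gapLists hj hd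
    exact not_inGap_blockEmb hl j i (hb.of_lt_of_lt hd hbc hcd)
  · obtain ⟨j, rfl⟩ := mem_blockList.1 hb
    have ha := inGap_of_mem_gapLists hi ha
    have hc := inGap_of_mem_gapLists hi hc
    exact not_inGap_blockEmb hl i j (ha.of_lt_of_lt hc hab hbc)
  · have hb_gap := (inGap_of_mem_gapLists hi ha).of_lt_of_lt (inGap_of_mem_gapLists hi hc) hab hbc
    obtain rfl : j = i := Fin.ext ((inGap_of_mem_gapLists hj hb).eq hb_gap)
    exact (P j).2.2.2 <| (crossing_image_map_iff (gapEmb_strictMono hl j)).1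
      ⟨a, b, c, d, hab, hbc, hcd, L₁, hi, L₂, hj, hne, ha, hc, hb, hd⟩

lemma filter_inGap_assembleSet (i : Fin k) :
    (assembleSet hl σ P).filter (fun L => ∀ x ∈ L, InGap l i (x : Fin n)) = gapLists hl P i := by
  ext L
  simp only [mem_filter, mem_assembleSet]
  constructor
  · rintro ⟨rfl | ⟨j, hj⟩, hL⟩
    · exact absurd (hL _ (mem_blockList.2 ⟨i, rfl⟩)) (not_inGap_blockEmb hl i i)
    · obtain ⟨M, hM, rfl⟩ := Finset.mem_image.1 hj
      obtain ⟨y, hy⟩ := List.exists_mem_of_ne_nil M ((P j).2.1 M hM).1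
      have hy := List.mem_map_of_mem (f := gapEmb hl j) hy
      obtain rfl : j = i := Fin.ext ((inGap_of_mem_gapLists hj hy).eq (hL _ hy))
      exact hj
  · exact fun hL => ⟨.inr ⟨i, hL⟩, fun x => inGap_of_mem_gapLists hL⟩

end Assembly

lemma exists_image_map_eq {m n : ℕ} {e : Fin m → Fin n} (he : StrictMono e)
    {T : Finset (List (Fin n))} (hT₁ : ∀ L ∈ T, L ≠ [] ∧ L.Nodup)
    (hT₂ : ∀ y, ∃! L, L ∈ T ∧ e y ∈ L) (hT₃ : ¬ Crossing T)
    (hT_range : ∀ L ∈ T, ∀ x ∈ L, x ∈ Set.range e) :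
    ∃ M : SetOfNCLists m, M.1.image (List.map e) = T := by
  have hT_map (L) (hL : L ∈ T) : (L.filterMap (partialInv e)).map e = L :=
    List.map_filterMap_partialInv he.injective (hT_range L hL)
  set M := T.image (List.filterMap (partialInv e))
  have hM (K : List (Fin m)) : K ∈ M ↔ K.map e ∈ T := by
    refine ⟨fun hK => ?_, fun hK =>
      mem_image.2 ⟨_, hK, List.filterMap_partialInv_map he.injective K⟩⟩
    obtain ⟨L, hL, rfl⟩ := mem_image.1 hK
    rwa [hT_map L hL]
  have hmap_inj := List.map_injective_iff.2 he.injective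
  have himage : M.image (List.map e) = T := by
    ext L
    refine ⟨fun hL => ?_, fun hL => mem_image.2 ⟨_, mem_image_of_mem _ hL, hT_map L hL⟩⟩
    obtain ⟨K, hK, rfl⟩ := mem_image.1 hL
    exact (hM K).1 hK
  refine ⟨⟨M, fun K hK => ?_, fun y => ?_, fun hM₃ => hT₃ ?_⟩, himage⟩
  · obtain ⟨hne, hnodup⟩ := hT₁ _ ((hM K).1 hK)
    exact ⟨by simpa using hne, hnodup.of_map e⟩
  · obtain ⟨L, ⟨hL, hyL⟩, hL_unique⟩ := hT₂ y
    set K := L.filterMap (partialInv e)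
    have hKL : K.map e = L := hT_map L hL
    refine ⟨K, ⟨(hM K).2 (hKL ▸ hL), (List.mem_map_of_injective he.injective).1 (hKL ▸ hyL)⟩,
      fun K' ⟨hK', hyK'⟩ => hmap_inj ?_⟩
    rw [hKL]
    exact hL_unique _ ⟨(hM K').1 hK', List.mem_map_of_mem hyK'⟩
  · exact himage ▸ (crossing_image_map_iff he).2 hM₃

section Decompose

variable {n k : ℕ} {l : ℕ → ℕ} (hl : blockPos l k = n) (S : SetOfNCLists n)
  {L₀ : List (Fin n)} (hL₀ : L₀ ∈ S.1) (hmem₀ : ∀ x, x ∈ L₀ ↔ x ∈ Set.range (blockEmb hl))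
include hL₀ hmem₀

lemma exists_inGap_of_mem {L : List (Fin n)} (hL : L ∈ S.1) (hne : L ≠ L₀) {x : Fin n}
    (hx : x ∈ L) : ∃ i : Fin k, InGap l i x := by
  obtain ⟨i, hi | hi⟩ := exists_blockEmb_eq_or_inGap hl x
  · exact absurd ((S.2.2.1 x).unique ⟨hL, hx⟩ ⟨hL₀, (hmem₀ x).2 ⟨i, hi⟩⟩) hne
  · exact ⟨i, hi⟩

lemma not_inGap_of_lt {L : List (Fin n)} (hL : L ∈ S.1) (hne : L ≠ L₀) {x z : Fin n}
    (hx : x ∈ L) (hz : z ∈ L) {i j : Fin k} (hji : j < i) (hx_gap : InGap l i x) :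
    ¬ InGap l j z := fun hz_gap => by
  have := (blockPos_strictMono (l := l)).monotone (show j.1 + 1 ≤ i from hji)
  refine S.2.2.2 ⟨blockEmb hl j, z, blockEmb hl i, x, hz_gap.1, ?_, hx_gap.1, L₀, hL₀, L, hL,
    hne.symm, (hmem₀ _).2 ⟨j, rfl⟩, (hmem₀ _).2 ⟨i, rfl⟩, hz, hx⟩
  exact Fin.lt_def.2 (hz_gap.2.trans_le this)

lemma exists_forall_inGap {L : List (Fin n)} (hL : L ∈ S.1) (hne : L ≠ L₀) :
    ∃ i : Fin k, ∀ z ∈ L, InGap l i z := by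
  obtain ⟨x, hx⟩ := List.exists_mem_of_ne_nil L (S.2.1 L hL).1
  obtain ⟨i, hi⟩ := exists_inGap_of_mem hl S hL₀ hmem₀ hL hne hx
  refine ⟨i, fun z hz => ?_⟩
  obtain ⟨j, hj⟩ := exists_inGap_of_mem hl S hL₀ hmem₀ hL hne hz
  rcases lt_trichotomy j i with hji | rfl | hij
  · exact absurd hj (not_inGap_of_lt hl S hL₀ hmem₀ hL hne hx hz hji hi)
  · exact hj
  · exact absurd hi (not_inGap_of_lt hl S hL₀ hmem₀ hL hne hz hx hij hj)

lemma exists_image_map_gapEmb_eq (i : Fin k) : ∃ M : SetOfNCLists (l i),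
    M.1.image (List.map (gapEmb hl i)) = S.1.filter (fun L => ∀ x ∈ L, InGap l i (x : Fin n)) := by
  refine exists_image_map_eq (gapEmb_strictMono hl i) (fun L hL => S.2.1 L (mem_filter.1 hL).1)
    (fun y => ?_) (fun h => S.2.2.2 (h.mono (filter_subset _ _)))
    (fun L hL x hx => exists_gapEmb_eq hl ((mem_filter.1 hL).2 x hx))
  obtain ⟨L, ⟨hL, hyL⟩, hL_unique⟩ := S.2.2.1 (gapEmb hl i y)
  have hne : L ≠ L₀ := by
    rintro rfl
    obtain ⟨j, hj⟩ := (hmem₀ _).1 hyL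
    exact not_inGap_blockEmb hl i j (hj ▸ inGap_gapEmb hl i y)
  obtain ⟨j, hj⟩ := exists_forall_inGap hl S hL₀ hmem₀ hL hne
  obtain rfl : j = i := Fin.ext ((hj _ hyL).eq (inGap_gapEmb hl i y))
  exact ⟨L, ⟨mem_filter.2 ⟨hL, hj⟩, hyL⟩,
    fun L' hL' => hL_unique L' ⟨(mem_filter.1 hL'.1).1, hL'.2⟩⟩

end Decompose

/-- A structure on `Fin n`, `n > 0`, is encoded by the length `k` of the list through `0`,
the sizes `l i` of the `k` gaps that follow its elements, the order `σ` in which the list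
visits its elements, and a structure in each gap. -/
def Decomposition (n : ℕ) : Type :=
  Σ k : Fin (n + 1), Σ l : finsuppAntidiag (range k) (n - k),
    Equiv.Perm (Fin k) × ∀ i : Fin k, SetOfNCLists (l.1 i)

variable {n : ℕ}

lemma Decomposition.blockPos_eq (D : Decomposition n) : blockPos D.2.1.1 D.1 = n :=
  blockPos_eq_of_mem_finsuppAntidiag (Nat.lt_succ_iff.1 D.1.2) D.2.1.2

lemma exists_range_blockEmb_eq (hn : 0 < n) {B : Finset (Fin n)} (h0 : ⟨0, hn⟩ ∈ B) :
    ∃ k, ∃ l ∈ finsuppAntidiag (range k) (n - k), ∃ hl : blockPos l k = n,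
      Set.range (blockEmb hl) = B := by
  set k := B.card
  set f := B.orderEmbOfFin rfl
  have hk : 0 < k := card_pos.2 ⟨_, h0⟩
  set g : ℕ → ℕ := fun i => if h : i < k then f ⟨i, h⟩ else n with hg
  have hg₀ : g 0 = 0 := by
    simp only [hg, dif_pos hk]
    exact Nat.le_zero.1 (Fin.le_def.1 ((orderEmbOfFin_zero rfl hk).trans_le (B.min'_le _ h0)))
  have hg_lt (i : ℕ) (hi : i < k) : g i < g (i + 1) := by
    simp only [hg, dif_pos hi]
    split_ifs with hi'
    · exact f.strictMono (Fin.mk_lt_mk.2 i.lt_succ_self)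
    · exact (f ⟨i, hi⟩).2
  obtain ⟨l, hl, hpos⟩ := exists_mem_finsuppAntidiag_blockPos_eq g hg₀ hg_lt
  have hgk : g k = n := dif_neg (lt_irrefl k)
  rw [hgk] at hl
  have hln : blockPos l k = n := (hpos k le_rfl).trans hgk
  have hf : blockEmb hln = f := funext fun i => Fin.ext <| (hpos i i.2.le).trans (dif_pos i.2)
  exact ⟨k, l, hl, hln, hf ▸ range_orderEmbOfFin B rfl⟩

lemma zero_mem_blockList {k : ℕ} {l : ℕ → ℕ} (hl : blockPos l k = n) (hn : 0 < n)
    (σ : Equiv.Perm (Fin k)) : (⟨0, hn⟩ : Fin n) ∈ blockList hl σ :=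
  mem_blockList.2 ⟨⟨0, pos_of_blockPos_eq hl hn⟩, Fin.ext blockPos_zero⟩

def assemble (hn : 0 < n) (D : Decomposition n) : SetOfNCLists n :=
  ⟨assembleSet D.blockPos_eq D.2.2.1 D.2.2.2,
    fun _ => nonempty_nodup_of_mem_assembleSet (pos_of_blockPos_eq D.blockPos_eq hn),
    existsUnique_mem_assembleSet, not_crossing_assembleSet⟩

lemma assemble_injective (hn : 0 < n) : Injective (assemble hn) := by
  rintro ⟨k, ⟨l, hl⟩, σ, P⟩ ⟨k', ⟨l', hl'⟩, σ', P'⟩ h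
  have hpos := blockPos_eq_of_mem_finsuppAntidiag (Nat.lt_succ_iff.1 k.2) hl
  have hpos' := blockPos_eq_of_mem_finsuppAntidiag (Nat.lt_succ_iff.1 k'.2) hl'
  have hS : assembleSet hpos σ P = assembleSet hpos' σ' P' := congrArg Subtype.val h
  have hblock : blockList hpos σ = blockList hpos' σ' :=
    (existsUnique_mem_assembleSet (σ := σ') (P := P') ⟨0, hn⟩).unique
      ⟨by rw [← hS]; exact mem_insert_self _ _, zero_mem_blockList hpos hn σ⟩
      ⟨mem_insert_self _ _, zero_mem_blockList hpos' hn σ'⟩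
  obtain rfl : k = k' := Fin.ext (by simpa [blockList] using congrArg List.length hblock)
  have hemb : blockEmb hpos = blockEmb hpos' :=
    (blockEmb_strictMono hpos).range_inj (blockEmb_strictMono hpos') |>.1 <| Set.ext fun x => by
      rw [Set.mem_range, Set.mem_range, ← mem_blockList (σ := σ), ← mem_blockList (σ := σ'),
        hblock]
  obtain rfl : l = l' := eq_of_blockPos_eq hl hl' fun i hi => by
    rcases hi.lt_or_eq with hi | rfl
    · exact congrArg Fin.val (congrFun hemb ⟨i, hi⟩)
    · rw [hpos, hpos']
  obtain rfl : σ = σ' := Equiv.ext fun j => (blockEmb_strictMono _).injective <|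
    congrFun (List.ofFn_injective hblock) j
  obtain rfl : P = P' := funext fun i => Subtype.ext <|
    image_injective (List.map_injective_iff.2 (gapEmb_strictMono _ i).injective) <| by
      rw [← gapLists, ← gapLists, ← filter_inGap_assembleSet, hS, filter_inGap_assembleSet]
  rfl

lemma assemble_surjective (hn : 0 < n) : Surjective (assemble hn) := by
  classical
  intro S
  obtain ⟨L₀, ⟨hL₀, h0⟩, -⟩ := S.2.2.1 ⟨0, hn⟩
  obtain ⟨k, l, hl, hpos, hrange⟩ :=
    exists_range_blockEmb_eq hn (B := L₀.toFinset) (List.mem_toFinset.2 h0)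
  have hmem₀ (x : Fin n) : x ∈ L₀ ↔ x ∈ Set.range (blockEmb hpos) := by simp [hrange]
  obtain ⟨σ, hσ⟩ := exists_perm_eq_ofFn (blockEmb_strictMono hpos).injective (S.2.1 L₀ hL₀).2 hmem₀
  choose P hP using exists_image_map_gapEmb_eq hpos S hL₀ hmem₀
  refine ⟨⟨⟨k, Nat.lt_succ_of_le (hpos ▸ Nat.le_add_right _ _)⟩, ⟨l, hl⟩, σ, P⟩, Subtype.ext ?_⟩
  change assembleSet hpos σ P = S.1
  ext L
  simp only [mem_assembleSet, gapLists, hP, mem_filter, blockList, ← hσ]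
  constructor
  · rintro (rfl | ⟨i, hL, -⟩)
    exacts [hL₀, hL]
  · intro hL
    by_cases hne : L = L₀
    · exact .inl hne
    · exact .inr ((exists_forall_inGap hpos S hL₀ hmem₀ hL hne).imp fun i hi => ⟨hL, hi⟩)

instance (n : ℕ) : Finite (SetOfNCLists n) := by
  refine Finite.of_injective
    (fun S : SetOfNCLists n => {L : {L : List (Fin n) // L.Nodup} | L.1 ∈ S.1}) ?_
  intro S T h
  refine Subtype.ext (Finset.ext fun L => ⟨fun hL => ?_, fun hL => ?_⟩)
  · exact (Set.ext_iff.1 h ⟨L, (S.2.1 L hL).2⟩).1 hL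
  · exact (Set.ext_iff.1 h ⟨L, (T.2.1 L hL).2⟩).2 hL

lemma card_decomposition (n : ℕ) : Nat.card (Decomposition n) =
    ∑ k ∈ range (n + 1), k.factorial *
      ∑ l ∈ finsuppAntidiag (range k) (n - k), ∏ i ∈ range k, u (l i) := by
  rw [Decomposition, Nat.card_sigma, ← Fin.sum_univ_eq_sum_range]
  refine Fintype.sum_congr _ _ fun k => ?_
  rw [Nat.card_sigma, mul_sum, ← sum_coe_sort (finsuppAntidiag _ _)]
  refine Fintype.sum_congr _ _ fun l => ?_
  rw [Nat.card_prod, Nat.card_pi, Nat.card_perm, Nat.card_fin,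
    ← Fin.prod_univ_eq_prod_range (fun i => u (l.1 i))]
  rfl

lemma u_eq_card_decomposition (hn : 0 < n) : u n = Nat.card (Decomposition n) :=
  (Nat.card_eq_of_bijective _ ⟨assemble_injective hn, assemble_surjective hn⟩).symm

end SetOfNCLists

instance : Unique (SetOfNCLists 0) where
  default := ⟨∅, by simp, fun x => x.elim0, by simp⟩
  uniq S := Subtype.ext <| Finset.eq_empty_of_forall_notMem fun L hL =>
    (List.exists_mem_of_ne_nil L (S.2.1 L hL).1).choose.elim0

lemma u_zero : u 0 = 1 := Nat.card_unique

/-- The generating function `U(x) = ∑ u(n) xⁿ` satisfies `U = ∑_{k≥0} k! (x U)^k`,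
stated coefficientwise (the terms with `k > n` contribute nothing to the
coefficient of `xⁿ` since `(xU)^k` has order at least `k`). -/
theorem u_functional_equation :
    ∀ n : ℕ, PowerSeries.coeff (R := ℕ) n (PowerSeries.mk u) =
      ∑ k ∈ Finset.range (n + 1), PowerSeries.coeff (R := ℕ) n
        ((PowerSeries.C (R := ℕ) k.factorial) *
          (PowerSeries.X * PowerSeries.mk u) ^ k) := by
  intro n
  rcases Nat.eq_zero_or_pos n with rfl | hn
  · simp [u_zero]
  rw [PowerSeries.coeff_mk, SetOfNCLists.u_eq_card_decomposition hn,
    SetOfNCLists.card_decomposition]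
  refine sum_congr rfl fun k hk => ?_
  rw [PowerSeries.coeff_C_mul, mul_pow, PowerSeries.coeff_X_pow_mul',
    if_pos (Nat.lt_succ_iff.1 (mem_range.1 hk)), PowerSeries.coeff_pow]
  simp only [PowerSeries.coeff_mk]
end

section
/- Let B(x) be the unique formal power series with constant term 1 satisfying B(x) = sum_{k≥0} C_k (x B(x))^k, where C_k = (1/(k+1)) C(2k,k) is the k-th Catalan number. Then the coefficient of x^k in B(x) equals (1/(2k+1)) * C(3k, k). -/
/-!
Since the Catalan series satisfies `C = 1 + X C²`, the relation `B = C(XB)` turns into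
`B = 1 + X B³`. For any series with `B = 1 + X Bᵐ` the powers satisfy
`B^(k+1) = Bᵏ + X B^(k+m)`, which is exactly the Pascal-type recurrence of the Raney numbers
`k/(mn+k) * C(mn+k, n)`; hence these are the coefficients of `Bᵏ`, and `k = 1` gives the
Fuss–Catalan numbers.
-/

open PowerSeries Finset

namespace PowerSeries

theorem coeff_subst_eq_sum_range {R S : Type*} [CommRing R] [CommRing S] [Algebra R S]
    {b : S⟦X⟧} (hb : constantCoeff b = 0) (f : R⟦X⟧) (n : ℕ) :
    coeff n (f.subst b) = ∑ d ∈ range (n + 1), coeff d f • coeff n (b ^ d) := by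
  rw [coeff_subst' (HasSubst.of_constantCoeff_zero' hb)]
  refine finsum_eq_sum_of_support_subset _ fun d hd => ?_
  rw [coe_range, Set.mem_Iio, Nat.lt_succ_iff]
  by_contra! hnd
  refine hd ?_
  show coeff d f • coeff n (b ^ d) = 0
  rw [coeff_of_lt_order n ((le_order_pow_of_constantCoeff_eq_zero d hb).trans_lt' ?_), smul_zero]
  exact_mod_cast hnd

section Catalan

variable {S : Type*} [CommRing S] {Y : S⟦X⟧}

theorem coeff_subst_catalanSeries (hY : constantCoeff Y = 0) (n : ℕ) :
    coeff n ((catalanSeries.map (Nat.castRingHom S)).subst Y)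
      = ∑ k ∈ range (n + 1), (catalan k : S) * coeff n (Y ^ k) := by
  simp [coeff_subst_eq_sum_range hY]

theorem subst_catalanSeries (hY : constantCoeff Y = 0) :
    (catalanSeries.map (Nat.castRingHom S)).subst Y
      = 1 + Y * ((catalanSeries.map (Nat.castRingHom S)).subst Y) ^ 2 := by
  have hC := congrArg (map (Nat.castRingHom S)) catalanSeries_sq_mul_X_add_one
  rw [map_add, map_mul, map_pow, map_X, map_one] at hC
  conv_lhs => rw [← hC]
  rw [← coe_substAlgHom (HasSubst.of_constantCoeff_zero' hY), map_add, map_mul, map_pow,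
    substAlgHom_X, map_one]
  ring

end Catalan

end PowerSeries

-- Division by zero makes `raney m 0 0 = 0` instead of the conventional `1`.
def raney (m k n : ℕ) : ℚ := k / (m * n + k) * (m * n + k).choose n

theorem raney_zero {m k : ℕ} (hk : k ≠ 0) : raney m k 0 = 1 := by
  simp [raney, hk]

theorem raney_zero_succ (m n : ℕ) : raney m 0 (n + 1) = 0 := by
  simp [raney]

theorem raney_add_one_succ {m : ℕ} (hm : 0 < m) (k n : ℕ) :
    raney m (k + 1) (n + 1) = raney m k (n + 1) + raney m (k + m) n := by
  obtain ⟨M, hM⟩ : ∃ M, m * n + m + k = M := ⟨_, rfl⟩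
  have hMn : n ≤ M := by nlinarith
  have hM0 : (M : ℚ) ≠ 0 := by rw [← hM]; positivity
  have hchoose_succ : ((M + 1).choose (n + 1) : ℚ) = (M + 1) * M.choose n / (n + 1) := by
    rw [eq_div_iff (by positivity)]
    exact_mod_cast (Nat.add_one_mul_choose_eq M n).symm
  have hchoose_right : (M.choose (n + 1) : ℚ) = M.choose n * (M - n) / (n + 1) := by
    rw [eq_div_iff (by positivity), ← Nat.cast_sub hMn]
    exact_mod_cast Nat.choose_succ_right_eq M n
  have hMq : (M : ℚ) = m * n + m + k := by rw [← hM]; push_cast; ring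
  simp only [raney]
  rw [show m * (n + 1) + (k + 1) = M + 1 by lia, show m * (n + 1) + k = M by lia,
    show m * n + (k + m) = M by lia]
  push_cast
  rw [hchoose_succ, hchoose_right]
  field_simp
  rw [hMq]
  ring

theorem raney_one (m n : ℕ) : raney (m + 1) 1 n = ((m + 1) * n).choose n / (m * n + 1) := by
  have h := Nat.choose_mul_succ_eq ((m + 1) * n) n
  rw [show (m + 1) * n + 1 - n = m * n + 1 by rw [add_mul]; omega] at h
  have hq : (((m + 1) * n).choose n : ℚ) * ((m + 1) * n + 1)
      = ((m + 1) * n + 1).choose n * (m * n + 1) := by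
    exact_mod_cast h
  simp only [raney]
  push_cast
  rw [div_mul_eq_mul_div, one_mul, div_eq_div_iff (by positivity) (by positivity)]
  linear_combination -hq

theorem coeff_pow_eq_raney {K : Type*} [Field K] [CharZero K] {m : ℕ} (hm : 0 < m) {B : K⟦X⟧}
    (hB : B = 1 + X * B ^ m) {k : ℕ} (hk : k ≠ 0) (n : ℕ) :
    coeff n (B ^ k) = raney m k n := by
  have hpow : ∀ j, B ^ (j + 1) = B ^ j + X * B ^ (j + m) := fun j => by
    rw [pow_succ, pow_add, mul_left_comm, ← mul_one_add, ← hB]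
  induction n generalizing k with
  | zero =>
    have h0 : constantCoeff B = 1 := by rw [hB]; simp
    rw [coeff_zero_eq_constantCoeff_apply, map_pow, h0, one_pow, raney_zero hk, Rat.cast_one]
  | succ n ih =>
    clear hk
    induction k with
    | zero => simp [raney_zero_succ]
    | succ k ihk =>
      rw [hpow, map_add, coeff_succ_X_mul, ihk, ih (by omega), raney_add_one_succ hm, Rat.cast_add]

theorem nc_transform_catalan_general (B : PowerSeries ℚ)
    (hB : ∀ n : ℕ, coeff n B = ∑ k ∈ Finset.range (n + 1),
      (catalan k : ℚ) * coeff n ((X * B) ^ k)) :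
    ∀ k : ℕ, coeff k B = ((3 * k).choose k : ℚ) / (2 * k + 1) := by
  have hXB : constantCoeff (X * B) = 0 := by simp
  have hsubst : B = (catalanSeries.map (Nat.castRingHom ℚ)).subst (X * B) := by
    ext n
    rw [hB n, coeff_subst_catalanSeries hXB]
  have hcubic : B = 1 + X * B ^ 3 := by
    have h := subst_catalanSeries hXB
    rw [← hsubst] at h
    exact h.trans (by ring)
  intro k
  have h := coeff_pow_eq_raney (by norm_num) hcubic one_ne_zero k
  rw [pow_one, show 3 = 2 + 1 from rfl, raney_one] at h
  rw [h]
  push_cast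
  ring

/-- The noncrossing partition transform of the Catalan numbers is the sequence of
ternary (Fuss–Catalan) numbers: if `B` has constant term `1` and satisfies
`B = ∑_{k≥0} C_k (xB)^k` (stated coefficientwise), then the coefficient of `x^k`
in `B` is `(1/(2k+1)) C(3k,k)`. -/
theorem nc_transform_catalan (B : PowerSeries ℚ) (h0 : constantCoeff B = 1)
    (hB : ∀ n : ℕ, coeff n B = ∑ k ∈ Finset.range (n + 1),
      (catalan k : ℚ) * coeff n ((X * B) ^ k)) :
    ∀ k : ℕ, coeff k B = ((3 * k).choose k : ℚ) / (2 * k + 1) :=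
  nc_transform_catalan_general B hB
end

section
/- If a_k counts configurations (A-structures) on k-element sets (depending only on cardinality, with a_0 = 1), then the number b_n of pairs consisting of a noncrossing set partition of [n] together with an A-structure on each block satisfies, as formal power series, B(x) = sum_{k≥0} a_k (x B(x))^k, where B(x) = sum_{n≥0} b_n x^n. -/
/-!
Let `B₀` be the block of `0` in a noncrossing partition of `{0, …, n - 1}` and `e` its largest
element. Noncrossing forces every other block to lie entirely below or entirely above `e`, so the
partition is a noncrossing partition of `{0, …, e - 1}` with `e` added to its block of `0`, next to
an arbitrary noncrossing partition of `{e + 1, …, n - 1}`. Hence the weighted counts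
`F k n = firstBlockWeight a k n` of those partitions with `#B₀ = k`, in which `B₀` has weight `1`,
satisfy `F (k + 1) (m + 1) = ∑_{e + j = m} F k e * b j` with `b = ncTransform a`, that is,
`∑ₙ F k n xⁿ = (x B(x))ᵏ`. Grouping the partitions by `#B₀` gives `b n = ∑ₖ a k * F k n`.
-/

open scoped Classical

/-- Given a sequence `a` of counts of `A`-structures (depending only on
cardinality), `ncTransform a n` is the number of pairs consisting of a noncrossing
set partition of `[n]` together with an `A`-structure on each block. -/
noncomputable def ncTransform (a : ℕ → ℕ) (n : ℕ) : ℕ :=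
  ∑ P : {P : Finset (Finset (Fin n)) // IsSetPartition n P ∧ IsNoncrossing n P},
    ∏ B ∈ P.1, a B.card

open Finset

section NoncrossingPartition

variable {α β : Type*} [LinearOrder α] [LinearOrder β] {s t : Finset α}
  {P Q : Finset (Finset α)} {B C : Finset α} {x y : α}

structure IsNCPartition (s : Finset α) (P : Finset (Finset α)) : Prop where
  nonempty : ∀ B ∈ P, B.Nonempty
  subset : ∀ B ∈ P, B ⊆ s
  exists_mem : ∀ x ∈ s, ∃ B ∈ P, x ∈ B
  eq_of_mem : ∀ B ∈ P, ∀ C ∈ P, ∀ x ∈ B, x ∈ C → B = C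
  noncrossing : ∀ B ∈ P, ∀ C ∈ P, ∀ a ∈ B, ∀ b ∈ C, ∀ c ∈ B, ∀ d ∈ C,
    a < b → b < c → c < d → B = C

noncomputable def ncPartitions (s : Finset α) : Finset (Finset (Finset α)) :=
  s.powerset.powerset.filter (IsNCPartition s)

lemma mem_ncPartitions : P ∈ ncPartitions s ↔ IsNCPartition s P := by
  simpa [ncPartitions, subset_iff] using fun h B hB x hx => h.subset B hB hx

noncomputable def ncWeight (a : ℕ → ℕ) (s : Finset α) : ℕ :=
  ∑ P ∈ ncPartitions s, ∏ B ∈ P, a #B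

lemma isNCPartition_image_iff {f : α → β} (hf : StrictMono f) :
    IsNCPartition (s.image f) (P.image (image f)) ↔ IsNCPartition s P := by
  have hinj := hf.injective
  constructor <;> rintro ⟨h₁, h₂, h₃, h₄, h₅⟩ <;> constructor <;>
    simp only [forall_mem_image, exists_mem_image, image_nonempty, image_subset_image_iff hinj,
      image_inj hinj, hinj.mem_finset_image, hf.lt_iff_lt] at * <;> assumption

lemma ncPartitions_image {f : α → β} (hf : StrictMono f) (s : Finset α) :
    ncPartitions (s.image f) = (ncPartitions s).image (image (image f)) := by
  simp only [ncPartitions, powerset_image, filter_image, isNCPartition_image_iff hf]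

lemma ncWeight_image (a : ℕ → ℕ) {f : α → β} (hf : StrictMono f) (s : Finset α) :
    ncWeight a (s.image f) = ncWeight a s := by
  have hinj := hf.injective
  rw [ncWeight, ncPartitions_image hf, sum_image (image_injective (image_injective hinj)).injOn]
  refine sum_congr rfl fun P _ => ?_
  rw [prod_image (image_injective hinj).injOn]
  simp only [card_image_of_injective _ hinj]

lemma IsNCPartition.eq_empty (hP : IsNCPartition ∅ P) : P = ∅ :=
  eq_empty_of_forall_notMem fun B hB =>
    (hP.nonempty B hB).ne_empty (subset_empty.1 (hP.subset B hB))

lemma ncPartitions_empty : ncPartitions (∅ : Finset α) = {∅} := by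
  ext P
  rw [mem_ncPartitions, mem_singleton]
  refine ⟨IsNCPartition.eq_empty, ?_⟩
  rintro rfl
  constructor <;> simp

def blockOf (P : Finset (Finset α)) (x : α) : Finset α :=
  (P.filter (x ∈ ·)).biUnion id

lemma mem_blockOf : y ∈ blockOf P x ↔ ∃ B ∈ P, x ∈ B ∧ y ∈ B := by
  simp [blockOf, and_assoc]

@[simp]
lemma blockOf_empty (x : α) : blockOf ∅ x = ∅ := rfl

namespace IsNCPartition

lemma blockOf_eq (hP : IsNCPartition s P) (hB : B ∈ P) (hx : x ∈ B) : blockOf P x = B := by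
  ext y
  rw [mem_blockOf]
  refine ⟨?_, fun hy => ⟨B, hB, hx, hy⟩⟩
  rintro ⟨C, hC, hxC, hyC⟩
  rwa [hP.eq_of_mem B hB C hC x hx hxC]

lemma blockOf_mem (hP : IsNCPartition s P) (hx : x ∈ s) : blockOf P x ∈ P := by
  obtain ⟨B, hB, hxB⟩ := hP.exists_mem x hx
  rwa [hP.blockOf_eq hB hxB]

lemma mem_blockOf_self (hP : IsNCPartition s P) (hx : x ∈ s) : x ∈ blockOf P x := by
  obtain ⟨B, hB, hxB⟩ := hP.exists_mem x hx
  rwa [hP.blockOf_eq hB hxB]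

lemma blockOf_subset (hP : IsNCPartition s P) : blockOf P x ⊆ s := by
  intro y hy
  obtain ⟨B, hB, -, hyB⟩ := mem_blockOf.1 hy
  exact hP.subset B hB hyB

lemma eq_blockOf_iff (hP : IsNCPartition s P) (hB : B ∈ P) : B = blockOf P x ↔ x ∈ B := by
  refine ⟨fun h => ?_, fun hx => (hP.blockOf_eq hB hx).symm⟩
  obtain ⟨z, hz⟩ := hP.nonempty B hB
  obtain ⟨C, hC, hxC, hzC⟩ := mem_blockOf.1 (h ▸ hz)
  rwa [hP.eq_of_mem B hB C hC z hz hzC]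

end IsNCPartition

def restrictBlocks (P : Finset (Finset α)) (t : Finset α) : Finset (Finset α) :=
  (P.image (· ∩ t)).erase ∅

lemma mem_restrictBlocks : C ∈ restrictBlocks P t ↔ C.Nonempty ∧ ∃ B ∈ P, B ∩ t = C := by
  simp [restrictBlocks, nonempty_iff_ne_empty]

lemma IsNCPartition.restrict (hP : IsNCPartition s P) (t : Finset α) :
    IsNCPartition (s ∩ t) (restrictBlocks P t) where
  nonempty C hC := (mem_restrictBlocks.1 hC).1
  subset := by
    simp only [mem_restrictBlocks]
    rintro _ ⟨-, B, hB, rfl⟩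
    exact inter_subset_inter_right (hP.subset B hB)
  exists_mem z hz := by
    obtain ⟨B, hB, hzB⟩ := hP.exists_mem z (mem_inter.1 hz).1
    have hzBt : z ∈ B ∩ t := mem_inter.2 ⟨hzB, (mem_inter.1 hz).2⟩
    exact ⟨B ∩ t, mem_restrictBlocks.2 ⟨⟨z, hzBt⟩, B, hB, rfl⟩, hzBt⟩
  eq_of_mem := by
    simp only [mem_restrictBlocks]
    rintro _ ⟨-, B, hB, rfl⟩ _ ⟨-, C, hC, rfl⟩ z hzB hzC
    rw [hP.eq_of_mem B hB C hC z (mem_inter.1 hzB).1 (mem_inter.1 hzC).1]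
  noncrossing := by
    simp only [mem_restrictBlocks]
    rintro _ ⟨-, B, hB, rfl⟩ _ ⟨-, C, hC, rfl⟩ a ha b hb c hc d hd hab hbc hcd
    rw [hP.noncrossing B hB C hC a (mem_inter.1 ha).1 b (mem_inter.1 hb).1 c (mem_inter.1 hc).1
      d (mem_inter.1 hd).1 hab hbc hcd]

lemma blockOf_restrictBlocks (hx : x ∈ t) :
    blockOf (restrictBlocks P t) x = blockOf P x ∩ t := by
  ext y
  simp only [mem_blockOf, mem_restrictBlocks, mem_inter]
  constructor
  · rintro ⟨_, ⟨-, B, hB, rfl⟩, hxB, hyB⟩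
    exact ⟨⟨B, hB, (mem_inter.1 hxB).1, (mem_inter.1 hyB).1⟩, (mem_inter.1 hyB).2⟩
  · rintro ⟨⟨B, hB, hxB, hyB⟩, hyt⟩
    exact ⟨B ∩ t, ⟨⟨x, mem_inter.2 ⟨hxB, hx⟩⟩, B, hB, rfl⟩, mem_inter.2 ⟨hxB, hx⟩,
      mem_inter.2 ⟨hyB, hyt⟩⟩

def insertIntoBlock (P : Finset (Finset α)) (y x : α) : Finset (Finset α) :=
  insert (insert x (blockOf P y)) (P.erase (blockOf P y))

lemma IsNCPartition.mem_insertIntoBlock (hP : IsNCPartition s P) :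
    C ∈ insertIntoBlock P y x ↔ C = insert x (blockOf P y) ∨ C ∈ P ∧ y ∉ C := by
  rw [insertIntoBlock, mem_insert, mem_erase, and_comm]
  exact or_congr_right (and_congr_right fun hC => not_congr (hP.eq_blockOf_iff hC))

/-- A crossing through the new largest element `x` would already be a crossing of some block
with the block of the least element `y`. -/
lemma IsNCPartition.insertMax (hP : IsNCPartition s P) (hy : ∀ z ∈ s, y ≤ z)
    (hx : ∀ z ∈ s, z < x) : IsNCPartition (insert x s) (insertIntoBlock P y x) := by
  have hblock : ∀ {z}, z ∈ blockOf P y → ∃ D ∈ P, y ∈ D ∧ z ∈ D := mem_blockOf.1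
  have hlt : ∀ C ∈ P, ∀ z ∈ C, z < x := fun C hC z hz => hx z (hP.subset C hC hz)
  have hmem : ∀ {z}, z < x → z ∈ insert x (blockOf P y) → z ∈ blockOf P y := fun hzx hz =>
    (mem_insert.1 hz).resolve_left hzx.ne
  constructor <;> simp only [hP.mem_insertIntoBlock]
  · rintro C (rfl | ⟨hC, -⟩)
    · exact insert_nonempty _ _
    · exact hP.nonempty C hC
  · rintro C (rfl | ⟨hC, -⟩)
    · exact insert_subset_insert x hP.blockOf_subset
    · exact (hP.subset C hC).trans (subset_insert x s)
  · intro z hz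
    rcases mem_insert.1 hz with rfl | hz
    · exact ⟨_, Or.inl rfl, mem_insert_self _ _⟩
    obtain ⟨C, hC, hzC⟩ := hP.exists_mem z hz
    by_cases hyC : y ∈ C
    · exact ⟨_, Or.inl rfl, mem_insert_of_mem ((hP.blockOf_eq hC hyC).symm ▸ hzC)⟩
    · exact ⟨C, Or.inr ⟨hC, hyC⟩, hzC⟩
  · have key : ∀ C ∈ P, y ∉ C → ∀ z ∈ C, z ∉ insert x (blockOf P y) := by
      intro C hC hyC z hzC hz
      obtain ⟨D, hD, hyD, hzD⟩ := hblock (hmem (hlt C hC z hzC) hz)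
      exact hyC (hP.eq_of_mem D hD C hC z hzD hzC ▸ hyD)
    rintro B (rfl | ⟨hB, hyB⟩) C (rfl | ⟨hC, hyC⟩) z hzB hzC
    · rfl
    · exact absurd hzB (key C hC hyC z hzC)
    · exact absurd hzC (key B hB hyB z hzB)
    · exact hP.eq_of_mem B hB C hC z hzB hzC
  · rintro B (rfl | ⟨hB, hyB⟩) C (rfl | ⟨hC, hyC⟩) a ha b hb c hc d hd hab hbc hcd
    · rfl
    · have hcx : c < x := hcd.trans (hlt C hC d hd)
      obtain ⟨D, hD, hyD, hcD⟩ := hblock (hmem hcx hc)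
      obtain ⟨D', hD', hyD', haD'⟩ := hblock (hmem (hab.trans (hbc.trans hcx)) ha)
      obtain rfl := hP.eq_of_mem D' hD' D hD y hyD' hyD
      exact (hyC (hP.noncrossing D' hD' C hC a haD' b hb c hcD d hd hab hbc hcd ▸ hyD)).elim
    · obtain ⟨D, hD, hyD, hbD⟩ := hblock (hmem (hbc.trans (hlt B hB c hc)) hb)
      have hya : y < a := lt_of_le_of_ne (hy a (hP.subset B hB ha)) fun h => hyB (h ▸ ha)
      exact (hyB (hP.noncrossing D hD B hB y hyD a ha b hbD c hc hya hab hbc ▸ hyD)).elim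
    · exact hP.noncrossing B hB C hC a ha b hb c hc d hd hab hbc hcd

lemma IsNCPartition.union (hP : IsNCPartition s P) (hQ : IsNCPartition t Q)
    (hst : ∀ x ∈ s, ∀ y ∈ t, x < y) : IsNCPartition (s ∪ t) (P ∪ Q) := by
  have hlt : ∀ B ∈ P, ∀ C ∈ Q, ∀ x ∈ B, ∀ y ∈ C, x < y := fun B hB C hC x hx y hy =>
    hst x (hP.subset B hB hx) y (hQ.subset C hC hy)
  constructor <;> simp only [mem_union]
  · rintro B (hB | hB)
    exacts [hP.nonempty B hB, hQ.nonempty B hB]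
  · rintro B (hB | hB)
    exacts [(hP.subset B hB).trans subset_union_left, (hQ.subset B hB).trans subset_union_right]
  · intro z hz
    rcases hz with hz | hz
    · obtain ⟨B, hB, hzB⟩ := hP.exists_mem z hz
      exact ⟨B, Or.inl hB, hzB⟩
    · obtain ⟨B, hB, hzB⟩ := hQ.exists_mem z hz
      exact ⟨B, Or.inr hB, hzB⟩
  · rintro B (hB | hB) C (hC | hC) z hzB hzC
    · exact hP.eq_of_mem B hB C hC z hzB hzC
    · exact absurd (hlt B hB C hC z hzB z hzC) (lt_irrefl z)
    · exact absurd (hlt C hC B hB z hzC z hzB) (lt_irrefl z)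
    · exact hQ.eq_of_mem B hB C hC z hzB hzC
  · rintro B (hB | hB) C (hC | hC) a ha b hb c hc d hd hab hbc hcd
    · exact hP.noncrossing B hB C hC a ha b hb c hc d hd hab hbc hcd
    · exact absurd (hlt B hB C hC c hc b hb) hbc.not_gt
    · exact absurd (hlt C hC B hB b hb a ha) hab.not_gt
    · exact hQ.noncrossing B hB C hC a ha b hb c hc d hd hab hbc hcd

lemma restrictBlocks_union :
    restrictBlocks (P ∪ Q) t = restrictBlocks P t ∪ restrictBlocks Q t := by
  rw [restrictBlocks, image_union, erase_union_distrib]; rfl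

lemma restrictBlocks_eq_empty (h : ∀ B ∈ P, Disjoint B t) : restrictBlocks P t = ∅ := by
  simp only [eq_empty_iff_forall_notMem, mem_restrictBlocks, not_and, not_exists]
  rintro C hC B hB rfl
  exact hC.ne_empty (disjoint_iff_inter_eq_empty.1 (h B hB))

lemma IsNCPartition.restrictBlocks_self (hP : IsNCPartition s P) : restrictBlocks P s = P := by
  ext C
  simp only [mem_restrictBlocks]
  refine ⟨?_, fun hC => ⟨hP.nonempty C hC, C, hC, inter_eq_left.2 (hP.subset C hC)⟩⟩
  rintro ⟨-, B, hB, rfl⟩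
  rwa [inter_eq_left.2 (hP.subset B hB)]

lemma IsNCPartition.restrictBlocks_insertIntoBlock (hP : IsNCPartition s P) (hx : x ∉ s) :
    restrictBlocks (insertIntoBlock P y x) s = P := by
  have hfirst : insert x (blockOf P y) ∩ s = blockOf P y := by
    rw [insert_inter_of_notMem hx, inter_eq_left.2 hP.blockOf_subset]
  ext C
  simp only [mem_restrictBlocks, hP.mem_insertIntoBlock]
  constructor
  · rintro ⟨hne, B, rfl | ⟨hB, -⟩, rfl⟩
    · rw [hfirst] at hne ⊢
      obtain ⟨z, hz⟩ := hne
      obtain ⟨B, hB, hyB, -⟩ := mem_blockOf.1 hz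
      rwa [hP.blockOf_eq hB hyB]
    · rwa [inter_eq_left.2 (hP.subset B hB)]
  · intro hC
    refine ⟨hP.nonempty C hC, ?_⟩
    by_cases hyC : y ∈ C
    · exact ⟨_, Or.inl rfl, by rw [hfirst, hP.blockOf_eq hC hyC]⟩
    · exact ⟨C, Or.inr ⟨hC, hyC⟩, inter_eq_left.2 (hP.subset C hC)⟩

lemma IsNCPartition.forall_lt_or_forall_gt (hP : IsNCPartition s P) {m e : α} (hB : B ∈ P)
    (hm : m ∈ B) (hmin : ∀ z ∈ s, m ≤ z) (he : e ∈ B) (hC : C ∈ P) (hmC : m ∉ C) :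
    (∀ z ∈ C, z < e) ∨ ∀ z ∈ C, e < z := by
  by_contra! ⟨⟨u, huC, heu⟩, ⟨v, hvC, hve⟩⟩
  have hne : ∀ z ∈ C, z ≠ e := fun z hz h => hmC (hP.eq_of_mem B hB C hC e he (h ▸ hz) ▸ hm)
  have hmv : m < v := lt_of_le_of_ne (hmin v (hP.subset C hC hvC)) fun h => hmC (h ▸ hvC)
  exact hmC (hP.noncrossing B hB C hC m hm v hvC e he u huC hmv
    (lt_of_le_of_ne hve (hne v hvC)) (lt_of_le_of_ne heu (hne u huC).symm) ▸ hm)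

end NoncrossingPartition

lemma isNCPartition_univ_iff {n : ℕ} {P : Finset (Finset (Fin n))} :
    IsNCPartition univ P ↔ IsSetPartition n P ∧ IsNoncrossing n P := by
  constructor
  · intro h
    refine ⟨⟨fun B hB => (h.nonempty B hB).ne_empty, fun x => ?_⟩, ?_⟩
    · obtain ⟨B, hB, hx⟩ := h.exists_mem x (mem_univ x)
      exact ⟨B, ⟨hB, hx⟩, fun C ⟨hC, hxC⟩ => h.eq_of_mem C hC B hB x hxC hx⟩
    · rintro ⟨a, b, c, d, hab, hbc, hcd, B, hB, C, hC, hne, ha, hc, hb, hd⟩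
      exact hne (h.noncrossing B hB C hC a ha b hb c hc d hd hab hbc hcd)
  · rintro ⟨⟨hne, hunique⟩, hnc⟩
    refine ⟨fun B hB => nonempty_iff_ne_empty.2 (hne B hB), fun B _ => subset_univ B,
      fun x _ => (hunique x).exists,
      fun B hB C hC x hxB hxC => (hunique x).unique ⟨hB, hxB⟩ ⟨hC, hxC⟩,
      fun B hB C hC a ha b hb c hc d hd hab hbc hcd => ?_⟩
    by_contra hBC
    exact hnc ⟨a, b, c, d, hab, hbc, hcd, B, hB, C, hC, hBC, ha, hc, hb, hd⟩

lemma ncTransform_eq_ncWeight (a : ℕ → ℕ) (n : ℕ) : ncTransform a n = ncWeight a (range n) := by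
  rw [← Nat.Iio_eq_range, ← Fin.map_valEmbedding_univ, map_eq_image,
    ncWeight_image a (f := Fin.valEmbedding) Fin.val_strictMono, ncTransform, ncWeight]
  exact (sum_subtype (ncPartitions univ) (fun P => by rw [mem_ncPartitions, isNCPartition_univ_iff])
    (fun P => ∏ B ∈ P, a #B)).symm

section FirstBlock

variable {n e : ℕ} {P P₁ Q : Finset (Finset ℕ)} {C : Finset ℕ}

def glue (e : ℕ) (P Q : Finset (Finset ℕ)) : Finset (Finset ℕ) := insertIntoBlock P 0 e ∪ Q

lemma IsNCPartition.insertMax_range (hP₁ : IsNCPartition (range e) P₁) :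
    IsNCPartition (range (e + 1)) (insertIntoBlock P₁ 0 e) := by
  rw [range_add_one]
  exact hP₁.insertMax (fun z _ => Nat.zero_le z) fun z hz => mem_range.1 hz

lemma isNCPartition_glue (hP₁ : IsNCPartition (range e) P₁) (hQ : IsNCPartition (Ioo e n) Q)
    (he : e < n) : IsNCPartition (range n) (glue e P₁ Q) := by
  have h := hP₁.insertMax_range.union hQ fun x hx y hy => by
    rw [mem_range] at hx; rw [mem_Ioo] at hy; omega
  have hrange : range n = range (e + 1) ∪ Ioo e n := by
    ext z; simp only [mem_union, mem_range, mem_Ioo]; omega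
  rwa [hrange]

lemma blockOf_glue (hP₁ : IsNCPartition (range e) P₁) (hQ : IsNCPartition (Ioo e n) Q)
    (he : e < n) : blockOf (glue e P₁ Q) 0 = insert e (blockOf P₁ 0) := by
  refine (isNCPartition_glue hP₁ hQ he).blockOf_eq (mem_union_left _ (mem_insert_self _ _)) ?_
  rcases e.eq_zero_or_pos with rfl | he₀
  · exact mem_insert_self _ _
  · exact mem_insert_of_mem (hP₁.mem_blockOf_self (mem_range.2 he₀))

lemma restrictBlocks_glue_range (hP₁ : IsNCPartition (range e) P₁)
    (hQ : IsNCPartition (Ioo e n) Q) : restrictBlocks (glue e P₁ Q) (range e) = P₁ := by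
  rw [glue, restrictBlocks_union, hP₁.restrictBlocks_insertIntoBlock notMem_range_self,
    restrictBlocks_eq_empty, union_empty]
  intro B hB
  refine disjoint_of_subset_left (hQ.subset B hB) (disjoint_left.2 fun z hz hz' => ?_)
  rw [mem_Ioo] at hz; rw [mem_range] at hz'; omega

lemma restrictBlocks_glue_Ioo (hP₁ : IsNCPartition (range e) P₁)
    (hQ : IsNCPartition (Ioo e n) Q) : restrictBlocks (glue e P₁ Q) (Ioo e n) = Q := by
  rw [glue, restrictBlocks_union, hQ.restrictBlocks_self, restrictBlocks_eq_empty, empty_union]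
  intro B hB
  refine disjoint_of_subset_left (hP₁.insertMax_range.subset B hB)
    (disjoint_left.2 fun z hz hz' => ?_)
  rw [mem_range] at hz; rw [mem_Ioo] at hz'; omega

lemma IsNCPartition.restrict_range (hP : IsNCPartition (range n) P) (he : e ≤ n) :
    IsNCPartition (range e) (restrictBlocks P (range e)) := by
  simpa [inter_eq_right.2 (range_subset_range.2 he)] using hP.restrict (range e)

lemma IsNCPartition.restrict_Ioo (hP : IsNCPartition (range n) P) :
    IsNCPartition (Ioo e n) (restrictBlocks P (Ioo e n)) := by
  have hsub : Ioo e n ⊆ range n := fun z hz => mem_range.2 (mem_Ioo.1 hz).2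
  simpa [inter_eq_right.2 hsub] using hP.restrict (Ioo e n)

lemma IsNCPartition.subset_range_or_subset_Ioo (hP : IsNCPartition (range n) P)
    (he : e ∈ blockOf P 0) (hC : C ∈ P) (h0C : 0 ∉ C) : C ⊆ range e ∨ C ⊆ Ioo e n := by
  obtain ⟨B, hB, h0B, heB⟩ := mem_blockOf.1 he
  exact (hP.forall_lt_or_forall_gt hB h0B (fun z _ => Nat.zero_le z) heB hC h0C).imp
    (fun h z hz => mem_range.2 (h z hz))
    (fun h z hz => mem_Ioo.2 ⟨h z hz, mem_range.1 (hP.subset C hC hz)⟩)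

lemma IsNCPartition.insert_blockOf_restrictBlocks_range (hP : IsNCPartition (range n) P)
    (hn : 0 < n) (he : e ∈ blockOf P 0) (hmax : ∀ z ∈ blockOf P 0, z ≤ e) :
    insert e (blockOf (restrictBlocks P (range e)) 0) = blockOf P 0 := by
  have h0 : 0 ∈ blockOf P 0 := hP.mem_blockOf_self (mem_range.2 hn)
  rcases e.eq_zero_or_pos with rfl | he₀
  · have hempty : blockOf (restrictBlocks P (range 0)) 0 = ∅ :=
      subset_empty.1 (range_zero ▸ (hP.restrict_range (Nat.zero_le n)).blockOf_subset)
    rw [hempty, insert_empty]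
    ext z
    rw [mem_singleton]
    exact ⟨by rintro rfl; exact h0, fun hz => Nat.le_zero.1 (hmax z hz)⟩
  · rw [blockOf_restrictBlocks (mem_range.2 he₀)]
    ext z
    simp only [mem_insert, mem_inter, mem_range]
    refine ⟨by rintro (rfl | ⟨hz, -⟩) <;> assumption, fun hz => ?_⟩
    exact (hmax z hz).eq_or_lt.imp id fun h => ⟨hz, h⟩

lemma IsNCPartition.card_blockOf_restrictBlocks_range (hP : IsNCPartition (range n) P)
    (hn : 0 < n) (he : e ∈ blockOf P 0) (hmax : ∀ z ∈ blockOf P 0, z ≤ e) :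
    #(blockOf (restrictBlocks P (range e)) 0) + 1 = #(blockOf P 0) := by
  rw [← hP.insert_blockOf_restrictBlocks_range hn he hmax, card_insert_of_notMem]
  exact fun h => notMem_range_self
    ((hP.restrict_range (mem_range.1 (hP.blockOf_subset he)).le).blockOf_subset h)

lemma IsNCPartition.glue_restrictBlocks (hP : IsNCPartition (range n) P) (hn : 0 < n)
    (he : e ∈ blockOf P 0) (hmax : ∀ z ∈ blockOf P 0, z ≤ e) :
    glue e (restrictBlocks P (range e)) (restrictBlocks P (Ioo e n)) = P := by
  have hP₁ := hP.restrict_range (mem_range.1 (hP.blockOf_subset he)).le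
  ext C
  simp only [glue, mem_union, hP₁.mem_insertIntoBlock,
    hP.insert_blockOf_restrictBlocks_range hn he hmax, mem_restrictBlocks, or_assoc]
  constructor
  · rintro (rfl | ⟨⟨hne, D, hD, rfl⟩, h0C⟩ | ⟨hne, D, hD, rfl⟩)
    · exact hP.blockOf_mem (mem_range.2 hn)
    · obtain ⟨z, hz⟩ := hne
      rw [mem_inter, mem_range] at hz
      by_cases h0D : 0 ∈ D
      · exact absurd (mem_inter.2 ⟨h0D, mem_range.2 (by omega)⟩) h0C
      rcases hP.subset_range_or_subset_Ioo he hD h0D with h | h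
      · rwa [inter_eq_left.2 h]
      · have := mem_Ioo.1 (h hz.1); omega
    · obtain ⟨z, hz⟩ := hne
      rw [mem_inter, mem_Ioo] at hz
      by_cases h0D : 0 ∈ D
      · have := hmax z (hP.blockOf_eq hD h0D ▸ hz.1); omega
      rcases hP.subset_range_or_subset_Ioo he hD h0D with h | h
      · have := mem_range.1 (h hz.1); omega
      · rwa [inter_eq_left.2 h]
  · intro hC
    by_cases h0C : 0 ∈ C
    · exact Or.inl (hP.blockOf_eq hC h0C).symm
    · rcases hP.subset_range_or_subset_Ioo he hC h0C with h | h
      · exact Or.inr (Or.inl ⟨⟨hP.nonempty C hC, C, hC, inter_eq_left.2 h⟩, h0C⟩)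
      · exact Or.inr (Or.inr ⟨hP.nonempty C hC, C, hC, inter_eq_left.2 h⟩)

lemma prod_erase_blockOf_glue (a : ℕ → ℕ) (hP₁ : IsNCPartition (range e) P₁)
    (hQ : IsNCPartition (Ioo e n) Q) (he : e < n) :
    ∏ B ∈ (glue e P₁ Q).erase (blockOf (glue e P₁ Q) 0), a #B =
      (∏ B ∈ P₁.erase (blockOf P₁ 0), a #B) * ∏ B ∈ Q, a #B := by
  have hP₁e : ∀ B ∈ P₁, e ∉ B := fun B hB h => notMem_range_self (hP₁.subset B hB h)
  have hQe : ∀ B ∈ Q, e ∉ B := fun B hB h => by simpa using hQ.subset B hB h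
  rw [blockOf_glue hP₁ hQ he, glue, insertIntoBlock, insert_union, erase_insert, prod_union]
  · refine disjoint_left.2 fun B hB hBQ => ?_
    obtain ⟨z, hz⟩ := hQ.nonempty B hBQ
    have h₁ := mem_range.1 (hP₁.subset B (mem_of_mem_erase hB) hz)
    have h₂ := mem_Ioo.1 (hQ.subset B hBQ hz)
    omega
  · rw [mem_union]
    rintro (hB | hB)
    · exact hP₁e _ (mem_of_mem_erase hB) (mem_insert_self _ _)
    · exact hQe _ hB (mem_insert_self _ _)

/-- For `n = 0` the empty set `blockOf ∅ 0` plays the role of a block of `0` of size `0`. -/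
noncomputable def firstBlockWeight (a : ℕ → ℕ) (k n : ℕ) : ℕ :=
  ∑ P ∈ (ncPartitions (range n)).filter (fun P => #(blockOf P 0) = k),
    ∏ B ∈ P.erase (blockOf P 0), a #B

lemma IsNCPartition.sup_blockOf_zero (hP : IsNCPartition (range n) P) (hn : 0 < n) :
    (blockOf P 0).sup id ∈ blockOf P 0 ∧ ∀ z ∈ blockOf P 0, z ≤ (blockOf P 0).sup id := by
  obtain ⟨e, he, hsup⟩ := exists_mem_eq_sup _ ⟨0, hP.mem_blockOf_self (mem_range.2 hn)⟩ id
  exact ⟨hsup ▸ he, fun z hz => le_sup (f := id) hz⟩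

lemma firstBlockWeight_succ_succ (a : ℕ → ℕ) (k m : ℕ) :
    firstBlockWeight a (k + 1) (m + 1) =
      ∑ e ∈ range (m + 1), firstBlockWeight a k e * ncWeight a (Ioo e (m + 1)) := by
  simp only [firstBlockWeight, ncWeight, sum_mul_sum, ← sum_product', sum_sigma']
  symm
  refine sum_nbij' (fun x => glue x.1 x.2.1 x.2.2)
    (fun P => ⟨(blockOf P 0).sup id, restrictBlocks P (range ((blockOf P 0).sup id)),
      restrictBlocks P (Ioo ((blockOf P 0).sup id) (m + 1))⟩) ?_ ?_ ?_ ?_ ?_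
  · rintro ⟨e, P₁, Q⟩ hx
    simp only [mem_sigma, mem_product, mem_filter, mem_range, mem_ncPartitions] at hx ⊢
    obtain ⟨he, ⟨hP₁, hk⟩, hQ⟩ := hx
    refine ⟨isNCPartition_glue hP₁ hQ he, ?_⟩
    rw [blockOf_glue hP₁ hQ he, card_insert_of_notMem, hk]
    exact fun h => notMem_range_self (hP₁.blockOf_subset h)
  · intro P hP
    simp only [mem_filter, mem_ncPartitions] at hP
    obtain ⟨he, hmax⟩ := hP.1.sup_blockOf_zero m.succ_pos
    have he' := mem_range.1 (hP.1.blockOf_subset he)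
    have hcard := hP.1.card_blockOf_restrictBlocks_range m.succ_pos he hmax
    simp only [mem_sigma, mem_product, mem_filter, mem_range, mem_ncPartitions]
    exact ⟨he', ⟨hP.1.restrict_range he'.le, by omega⟩, hP.1.restrict_Ioo⟩
  · rintro ⟨e, P₁, Q⟩ hx
    simp only [mem_sigma, mem_product, mem_filter, mem_range, mem_ncPartitions] at hx
    obtain ⟨he, ⟨hP₁, -⟩, hQ⟩ := hx
    have hsup : (blockOf (glue e P₁ Q) 0).sup id = e := by
      rw [blockOf_glue hP₁ hQ he, sup_insert, id, max_eq_left]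
      exact Finset.sup_le fun z hz => (mem_range.1 (hP₁.blockOf_subset hz)).le
    simp only [hsup, restrictBlocks_glue_range hP₁ hQ, restrictBlocks_glue_Ioo hP₁ hQ]
  · intro P hP
    simp only [mem_filter, mem_ncPartitions] at hP
    have hn : 0 < m + 1 := m.succ_pos
    exact hP.1.glue_restrictBlocks hn (hP.1.sup_blockOf_zero hn).1 (hP.1.sup_blockOf_zero hn).2
  · rintro ⟨e, P₁, Q⟩ hx
    simp only [mem_sigma, mem_product, mem_filter, mem_range, mem_ncPartitions] at hx
    obtain ⟨he, ⟨hP₁, -⟩, hQ⟩ := hx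
    exact (prod_erase_blockOf_glue a hP₁ hQ he).symm

lemma firstBlockWeight_zero_left (a : ℕ → ℕ) (n : ℕ) :
    firstBlockWeight a 0 n = if n = 0 then 1 else 0 := by
  rcases n.eq_zero_or_pos with rfl | hn
  · simp [firstBlockWeight, ncPartitions_empty, filter_singleton]
  · rw [if_neg hn.ne', firstBlockWeight, sum_eq_zero]
    intro P hP
    simp only [mem_filter, mem_ncPartitions, card_eq_zero] at hP
    exact absurd (hP.2 ▸ hP.1.mem_blockOf_self (mem_range.2 hn)) (notMem_empty 0)

lemma firstBlockWeight_succ_zero (a : ℕ → ℕ) (k : ℕ) : firstBlockWeight a (k + 1) 0 = 0 := by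
  simp [firstBlockWeight, ncPartitions_empty]

lemma ncWeight_range_eq_sum (a : ℕ → ℕ) (ha : a 0 = 1) (n : ℕ) :
    ncWeight a (range n) = ∑ k ∈ range (n + 1), a k * firstBlockWeight a k n := by
  have hprod : ∀ P ∈ ncPartitions (range n),
      ∏ B ∈ P, a #B = a #(blockOf P 0) * ∏ B ∈ P.erase (blockOf P 0), a #B := by
    intro P hP
    rw [mem_ncPartitions] at hP
    rcases n.eq_zero_or_pos with rfl | hn
    · simp [(range_zero ▸ hP).eq_empty, ha]
    · exact (mul_prod_erase _ _ (hP.blockOf_mem (mem_range.2 hn))).symm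
  have hcard : ∀ P ∈ ncPartitions (range n), #(blockOf P 0) ∈ range (n + 1) := fun P hP =>
    mem_range.2 (Nat.lt_succ_of_le (card_range n ▸ card_le_card (mem_ncPartitions.1 hP).blockOf_subset))
  rw [ncWeight, sum_congr rfl hprod, ← sum_fiberwise_of_maps_to hcard]
  refine sum_congr rfl fun k _ => ?_
  rw [firstBlockWeight, mul_sum]
  exact sum_congr rfl fun P hP => by rw [(mem_filter.1 hP).2]

lemma ncWeight_Ioo (a : ℕ → ℕ) (e n : ℕ) :
    ncWeight a (Ioo e n) = ncWeight a (range (n - e - 1)) := by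
  have hIoo : Ioo e n = (range (n - e - 1)).image (· + (e + 1)) := by
    ext z
    simp only [mem_Ioo, mem_image, mem_range]
    exact ⟨fun h => ⟨z - (e + 1), by omega, by omega⟩, by rintro ⟨y, hy, rfl⟩; omega⟩
  rw [hIoo, ncWeight_image a fun x y h => Nat.add_lt_add_right h _]

end FirstBlock

open PowerSeries in
lemma coeff_X_mul_mk_ncTransform_pow (a : ℕ → ℕ) (k n : ℕ) :
    coeff n ((X * PowerSeries.mk (ncTransform a)) ^ k) = firstBlockWeight a k n := by
  induction k generalizing n with
  | zero => rw [pow_zero, coeff_one, firstBlockWeight_zero_left]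
  | succ k ih =>
    set B := PowerSeries.mk (ncTransform a)
    rw [show (X * B) ^ (k + 1) = X * ((X * B) ^ k * B) by ring]
    rcases n with _ | m
    · rw [coeff_zero_X_mul, firstBlockWeight_succ_zero]
    · rw [coeff_succ_X_mul, coeff_mul, Nat.sum_antidiagonal_eq_sum_range_succ_mk,
        firstBlockWeight_succ_succ]
      refine sum_congr rfl fun e _ => ?_
      rw [ih, coeff_mk, ncTransform_eq_ncWeight, ncWeight_Ioo]
      congr 3
      omega

/-- The generating function `B(x) = ∑ b_n xⁿ` of the noncrossing partition
transform `b` of `a` (with `a 0 = 1`) satisfies `B = ∑_{k≥0} a_k (x B)^k`, stated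
coefficientwise. -/
theorem ncTransform_functional_equation (a : ℕ → ℕ) (ha : a 0 = 1) :
    ∀ n : ℕ, PowerSeries.coeff (R := ℕ) n (PowerSeries.mk (ncTransform a)) =
      ∑ k ∈ Finset.range (n + 1), PowerSeries.coeff (R := ℕ) n
        (PowerSeries.C (R := ℕ) (a k) *
          (PowerSeries.X * PowerSeries.mk (ncTransform a)) ^ k) := by
  intro n
  rw [PowerSeries.coeff_mk, ncTransform_eq_ncWeight, ncWeight_range_eq_sum a ha]
  exact sum_congr rfl fun k _ => by
    rw [PowerSeries.coeff_C_mul, coeff_X_mul_mk_ncTransform_pow]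
end
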